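/- arXiv:1004.5011 — 3 statements merged into one kernel-verified Lean document; each statement's English description precedes it below -/
import Mathlib

section
/- In Kingman's n-coalescent, the number X_k of external branches whose internal node is at level k satisfies E(X_k) = 2k/(n-1) and Var(X_k) = 2k(n-k-1)(n-3)/((n-1)^2(n-2)), for 1 ≤ k ≤ n-1. -/
open MeasureTheory ProbabilityTheory

/-- Probability that one merging event turns the partition `p` (with `k` blocks) into `p'`:
two uniformly random distinct blocks of `p` are merged. -/
noncomputable def mergeProb (n k : ℕ) (p p' : Finset (Finset (Fin n))) : ℝ :=
  (Nat.card {q : Finset (Fin n) × Finset (Fin n) //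
      q.1 ∈ p ∧ q.2 ∈ p ∧ q.1 ≠ q.2 ∧
      p' = insert (q.1 ∪ q.2) ((p.erase q.1).erase q.2)} : ℝ) / ((k : ℝ) * ((k : ℝ) - 1))

/-- The partition chain of Kingman's `n`-coalescent: `P n` is a.s. the partition of
`{1, …, n}` into singletons, and `P (k-1)` arises from `P k` by merging two uniformly
random blocks, conditionally on the whole history. Partitions are modeled as finite sets
of blocks. -/
def IsKingmanPartition (n : ℕ) {Ω : Type*} [MeasurableSpace Ω] (μ : Measure Ω)
    (P : ℕ → Ω → Finset (Finset (Fin n))) : Prop :=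
  (∀ k p, MeasurableSet {ω | P k ω = p}) ∧
  (∀ᵐ ω ∂μ, P n ω = Finset.univ.image (fun i : Fin n => {i})) ∧
  ∀ k, 2 ≤ k → k ≤ n → ∀ p : ℕ → Finset (Finset (Fin n)), ∀ p' : Finset (Finset (Fin n)),
    (μ ({ω | ∀ j, k ≤ j → j ≤ n → P j ω = p j} ∩ {ω | P (k - 1) ω = p'})).toReal
      = (μ {ω | ∀ j, k ≤ j → j ≤ n → P j ω = p j}).toReal * mergeProb n k (p k) p'

/-- `rho n P i ω` is the level of the internal node of the external branch at leaf `i`: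
the largest `k ≥ 1` such that `{i}` is not a block of `π_k`. -/
noncomputable def rho (n : ℕ) {Ω : Type*} (P : ℕ → Ω → Finset (Finset (Fin n)))
    (i : Fin n) (ω : Ω) : ℕ :=
  sSup {k | 1 ≤ k ∧ k ≤ n ∧ {i} ∉ P k ω}

/-- `Xcount n P k ω = #{i : ρ(i) = k}`, the number of external branches whose internal
node is at level `k`. -/
noncomputable def Xcount (n : ℕ) {Ω : Type*} (P : ℕ → Ω → Finset (Finset (Fin n)))
    (k : ℕ) (ω : Ω) : ℕ :=
  (Finset.univ.filter (fun i : Fin n => rho n P i ω = k)).card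

/-- The coalescent times of Kingman's `n`-coalescent: `T n = 0` a.s. and the rescaled
increments `C(k,2) (T_{k-1} − T_k)`, `2 ≤ k ≤ n`, are independent exponential random
variables with mean `1`. -/
def IsKingmanTimes (n : ℕ) {Ω : Type*} [MeasurableSpace Ω] (μ : Measure Ω)
    (T : ℕ → Ω → ℝ) : Prop :=
  (∀ k, Measurable (T k)) ∧
  (∀ᵐ ω ∂μ, T n ω = 0) ∧
  iIndepFun
    (fun j : Fin (n - 1) => fun ω =>
      (((j : ℕ) + 2).choose 2 : ℝ) * (T ((j : ℕ) + 1) ω - T ((j : ℕ) + 2) ω)) μ ∧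
  ∀ j : Fin (n - 1),
    μ.map (fun ω => (((j : ℕ) + 2).choose 2 : ℝ) * (T ((j : ℕ) + 1) ω - T ((j : ℕ) + 2) ω))
      = ProbabilityTheory.expMeasure 1

namespace KA

variable {n : ℕ}

abbrev S (n : ℕ) := Finset (Finset (Fin n))

def mrg (q1 q2 : Finset (Fin n)) (p : S n) : S n :=
  insert (q1 ∪ q2) ((p.erase q1).erase q2)

def Part (n m : ℕ) (p : S n) : Prop :=
  (∀ b ∈ p, b.Nonempty) ∧ (∀ b ∈ p, ∀ c ∈ p, b ≠ c → Disjoint b c) ∧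
  (∀ i : Fin n, ∃ b ∈ p, i ∈ b) ∧ p.card = m

lemma mem_mrg {q1 q2 b : Finset (Fin n)} {p : S n} :
    b ∈ mrg q1 q2 p ↔ b = q1 ∪ q2 ∨ (b ∈ p ∧ b ≠ q1 ∧ b ≠ q2) := by
  simp only [mrg, Finset.mem_insert, Finset.mem_erase]
  tauto

section part
variable {m : ℕ} {p : S n} {q1 q2 : Finset (Fin n)}
  (hp : Part n m p) (h1 : q1 ∈ p) (h2 : q2 ∈ p) (hne : q1 ≠ q2)

include hp h1 h2 hne

lemma union_card : 2 ≤ (q1 ∪ q2).card := by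
  have hd : Disjoint q1 q2 := hp.2.1 q1 h1 q2 h2 hne
  rw [Finset.card_union_of_disjoint hd]
  have e1 := hp.1 q1 h1
  have e2 := hp.1 q2 h2
  rw [← Finset.card_pos] at e1 e2
  omega

lemma union_ne_block {b : Finset (Fin n)} (hb : b ∈ p) : q1 ∪ q2 ≠ b := by
  intro h
  have hq1b : q1 ⊆ b := h ▸ Finset.subset_union_left
  have hb1 : b = q1 := by
    by_contra hne'
    have := hp.2.1 b hb q1 h1 hne'
    have := (this.symm.eq_bot_of_le hq1b)
    exact (hp.1 q1 h1).ne_empty this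
  have hq2b : q2 ⊆ b := h ▸ Finset.subset_union_right
  have hb2 : b = q2 := by
    by_contra hne'
    have := hp.2.1 b hb q2 h2 hne'
    have := (this.symm.eq_bot_of_le hq2b)
    exact (hp.1 q2 h2).ne_empty this
  exact hne (hb1 ▸ hb2 ▸ rfl)

lemma sing_mem_mrg {i : Fin n} :
    {i} ∈ mrg q1 q2 p ↔ {i} ∈ p ∧ {i} ≠ q1 ∧ {i} ≠ q2 := by
  rw [mem_mrg]
  constructor
  · rintro (h | h)
    · exfalso
      have := union_card hp h1 h2 hne
      rw [← h] at this; simp at this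
    · exact h
  · exact Or.inr

lemma card_mrg : (mrg q1 q2 p).card = m - 1 := by
  have h2' : q2 ∈ p.erase q1 := Finset.mem_erase.2 ⟨Ne.symm hne, h2⟩
  have hnotin : q1 ∪ q2 ∉ (p.erase q1).erase q2 := by
    intro h
    exact union_ne_block hp h1 h2 hne (Finset.mem_of_mem_erase (Finset.mem_of_mem_erase h)) rfl
  have hcm := hp.2.2.2
  have hm2 : 2 ≤ m := by
    have := Finset.one_lt_card.2 ⟨q1, h1, q2, h2, hne⟩
    omega
  rw [mrg, Finset.card_insert_of_notMem hnotin,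
    Finset.card_erase_of_mem h2', Finset.card_erase_of_mem h1, hp.2.2.2]
  omega

lemma part_mrg : Part n (m - 1) (mrg q1 q2 p) := by
  refine ⟨?_, ?_, ?_, card_mrg hp h1 h2 hne⟩
  · intro b hb
    rcases mem_mrg.1 hb with h | h
    · exact (hp.1 q1 h1).mono (h ▸ Finset.subset_union_left)
    · exact hp.1 b h.1
  · intro b hb c hc hbc
    rcases mem_mrg.1 hb with h | h <;> rcases mem_mrg.1 hc with h' | h'
    · exact absurd (h.trans h'.symm) hbc
    · subst h
      exact Finset.disjoint_union_left.2
        ⟨hp.2.1 q1 h1 c h'.1 (Ne.symm h'.2.1), hp.2.1 q2 h2 c h'.1 (Ne.symm h'.2.2)⟩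
    · subst h'
      exact (Finset.disjoint_union_left.2
        ⟨hp.2.1 q1 h1 b h.1 (Ne.symm h.2.1), hp.2.1 q2 h2 b h.1 (Ne.symm h.2.2)⟩).symm
    · exact hp.2.1 b h.1 c h'.1 hbc
  · intro i
    obtain ⟨b, hb, hib⟩ := hp.2.2.1 i
    by_cases hb1 : b = q1
    · exact ⟨q1 ∪ q2, mem_mrg.2 (Or.inl rfl), Finset.mem_union_left _ (hb1 ▸ hib)⟩
    by_cases hb2 : b = q2
    · exact ⟨q1 ∪ q2, mem_mrg.2 (Or.inl rfl), Finset.mem_union_right _ (hb2 ▸ hib)⟩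
    · exact ⟨b, mem_mrg.2 (Or.inr ⟨hb, hb1, hb2⟩), hib⟩

end part

/-- `mergeProb` as a filtered-card ratio. -/
lemma mergeProb_eq (m : ℕ) (p p' : S n) :
    mergeProb n m p p'
      = ((p.offDiag.filter (fun q => p' = mrg q.1 q.2 p)).card : ℝ)
        / ((m : ℝ) * ((m : ℝ) - 1)) := by
  unfold mergeProb
  congr 2
  rw [Nat.card_eq_fintype_card, Fintype.card_subtype]
  congr 1
  ext q
  rw [Finset.mem_filter (s := Finset.offDiag p)]
  simp only [Finset.mem_filter, Finset.mem_univ, true_and, Finset.mem_offDiag, mrg]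
  tauto

lemma sum_mergeProb_filter (C : S n → Prop) [DecidablePred C] (m : ℕ) (p : S n) :
    ∑ p' : S n, (if C p' then mergeProb n m p p' else 0)
      = ((p.offDiag.filter (fun q => C (mrg q.1 q.2 p))).card : ℝ)
        / ((m : ℝ) * ((m : ℝ) - 1)) := by
  have key : ∑ p' : S n, (if C p' then
      ((p.offDiag.filter (fun q => p' = mrg q.1 q.2 p)).card : ℝ) else 0)
      = ((p.offDiag.filter (fun q => C (mrg q.1 q.2 p))).card : ℝ) := by
    calc ∑ p' : S n, (if C p' then
          ((p.offDiag.filter (fun q => p' = mrg q.1 q.2 p)).card : ℝ) else 0)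
        = ∑ p' : S n, ∑ q ∈ p.offDiag,
            (if C p' ∧ p' = mrg q.1 q.2 p then (1:ℝ) else 0) := by
          refine Finset.sum_congr rfl fun p' _ => ?_
          by_cases h : C p'
          · simp only [h, if_true, true_and, Finset.card_filter]
            push_cast
            rfl
          · simp [h]
      _ = ∑ q ∈ p.offDiag, ∑ p' : S n,
            (if C p' ∧ p' = mrg q.1 q.2 p then (1:ℝ) else 0) := Finset.sum_comm
      _ = ∑ q ∈ p.offDiag, (if C (mrg q.1 q.2 p) then (1:ℝ) else 0) := by
          refine Finset.sum_congr rfl fun q _ => ?_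
          rw [show (∑ p' : S n, (if C p' ∧ p' = mrg q.1 q.2 p then (1:ℝ) else 0))
              = ∑ p' : S n, (if p' = mrg q.1 q.2 p then
                  (if C p' then (1:ℝ) else 0) else 0) from
            Finset.sum_congr rfl fun p' _ => by
              by_cases h1 : C p' <;> by_cases h2 : p' = mrg q.1 q.2 p <;> simp [h1, h2]]
          rw [Finset.sum_ite_eq' Finset.univ]
          simp
      _ = ((p.offDiag.filter fun q => C (mrg q.1 q.2 p)).card : ℝ) := by
          rw [Finset.card_filter]
          push_cast
          rfl
  calc ∑ p' : S n, (if C p' then mergeProb n m p p' else 0)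
      = (∑ p' : S n, (if C p' then
          ((p.offDiag.filter (fun q => p' = mrg q.1 q.2 p)).card : ℝ) else 0))
        / ((m : ℝ) * ((m : ℝ) - 1)) := by
        rw [Finset.sum_div]
        refine Finset.sum_congr rfl fun p' _ => ?_
        rw [mergeProb_eq]
        split_ifs
        · rfl
        · rw [zero_div]
      _ = _ := by rw [key]

section counts
variable {m : ℕ} {p : S n} {i i' : Fin n}

lemma count_all (hp : Part n m p) :
    p.offDiag.card = m * m - m := by
  rw [Finset.offDiag_card, hp.2.2.2]

lemma filter_sing_mem (hp : Part n m p) (hi : {i} ∈ p) :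
    p.offDiag.filter (fun q => ({i} : Finset (Fin n)) ∈ mrg q.1 q.2 p)
      = (p.erase {i}).offDiag := by
  ext q
  simp only [Finset.mem_filter, Finset.mem_offDiag, Finset.mem_erase]
  constructor
  · rintro ⟨⟨hq1, hq2, hqne⟩, hmem⟩
    obtain ⟨-, h1, h2⟩ := (sing_mem_mrg hp hq1 hq2 hqne).1 hmem
    exact ⟨⟨Ne.symm h1, hq1⟩, ⟨Ne.symm h2, hq2⟩, hqne⟩
  · rintro ⟨⟨h1, hq1⟩, ⟨h2, hq2⟩, hqne⟩
    exact ⟨⟨hq1, hq2, hqne⟩, (sing_mem_mrg hp hq1 hq2 hqne).2 ⟨hi, Ne.symm h1, Ne.symm h2⟩⟩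

lemma count_sing_mem (hp : Part n m p) (hi : {i} ∈ p) :
    (p.offDiag.filter (fun q => ({i} : Finset (Fin n)) ∈ mrg q.1 q.2 p)).card
      = (m - 1) * (m - 1) - (m - 1) := by
  rw [filter_sing_mem hp hi, Finset.offDiag_card, Finset.card_erase_of_mem hi, hp.2.2.2]

lemma count_sing_not_mem (hp : Part n m p) (hi : {i} ∉ p) :
    (p.offDiag.filter (fun q => ({i} : Finset (Fin n)) ∈ mrg q.1 q.2 p)).card = 0 := by
  rw [Finset.card_eq_zero, Finset.filter_eq_empty_iff]
  rintro q hq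
  rw [Finset.mem_offDiag] at hq
  rw [sing_mem_mrg hp hq.1 hq.2.1 hq.2.2]
  tauto

lemma count_sing_not (hp : Part n m p) (hi : {i} ∈ p) :
    (p.offDiag.filter (fun q => ({i} : Finset (Fin n)) ∉ mrg q.1 q.2 p)).card
      = 2 * (m - 1) := by
  have hm1 : 1 ≤ m := by
    have h1 : 1 ≤ p.card := Finset.card_pos.2 ⟨_, hi⟩
    rw [hp.2.2.2] at h1
    exact h1
  have key := Finset.card_filter_add_card_filter_not
    (p := fun q => ({i} : Finset (Fin n)) ∈ mrg q.1 q.2 p) (s := p.offDiag)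
  rw [count_sing_mem hp hi, count_all hp] at key
  obtain ⟨t, rfl⟩ : ∃ t, m = t + 1 := ⟨m - 1, by omega⟩
  simp only [Nat.add_sub_cancel] at key ⊢
  have h2 : (t+1)*(t+1) = t*t+2*t+1 := by ring
  rw [h2] at key
  have hle : t ≤ t * t := by
    rcases Nat.eq_zero_or_pos t with h | h
    · simp [h]
    · exact Nat.le_mul_of_pos_left t h
  generalize t * t = u at key hle
  omega

end counts

section counts2
variable {m : ℕ} {p : S n} {i i' : Fin n}

lemma count_pair_mem (hp : Part n m p) (hi : {i} ∈ p) (hi' : {i'} ∈ p)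
    (hne : ({i} : Finset (Fin n)) ≠ {i'}) :
    (p.offDiag.filter (fun q => ({i} : Finset (Fin n)) ∈ mrg q.1 q.2 p
        ∧ ({i'} : Finset (Fin n)) ∈ mrg q.1 q.2 p)).card
      = (m - 2) * (m - 2) - (m - 2) := by
  have hset : p.offDiag.filter (fun q => ({i} : Finset (Fin n)) ∈ mrg q.1 q.2 p
        ∧ ({i'} : Finset (Fin n)) ∈ mrg q.1 q.2 p)
      = ((p.erase {i}).erase {i'}).offDiag := by
    ext q
    simp only [Finset.mem_filter, Finset.mem_offDiag, Finset.mem_erase]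
    constructor
    · rintro ⟨⟨hq1, hq2, hqne⟩, hmem, hmem'⟩
      obtain ⟨-, h1, h2⟩ := (sing_mem_mrg hp hq1 hq2 hqne).1 hmem
      obtain ⟨-, h1', h2'⟩ := (sing_mem_mrg hp hq1 hq2 hqne).1 hmem'
      exact ⟨⟨Ne.symm h1', Ne.symm h1, hq1⟩, ⟨Ne.symm h2', Ne.symm h2, hq2⟩, hqne⟩
    · rintro ⟨⟨h1', h1, hq1⟩, ⟨h2', h2, hq2⟩, hqne⟩
      exact ⟨⟨hq1, hq2, hqne⟩,
        (sing_mem_mrg hp hq1 hq2 hqne).2 ⟨hi, Ne.symm h1, Ne.symm h2⟩,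
        (sing_mem_mrg hp hq1 hq2 hqne).2 ⟨hi', Ne.symm h1', Ne.symm h2'⟩⟩
  have hi'e : ({i'} : Finset (Fin n)) ∈ p.erase {i} := Finset.mem_erase.2 ⟨Ne.symm hne, hi'⟩
  rw [hset, Finset.offDiag_card, Finset.card_erase_of_mem hi'e,
    Finset.card_erase_of_mem hi, hp.2.2.2, Nat.sub_sub]

lemma count_pair_mem0 (hp : Part n m p) (h : ¬(({i} : Finset (Fin n)) ∈ p ∧ ({i'} : Finset (Fin n)) ∈ p)) :
    (p.offDiag.filter (fun q => ({i} : Finset (Fin n)) ∈ mrg q.1 q.2 p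
        ∧ ({i'} : Finset (Fin n)) ∈ mrg q.1 q.2 p)).card = 0 := by
  rw [Finset.card_eq_zero, Finset.filter_eq_empty_iff]
  rintro q hq
  rw [Finset.mem_offDiag] at hq
  rw [sing_mem_mrg hp hq.1 hq.2.1 hq.2.2, sing_mem_mrg hp hq.1 hq.2.1 hq.2.2]
  tauto

lemma count_pair_not (hp : Part n m p) (hi : {i} ∈ p) (hi' : {i'} ∈ p)
    (hne : ({i} : Finset (Fin n)) ≠ {i'}) :
    (p.offDiag.filter (fun q => ({i} : Finset (Fin n)) ∉ mrg q.1 q.2 p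
        ∧ ({i'} : Finset (Fin n)) ∉ mrg q.1 q.2 p)).card = 2 := by
  have hset : p.offDiag.filter (fun q => ({i} : Finset (Fin n)) ∉ mrg q.1 q.2 p
        ∧ ({i'} : Finset (Fin n)) ∉ mrg q.1 q.2 p)
      = {(({i} : Finset (Fin n)), ({i'} : Finset (Fin n))), ({i'}, {i})} := by
    ext q
    simp only [Finset.mem_filter, Finset.mem_offDiag, Finset.mem_insert,
      Finset.mem_singleton]
    constructor
    · rintro ⟨⟨hq1, hq2, hqne⟩, hm1, hm2⟩
      rw [sing_mem_mrg hp hq1 hq2 hqne] at hm1 hm2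
      push_neg at hm1 hm2
      have e1 : ({i} : Finset (Fin n)) = q.1 ∨ ({i} : Finset (Fin n)) = q.2 := by tauto
      have e2 : ({i'} : Finset (Fin n)) = q.1 ∨ ({i'} : Finset (Fin n)) = q.2 := by tauto
      rcases e1 with e1 | e1 <;> rcases e2 with e2 | e2
      · exact absurd (e1.trans e2.symm) hne
      · left; rw [Prod.ext_iff]; exact ⟨e1.symm, e2.symm⟩
      · right; rw [Prod.ext_iff]; exact ⟨e2.symm, e1.symm⟩
      · exact absurd (e1.trans e2.symm) hne
    · rintro (rfl | rfl)
      · refine ⟨⟨hi, hi', hne⟩, ?_, ?_⟩ <;>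
          · rw [sing_mem_mrg hp hi hi' hne]; simp
      · refine ⟨⟨hi', hi, Ne.symm hne⟩, ?_, ?_⟩ <;>
          · rw [sing_mem_mrg hp hi' hi (Ne.symm hne)]; simp
  rw [hset]
  rw [Finset.card_insert_of_notMem (by simp [Prod.ext_iff, hne]), Finset.card_singleton]

end counts2

section values
variable {m : ℕ} {p : S n} {i i' : Fin n}

lemma cast1 (hm : 2 ≤ m) : ((m * m - m : ℕ) : ℝ) = (m : ℝ) * ((m : ℝ) - 1) := by
  have h : m ≤ m * m := Nat.le_mul_of_pos_left m (by omega)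
  push_cast [Nat.cast_sub h]
  ring

lemma cast2 (hm : 2 ≤ m) :
    (((m - 1) * (m - 1) - (m - 1) : ℕ) : ℝ) = ((m : ℝ) - 1) * ((m : ℝ) - 2) := by
  obtain ⟨t, rfl⟩ : ∃ t, m = t + 2 := ⟨m - 2, by omega⟩
  have h : (t + 1) * (t + 1) - (t + 1) = (t + 1) * t := by
    have : (t + 1) * (t + 1) = (t + 1) * t + (t + 1) := by ring
    omega
  have e1 : t + 2 - 1 = t + 1 := by omega
  rw [e1, h]
  push_cast
  ring

lemma cast3 (hm : 2 ≤ m) :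
    (((m - 2) * (m - 2) - (m - 2) : ℕ) : ℝ) = ((m : ℝ) - 2) * ((m : ℝ) - 3) := by
  obtain ⟨t, rfl⟩ : ∃ t, m = t + 2 := ⟨m - 2, by omega⟩
  have e1 : t + 2 - 2 = t := by omega
  rw [e1]
  rcases Nat.eq_zero_or_pos t with rfl | ht
  · norm_num
  · obtain ⟨u, rfl⟩ : ∃ u, t = u + 1 := ⟨t - 1, by omega⟩
    have h : (u + 1) * (u + 1) - (u + 1) = (u + 1) * u := by
      have : (u + 1) * (u + 1) = (u + 1) * u + (u + 1) := by ring
      omega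
    rw [h]
    push_cast
    ring

lemma mpos (hm : 2 ≤ m) : (m : ℝ) * ((m : ℝ) - 1) ≠ 0 := by
  have h1 : (2 : ℝ) ≤ (m : ℝ) := by exact_mod_cast hm
  have : (0:ℝ) < (m:ℝ) * ((m:ℝ) - 1) := by nlinarith
  linarith

lemma V1 (hm : 2 ≤ m) (hp : Part n m p) :
    ∑ p' : S n, mergeProb n m p p' = 1 := by
  have := sum_mergeProb_filter (n := n) (fun _ => True) m p
  simp only [if_true] at this
  rw [this]
  simp only [Finset.filter_true]
  rw [count_all hp, cast1 hm]
  exact div_self (mpos hm)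

lemma Vmem (hm : 2 ≤ m) (hp : Part n m p) (hi : {i} ∈ p) :
    ∑ p' : S n, (if ({i} : Finset (Fin n)) ∈ p' then mergeProb n m p p' else 0)
      = ((m : ℝ) - 2) / m := by
  rw [sum_mergeProb_filter, count_sing_mem hp hi, cast2 hm]
  have h1 : (m : ℝ) ≠ 0 := by positivity
  have h2 : (m : ℝ) - 1 ≠ 0 := by
    have : (2:ℝ) ≤ (m:ℝ) := by exact_mod_cast hm
    linarith
  field_simp

lemma Vmem0 (hp : Part n m p) (hi : {i} ∉ p) :
    ∑ p' : S n, (if ({i} : Finset (Fin n)) ∈ p' then mergeProb n m p p' else 0) = 0 := by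
  rw [sum_mergeProb_filter, count_sing_not_mem hp hi]
  simp

lemma Vnot (hm : 2 ≤ m) (hp : Part n m p) (hi : {i} ∈ p) :
    ∑ p' : S n, (if ({i} : Finset (Fin n)) ∉ p' then mergeProb n m p p' else 0)
      = 2 / m := by
  rw [sum_mergeProb_filter, count_sing_not hp hi]
  have h1 : (m : ℝ) ≠ 0 := by positivity
  have h2 : (m : ℝ) - 1 ≠ 0 := by
    have : (2:ℝ) ≤ (m:ℝ) := by exact_mod_cast hm
    linarith
  have hc : ((2 * (m - 1) : ℕ) : ℝ) = 2 * ((m:ℝ) - 1) := by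
    push_cast [Nat.cast_sub (by omega : 1 ≤ m)]
    ring
  rw [hc]
  field_simp

lemma Vpair (hm : 2 ≤ m) (hp : Part n m p) (hi : {i} ∈ p) (hi' : {i'} ∈ p)
    (hne : ({i} : Finset (Fin n)) ≠ {i'}) :
    ∑ p' : S n, (if ({i} : Finset (Fin n)) ∈ p' ∧ ({i'} : Finset (Fin n)) ∈ p'
        then mergeProb n m p p' else 0)
      = ((m : ℝ) - 2) * ((m : ℝ) - 3) / ((m : ℝ) * ((m : ℝ) - 1)) := by
  rw [sum_mergeProb_filter, count_pair_mem hp hi hi' hne, cast3 hm]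

lemma Vpair0 (hp : Part n m p)
    (h : ¬(({i} : Finset (Fin n)) ∈ p ∧ ({i'} : Finset (Fin n)) ∈ p)) :
    ∑ p' : S n, (if ({i} : Finset (Fin n)) ∈ p' ∧ ({i'} : Finset (Fin n)) ∈ p'
        then mergeProb n m p p' else 0) = 0 := by
  rw [sum_mergeProb_filter, count_pair_mem0 hp h]
  simp

lemma Vnotpair (hp : Part n m p) (hi : {i} ∈ p) (hi' : {i'} ∈ p)
    (hne : ({i} : Finset (Fin n)) ≠ {i'}) :
    ∑ p' : S n, (if ({i} : Finset (Fin n)) ∉ p' ∧ ({i'} : Finset (Fin n)) ∉ p'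
        then mergeProb n m p p' else 0)
      = 2 / ((m : ℝ) * ((m : ℝ) - 1)) := by
  rw [sum_mergeProb_filter, count_pair_not hp hi hi' hne]
  norm_num

end values

lemma nfacts {n : ℕ} (hn : 3 ≤ n) : (n:ℝ) ≠ 0 ∧ (n:ℝ) - 1 ≠ 0 ∧ (n:ℝ) - 2 ≠ 0 := by
  have h3 : (3:ℝ) ≤ (n:ℝ) := by exact_mod_cast hn
  refine ⟨by linarith, by linarith, by linarith⟩

lemma toReal_zero {Ω : Type*} [MeasurableSpace Ω] (μ : Measure Ω) [IsFiniteMeasure μ]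
    {s : Set Ω} (h : (μ s).toReal = 0) : μ s = 0 := by
  rcases (ENNReal.toReal_eq_zero_iff _).1 h with h' | h'
  · exact h'
  · exact absurd h' (measure_ne_top μ _)

/-! ## Measure layer -/

def sing (n : ℕ) : S n := Finset.univ.image (fun i : Fin n => {i})

section meas
variable {Ω : Type*} [MeasurableSpace Ω] (μ : Measure Ω) [IsProbabilityMeasure μ]
  (P : ℕ → Ω → S n)

/-- Cylinder event: the trajectory agrees with `g` on levels `≥ m`. -/
def Cyl (m : ℕ) (g : Fin (n+1) → S n) : Set Ω :=
  {ω | ∀ j : Fin (n+1), m ≤ (j : ℕ) → P (j : ℕ) ω = g j}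

variable (hP : IsKingmanPartition n μ P)
include hP

lemma measVec (Φ : (Fin (n+1) → S n) → Prop) :
    MeasurableSet {ω | Φ (fun j : Fin (n+1) => P (j : ℕ) ω)} := by
  classical
  have : {ω | Φ (fun j : Fin (n+1) => P (j : ℕ) ω)}
      = ⋃ v ∈ Finset.univ.filter Φ, ⋂ j : Fin (n+1), {ω | P (j : ℕ) ω = v j} := by
    ext ω
    simp only [Set.mem_setOf_eq, Set.mem_iUnion, Finset.mem_filter, Finset.mem_univ,
      true_and, Set.mem_iInter]
    constructor
    · intro h
      exact ⟨_, h, fun j => rfl⟩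
    · rintro ⟨v, hv, hagree⟩
      have : (fun j : Fin (n+1) => P (j : ℕ) ω) = v := funext hagree
      rwa [this]
  rw [this]
  exact MeasurableSet.biUnion (Set.to_countable _)
    (fun v _ => MeasurableSet.iInter (fun j => hP.1 _ _))

lemma measCyl (m : ℕ) (g : Fin (n+1) → S n) : MeasurableSet (Cyl P m g) := by
  have : Cyl P m g = ⋂ j : Fin (n+1), {ω | m ≤ (j : ℕ) → P (j : ℕ) ω = g j} := by
    ext ω; simp [Cyl]
  rw [this]
  refine MeasurableSet.iInter (fun j => ?_)
  by_cases h : m ≤ (j : ℕ)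
  · simp only [h, forall_true_left]
    exact hP.1 _ _
  · have : {ω : Ω | m ≤ (j : ℕ) → P (j : ℕ) ω = g j} = Set.univ := by
      ext ω; simp [h]
    rw [this]; exact MeasurableSet.univ

lemma measQ (j : ℕ) (Q : S n → Prop) [DecidablePred Q] :
    MeasurableSet {ω | Q (P j ω)} := by
  have : {ω | Q (P j ω)} = ⋃ p ∈ Finset.univ.filter Q, {ω | P j ω = p} := by
    ext ω
    simp only [Set.mem_setOf_eq, Set.mem_iUnion, Finset.mem_filter, Finset.mem_univ, true_and]
    exact ⟨fun h => ⟨_, h, rfl⟩, fun ⟨p, hp, he⟩ => he ▸ hp⟩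
  rw [this]
  exact MeasurableSet.biUnion (Set.to_countable _) (fun p _ => hP.1 _ _)

/-- translation of the hypothesis event into a cylinder -/
def pfun (g : Fin (n+1) → S n) : ℕ → S n :=
  fun j => if h : j < n + 1 then g ⟨j, h⟩ else ∅

lemma hypSet_eq (m : ℕ) (g : Fin (n+1) → S n) :
    {ω | ∀ j, m ≤ j → j ≤ n → P j ω = pfun g j} = Cyl P m g := by
  ext ω
  simp only [Set.mem_setOf_eq, Cyl]
  constructor
  · intro h j hj
    have hjn : (j : ℕ) ≤ n := by omega
    have := h (j : ℕ) hj hjn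
    rwa [pfun, dif_pos j.isLt, Fin.eta] at this
  · intro h j hmj hjn
    have := h ⟨j, by omega⟩ hmj
    rwa [pfun, dif_pos (by omega : j < n + 1)]

lemma cyl_step' (m : ℕ) (hm2 : 2 ≤ m) (hmn : m ≤ n) (g : Fin (n+1) → S n)
    (p' : S n) :
    (μ (Cyl P m g ∩ {ω | P (m-1) ω = p'})).toReal
      = (μ (Cyl P m g)).toReal * mergeProb n m (g ⟨m, by omega⟩) p' := by
  have h := hP.2.2 m hm2 hmn (pfun g) p'
  rw [hypSet_eq μ P hP m g] at h
  rwa [show pfun g m = g ⟨m, by omega⟩ from dif_pos (by omega)] at h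

lemma cyl_mono (m1 m2 : ℕ) (h : m1 ≤ m2) (g : Fin (n+1) → S n) :
    Cyl P m1 g ⊆ Cyl P m2 g :=
  fun ω hω j hj => hω j (le_trans h hj)

lemma cyl_succ (m : ℕ) (hm1 : 1 ≤ m) (hmn : m ≤ n) (g : Fin (n+1) → S n) :
    Cyl P (m-1) g = Cyl P m g ∩ {ω | P (m-1) ω = g ⟨m-1, by omega⟩} := by
  ext ω
  simp only [Cyl, Set.mem_setOf_eq, Set.mem_inter_iff]
  constructor
  · intro h
    exact ⟨fun j hj => h j (by omega), h ⟨m-1, by omega⟩ (by simp)⟩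
  · rintro ⟨h1, h2⟩ j hj
    rcases eq_or_lt_of_le hj with he | hl
    · have : j = ⟨m - 1, by omega⟩ := Fin.ext he.symm
      rw [this]
      exact h2
    · exact h1 j (by omega)

lemma Pn_ae : μ {ω | P n ω = sing n} = 1 := by
  rw [← prob_compl_eq_zero_iff (hP.1 n (sing n))]
  have h := hP.2.1
  rw [MeasureTheory.ae_iff] at h
  convert h using 2
  rfl

lemma cyl_top (g : Fin (n+1) → S n) :
    (μ (Cyl P n g)).toReal
      = if g ⟨n, by omega⟩ = sing n then 1 else 0 := by
  have hset : Cyl P n g = {ω | P n ω = g ⟨n, by omega⟩} := by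
    ext ω
    simp only [Cyl, Set.mem_setOf_eq]
    constructor
    · intro h
      exact h ⟨n, by omega⟩ (by simp)
    · intro h j hj
      have hjn : (j : ℕ) = n := by have := j.isLt; omega
      have : j = ⟨n, by omega⟩ := Fin.ext hjn
      rw [this, hjn] at *
      exact h
  rw [hset]
  split_ifs with hg
  · rw [hg, Pn_ae μ P hP]
    simp
  · have hsub : {ω | P n ω = g ⟨n, by omega⟩} ⊆ {ω | ¬ P n ω = sing n} := by
      intro ω hω
      simp only [Set.mem_setOf_eq] at *
      rw [hω]
      exact hg
    have h0 : μ {ω | ¬ P n ω = sing n} = 0 := by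
      have h := hP.2.1
      rw [MeasureTheory.ae_iff] at h
      convert h using 2
      rfl
    rw [measure_mono_null hsub h0]
    simp

/-- index finset for level-`m` cylinders -/
def T (n m : ℕ) : Finset (Fin (n+1) → S n) :=
  Finset.univ.filter (fun g => ∀ j : Fin (n+1), (j : ℕ) < m → g j = ∅)

lemma partition_sum (m : ℕ) {B : Set Ω} (hB : MeasurableSet B) :
    (μ B).toReal = ∑ g ∈ T n m, (μ (Cyl P m g ∩ B)).toReal := by
  have hdisj : ((T n m : Finset (Fin (n+1) → S n)) : Set (Fin (n+1) → S n)).PairwiseDisjoint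
      (fun g => Cyl P m g ∩ B) := by
    intro g hg g' hg' hne
    simp only [Finset.coe_filter, T, Set.mem_setOf_eq, Finset.mem_univ, true_and] at hg hg'
    rw [Function.onFun, Set.disjoint_left]
    rintro ω ⟨hω, -⟩ ⟨hω', -⟩
    apply hne
    funext j
    by_cases h : m ≤ (j : ℕ)
    · rw [← hω j h, ← hω' j h]
    · rw [hg j (by omega), hg' j (by omega)]
  have hcover : ⋃ g ∈ T n m, (Cyl P m g ∩ B) = B := by
    apply Set.Subset.antisymm
    · intro ω hω
      simp only [Set.mem_iUnion] at hω
      obtain ⟨g, -, -, h⟩ := hω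
      exact h
    · intro ω hω
      simp only [Set.mem_iUnion]
      refine ⟨fun j => if m ≤ (j : ℕ) then P (j : ℕ) ω else ∅, ?_, ?_, hω⟩
      · simp only [T, Finset.mem_filter, Finset.mem_univ, true_and]
        intro j hj
        rw [if_neg (by omega)]
      · intro j hj
        dsimp only
        rw [if_pos hj]
  conv_lhs => rw [← hcover]
  rw [measure_biUnion_finset hdisj (fun g _ => (measCyl μ P hP m g).inter hB)]
  exact ENNReal.toReal_sum (fun g _ => measure_ne_top μ _)

lemma group_sum (m : ℕ) (hmn : m ≤ n) (f : S n → ℝ) :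
    ∑ g ∈ T n m, f (g ⟨m, by omega⟩) * (μ (Cyl P m g)).toReal
      = ∑ p : S n, f p * (μ {ω | P m ω = p}).toReal := by
  have hstep : ∀ p : S n, (μ {ω | P m ω = p}).toReal
      = ∑ g ∈ T n m, (if g ⟨m, by omega⟩ = p then (μ (Cyl P m g)).toReal else 0) := by
    intro p
    rw [partition_sum μ P hP m (hP.1 m p)]
    refine Finset.sum_congr rfl (fun g _ => ?_)
    by_cases h : g ⟨m, by omega⟩ = p
    · rw [if_pos h]
      have hset : Cyl P m g ∩ {ω | P m ω = p} = Cyl P m g := by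
        apply Set.Subset.antisymm Set.inter_subset_left
        intro ω hω
        refine ⟨hω, ?_⟩
        simp only [Set.mem_setOf_eq]
        rw [← h]
        exact hω ⟨m, by omega⟩ (by simp)
      rw [hset]
    · rw [if_neg h]
      have : Cyl P m g ∩ {ω | P m ω = p} = ∅ := by
        rw [Set.eq_empty_iff_forall_notMem]
        rintro ω ⟨hω, hω2⟩
        exact h ((hω ⟨m, by omega⟩ (by simp)).symm.trans hω2)
      rw [this]
      simp
  calc ∑ g ∈ T n m, f (g ⟨m, by omega⟩) * (μ (Cyl P m g)).toReal
      = ∑ g ∈ T n m, ∑ p : S n,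
          (if g ⟨m, by omega⟩ = p then f p * (μ (Cyl P m g)).toReal else 0) := by
        refine Finset.sum_congr rfl (fun g _ => ?_)
        rw [Finset.sum_ite_eq Finset.univ]
        simp
      _ = ∑ p : S n, ∑ g ∈ T n m,
          (if g ⟨m, by omega⟩ = p then f p * (μ (Cyl P m g)).toReal else 0) :=
        Finset.sum_comm
      _ = ∑ p : S n, f p * (μ {ω | P m ω = p}).toReal := by
        refine Finset.sum_congr rfl (fun p _ => ?_)
        rw [hstep p, Finset.mul_sum]
        refine Finset.sum_congr rfl (fun g _ => ?_)
        split_ifs <;> simp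

end meas

section TL
variable {Ω : Type*} [MeasurableSpace Ω] (μ : Measure Ω) [IsProbabilityMeasure μ]
  (P : ℕ → Ω → S n) (hP : IsKingmanPartition n μ P)
include hP

lemma TL (m : ℕ) (hm2 : 2 ≤ m) (hmn : m ≤ n) (Q' Q : S n → Prop)
    [DecidablePred Q'] [DecidablePred Q] :
    (μ {ω | Q' (P m ω) ∧ Q (P (m-1) ω)}).toReal
      = ∑ p : S n, (if Q' p then (μ {ω | P m ω = p}).toReal
          * (∑ p' : S n, if Q p' then mergeProb n m p p' else 0) else 0) := by
  have hB : MeasurableSet {ω | Q' (P m ω) ∧ Q (P (m-1) ω)} := by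
    have : {ω | Q' (P m ω) ∧ Q (P (m-1) ω)}
        = {ω | Q' (P m ω)} ∩ {ω | Q (P (m-1) ω)} := rfl
    rw [this]
    exact (measQ μ P hP m Q').inter (measQ μ P hP (m-1) Q)
  rw [partition_sum μ P hP m hB]
  have hterm : ∀ g ∈ T n m,
      (μ (Cyl P m g ∩ {ω | Q' (P m ω) ∧ Q (P (m-1) ω)})).toReal
        = (if Q' (g ⟨m, by omega⟩) then
            (∑ p' : S n, if Q p' then mergeProb n m (g ⟨m, by omega⟩) p' else 0) else 0)
          * (μ (Cyl P m g)).toReal := by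
    intro g _
    by_cases hq : Q' (g ⟨m, by omega⟩)
    · rw [if_pos hq]
      have hset : Cyl P m g ∩ {ω | Q' (P m ω) ∧ Q (P (m-1) ω)}
          = ⋃ p' ∈ Finset.univ.filter Q, (Cyl P m g ∩ {ω | P (m-1) ω = p'}) := by
        ext ω
        simp only [Set.mem_inter_iff, Set.mem_setOf_eq, Set.mem_iUnion,
          Finset.mem_filter, Finset.mem_univ, true_and]
        constructor
        · rintro ⟨hc, -, hQ⟩
          exact ⟨P (m-1) ω, hQ, hc, rfl⟩
        · rintro ⟨p', hQ, hc, he⟩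
          have hm' : P m ω = g ⟨m, by omega⟩ := hc ⟨m, by omega⟩ (by simp)
          exact ⟨hc, hm' ▸ hq, he ▸ hQ⟩
      rw [hset, measure_biUnion_finset]
      · rw [ENNReal.toReal_sum (fun p' _ => measure_ne_top μ _)]
        have : ∀ p' ∈ Finset.univ.filter Q,
            (μ (Cyl P m g ∩ {ω | P (m-1) ω = p'})).toReal
              = (μ (Cyl P m g)).toReal * mergeProb n m (g ⟨m, by omega⟩) p' :=
          fun p' _ => cyl_step' μ P hP m hm2 hmn g p'
        rw [Finset.sum_congr rfl this, ← Finset.mul_sum, Finset.sum_filter]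
        ring
      · intro p1 h1 p2 h2 hne
        rw [Function.onFun, Set.disjoint_left]
        rintro ω ⟨-, he1⟩ ⟨-, he2⟩
        exact hne (he1.symm.trans he2)
      · exact fun p' _ => (measCyl μ P hP m g).inter (hP.1 _ _)
    · rw [if_neg hq]
      have hset : Cyl P m g ∩ {ω | Q' (P m ω) ∧ Q (P (m-1) ω)} = ∅ := by
        rw [Set.eq_empty_iff_forall_notMem]
        rintro ω ⟨hc, hq', -⟩
        exact hq ((hc ⟨m, by omega⟩ (by simp)) ▸ hq')
      rw [hset]
      simp
  rw [Finset.sum_congr rfl hterm,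
    group_sum μ P hP m hmn
      (fun p => if Q' p then (∑ p' : S n, if Q p' then mergeProb n m p p' else 0) else 0)]
  refine Finset.sum_congr rfl (fun p _ => ?_)
  split_ifs <;> ring

/-- marginal decomposition of a one-level event -/
lemma sumD (j : ℕ) (Q : S n → Prop) [DecidablePred Q] :
    (μ {ω | Q (P j ω)}).toReal
      = ∑ p : S n, (if Q p then (μ {ω | P j ω = p}).toReal else 0) := by
  have hset : {ω | Q (P j ω)} = ⋃ p ∈ Finset.univ.filter Q, {ω | P j ω = p} := by
    ext ω
    simp only [Set.mem_setOf_eq, Set.mem_iUnion, Finset.mem_filter, Finset.mem_univ, true_and]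
    exact ⟨fun h => ⟨_, h, rfl⟩, fun ⟨p, hp, he⟩ => he ▸ hp⟩
  rw [hset, measure_biUnion_finset, ENNReal.toReal_sum (fun p _ => measure_ne_top μ _),
    Finset.sum_filter]
  · intro p1 h1 p2 h2 hne
    rw [Function.onFun, Set.disjoint_left]
    rintro ω he1 he2
    exact hne (he1.symm.trans he2)
  · exact fun p _ => hP.1 _ _

lemma Dn_eq (p : S n) :
    (μ {ω | P n ω = p}).toReal = if p = sing n then 1 else 0 := by
  split_ifs with h
  · rw [h, Pn_ae μ P hP]; simp
  · have h0 : μ {ω | ¬ P n ω = sing n} = 0 := by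
      have hh := hP.2.1
      rw [MeasureTheory.ae_iff] at hh
      convert hh using 2
      rfl
    have : {ω | P n ω = p} ⊆ {ω | ¬ P n ω = sing n} :=
      fun ω hω => by simp only [Set.mem_setOf_eq] at *; rw [hω]; exact h
    rw [measure_mono_null this h0]
    simp

end TL

section induct
variable {Ω : Type*} [MeasurableSpace Ω] (μ : Measure Ω) [IsProbabilityMeasure μ]
  (P : ℕ → Ω → S n) (hP : IsKingmanPartition n μ P)

lemma part_sing : Part n n (sing n) := by
  refine ⟨?_, ?_, ?_, ?_⟩
  · intro b hb
    obtain ⟨i, -, rfl⟩ := Finset.mem_image.1 hb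
    exact Finset.singleton_nonempty i
  · intro b hb c hc hbc
    obtain ⟨i, -, rfl⟩ := Finset.mem_image.1 hb
    obtain ⟨i', -, rfl⟩ := Finset.mem_image.1 hc
    rw [Finset.disjoint_singleton_left, Finset.mem_singleton]
    intro h
    exact hbc (by rw [h])
  · intro i
    exact ⟨{i}, Finset.mem_image.2 ⟨i, Finset.mem_univ i, rfl⟩, Finset.mem_singleton_self i⟩
  · show (Finset.univ.image (fun i : Fin n => ({i} : Finset (Fin n)))).card = n
    rw [Finset.card_image_of_injective _ (fun a b h => Finset.singleton_injective h),
      Finset.card_univ, Fintype.card_fin]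

lemma sing_mem_sing (i : Fin n) : ({i} : Finset (Fin n)) ∈ sing n :=
  Finset.mem_image.2 ⟨i, Finset.mem_univ i, rfl⟩

include hP

lemma mergeProb_ne_zero {m : ℕ} {p p' : S n} (h : mergeProb n m p p' ≠ 0) :
    ∃ q1 q2, q1 ∈ p ∧ q2 ∈ p ∧ q1 ≠ q2 ∧ p' = mrg q1 q2 p := by
  unfold mergeProb at h
  have hcard : (Nat.card {q : Finset (Fin n) × Finset (Fin n) //
      q.1 ∈ p ∧ q.2 ∈ p ∧ q.1 ≠ q.2 ∧
      p' = insert (q.1 ∪ q.2) ((p.erase q.1).erase q.2)}) ≠ 0 := by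
    intro h0
    rw [h0] at h
    simp at h
  obtain ⟨⟨q, hq⟩⟩ := Nat.card_ne_zero.1 hcard |>.1
  exact ⟨q.1, q.2, hq.1, hq.2.1, hq.2.2.1, hq.2.2.2⟩

lemma supp_aux : ∀ d, d ≤ n - 1 → ∀ p : S n,
    (μ {ω | P (n - d) ω = p}).toReal ≠ 0 → Part n (n - d) p := by
  intro d
  induction d with
  | zero =>
    intro _ p hD
    rw [Nat.sub_zero] at *
    rw [Dn_eq μ P hP] at hD
    by_cases h : p = sing n
    · rw [h]; exact part_sing
    · rw [if_neg h] at hD; exact absurd rfl hD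
  | succ d IH =>
    intro hd p hD
    have hm2 : 2 ≤ n - d := by omega
    have hmn : n - d ≤ n := by omega
    have hrec := TL μ P hP (n - d) hm2 hmn (fun _ => True) (· = p)
    simp only [if_true] at hrec
    have hev : {ω | (fun _ => True) (P (n - d) ω) ∧ P (n - d - 1) ω = p}
        = {ω | P (n - (d+1)) ω = p} := by
      ext ω
      simp only [Set.mem_setOf_eq, true_and]
      rw [show n - d - 1 = n - (d + 1) by omega]
    rw [hev] at hrec
    rw [hrec] at hD
    obtain ⟨p'', -, hterm⟩ := Finset.exists_ne_zero_of_sum_ne_zero hD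
    have hD2 : (μ {ω | P (n - d) ω = p''}).toReal ≠ 0 := fun h0 => hterm (by rw [h0]; ring)
    have hW : (∑ p' : S n, if p' = p then mergeProb n (n - d) p'' p' else 0) ≠ 0 :=
      fun h0 => hterm (by rw [h0]; ring)
    rw [Finset.sum_ite_eq' Finset.univ p (fun p' => mergeProb n (n - d) p'' p'),
      if_pos (Finset.mem_univ p)] at hW
    have hpart := IH (by omega) p'' hD2
    obtain ⟨q1, q2, hq1, hq2, hqne, rfl⟩ := mergeProb_ne_zero μ P hP hW
    have := part_mrg hpart hq1 hq2 hqne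
    rwa [show n - d - 1 = n - (d+1) by omega] at this

lemma supp (m : ℕ) (hm1 : 1 ≤ m) (hmn : m ≤ n) (p : S n)
    (hD : (μ {ω | P m ω = p}).toReal ≠ 0) : Part n m p := by
  have := supp_aux μ P hP (n - m) (by omega) p
    (by rw [show n - (n - m) = m by omega]; exact hD)
  rwa [show n - (n - m) = m by omega] at this

variable (hn : 3 ≤ n)
include hn

lemma Aval_aux (i : Fin n) : ∀ d, d ≤ n - 1 →
    (μ {ω | ({i} : Finset (Fin n)) ∈ P (n - d) ω}).toReal
      = ((n-d : ℕ):ℝ) * (((n-d : ℕ):ℝ) - 1) / ((n:ℝ) * ((n:ℝ) - 1)) := by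
  obtain ⟨hn0, hn1, hn2⟩ := nfacts hn
  intro d
  induction d with
  | zero =>
    intro _
    rw [Nat.sub_zero, sumD μ P hP n (fun p => ({i} : Finset (Fin n)) ∈ p)]
    have : ∀ p : S n, (if ({i} : Finset (Fin n)) ∈ p then (μ {ω | P n ω = p}).toReal else 0)
        = (if p = sing n then (if ({i} : Finset (Fin n)) ∈ p then (1:ℝ) else 0) else 0) := by
      intro p
      rw [Dn_eq μ P hP]
      split_ifs <;> simp_all
    rw [Finset.sum_congr rfl (fun p _ => this p),
      Finset.sum_ite_eq' Finset.univ (sing n), if_pos (Finset.mem_univ _),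
      if_pos (sing_mem_sing i)]
    field_simp
  | succ d IH =>
    intro hd
    have hm2 : 2 ≤ n - d := by omega
    have hmn : n - d ≤ n := by omega
    set m := n - d with hm
    have hrec := TL μ P hP m hm2 hmn (fun _ => True) (fun p' => ({i} : Finset (Fin n)) ∈ p')
    simp only [if_true] at hrec
    have hev : {ω | (fun _ => True) (P m ω) ∧ ({i} : Finset (Fin n)) ∈ P (m-1) ω}
        = {ω | ({i} : Finset (Fin n)) ∈ P (n - (d+1)) ω} := by
      ext ω
      simp only [Set.mem_setOf_eq, true_and]
      rw [show m - 1 = n - (d + 1) by omega]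
    rw [hev] at hrec
    rw [hrec]
    have hterm : ∀ p : S n,
        (μ {ω | P m ω = p}).toReal
          * (∑ p' : S n, if ({i} : Finset (Fin n)) ∈ p' then mergeProb n m p p' else 0)
        = (if ({i} : Finset (Fin n)) ∈ p then (μ {ω | P m ω = p}).toReal else 0)
          * (((m:ℝ) - 2) / m) := by
      intro p
      by_cases hD : (μ {ω | P m ω = p}).toReal = 0
      · rw [hD]
        split_ifs <;> ring
      · have hpart := supp μ P hP m (by omega) hmn p hD
        by_cases hi : ({i} : Finset (Fin n)) ∈ p
        · rw [Vmem hm2 hpart hi, if_pos hi]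
        · rw [Vmem0 hpart hi, if_neg hi]
          ring
    rw [Finset.sum_congr rfl (fun p _ => hterm p), ← Finset.sum_mul,
      ← sumD μ P hP m (fun p => ({i} : Finset (Fin n)) ∈ p), IH (by omega)]
    have hc1 : ((n - d : ℕ):ℝ) = (m:ℝ) := by rw [hm]
    have hc2 : ((n - (d+1) : ℕ):ℝ) = (m:ℝ) - 1 := by
      rw [show n - (d+1) = m - 1 by omega]
      push_cast [Nat.cast_sub (by omega : 1 ≤ m)]
      ring
    rw [hc1, hc2]
    have hm0 : (m:ℝ) ≠ 0 := by
      have : 2 ≤ m := hm2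
      have : (2:ℝ) ≤ (m:ℝ) := by exact_mod_cast this
      linarith
    field_simp
    ring

lemma Aval (i : Fin n) (m : ℕ) (hm1 : 1 ≤ m) (hmn : m ≤ n) :
    (μ {ω | ({i} : Finset (Fin n)) ∈ P m ω}).toReal
      = (m:ℝ) * ((m:ℝ) - 1) / ((n:ℝ) * ((n:ℝ) - 1)) := by
  have := Aval_aux μ P hP hn i (n - m) (by omega)
  rwa [show n - (n - m) = m by omega] at this

lemma Bval_aux (i i' : Fin n) (hii : i ≠ i') : ∀ d, d ≤ n - 1 →
    (μ {ω | ({i} : Finset (Fin n)) ∈ P (n - d) ω ∧ ({i'} : Finset (Fin n)) ∈ P (n - d) ω}).toReal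
      = ((n-d : ℕ):ℝ) * (((n-d : ℕ):ℝ) - 1)^2 * (((n-d : ℕ):ℝ) - 2)
        / ((n:ℝ) * ((n:ℝ) - 1)^2 * ((n:ℝ) - 2)) := by
  obtain ⟨hn0, hn1, hn2⟩ := nfacts hn
  have hsne : ({i} : Finset (Fin n)) ≠ {i'} := by
    intro h
    exact hii (Finset.singleton_injective h)
  intro d
  induction d with
  | zero =>
    intro _
    rw [Nat.sub_zero, sumD μ P hP n
      (fun p => ({i} : Finset (Fin n)) ∈ p ∧ ({i'} : Finset (Fin n)) ∈ p)]
    have : ∀ p : S n,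
        (if ({i} : Finset (Fin n)) ∈ p ∧ ({i'} : Finset (Fin n)) ∈ p
          then (μ {ω | P n ω = p}).toReal else 0)
        = (if p = sing n then (if ({i} : Finset (Fin n)) ∈ p ∧ ({i'} : Finset (Fin n)) ∈ p
            then (1:ℝ) else 0) else 0) := by
      intro p
      rw [Dn_eq μ P hP]
      split_ifs <;> simp_all
    rw [Finset.sum_congr rfl (fun p _ => this p),
      Finset.sum_ite_eq' Finset.univ (sing n), if_pos (Finset.mem_univ _),
      if_pos ⟨sing_mem_sing i, sing_mem_sing i'⟩]
    field_simp
  | succ d IH =>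
    intro hd
    have hm2 : 2 ≤ n - d := by omega
    have hmn : n - d ≤ n := by omega
    set m := n - d with hm
    have hrec := TL μ P hP m hm2 hmn (fun _ => True)
      (fun p' => ({i} : Finset (Fin n)) ∈ p' ∧ ({i'} : Finset (Fin n)) ∈ p')
    simp only [if_true] at hrec
    have hev : {ω | (fun _ => True) (P m ω)
          ∧ (({i} : Finset (Fin n)) ∈ P (m-1) ω ∧ ({i'} : Finset (Fin n)) ∈ P (m-1) ω)}
        = {ω | ({i} : Finset (Fin n)) ∈ P (n - (d+1)) ω
            ∧ ({i'} : Finset (Fin n)) ∈ P (n - (d+1)) ω} := by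
      ext ω
      simp only [Set.mem_setOf_eq, true_and]
      rw [show m - 1 = n - (d + 1) by omega]
    rw [hev] at hrec
    rw [hrec]
    have hterm : ∀ p : S n,
        (μ {ω | P m ω = p}).toReal
          * (∑ p' : S n, if ({i} : Finset (Fin n)) ∈ p' ∧ ({i'} : Finset (Fin n)) ∈ p'
              then mergeProb n m p p' else 0)
        = (if ({i} : Finset (Fin n)) ∈ p ∧ ({i'} : Finset (Fin n)) ∈ p
            then (μ {ω | P m ω = p}).toReal else 0)
          * (((m:ℝ) - 2) * ((m:ℝ) - 3) / ((m:ℝ) * ((m:ℝ) - 1))) := by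
      intro p
      by_cases hD : (μ {ω | P m ω = p}).toReal = 0
      · rw [hD]
        split_ifs <;> ring
      · have hpart := supp μ P hP m (by omega) hmn p hD
        by_cases hi : ({i} : Finset (Fin n)) ∈ p ∧ ({i'} : Finset (Fin n)) ∈ p
        · rw [Vpair hm2 hpart hi.1 hi.2 hsne, if_pos hi]
        · rw [Vpair0 hpart hi, if_neg hi]
          ring
    rw [Finset.sum_congr rfl (fun p _ => hterm p), ← Finset.sum_mul,
      ← sumD μ P hP m
        (fun p => ({i} : Finset (Fin n)) ∈ p ∧ ({i'} : Finset (Fin n)) ∈ p),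
      IH (by omega)]
    have hc1 : ((n - d : ℕ):ℝ) = (m:ℝ) := by rw [hm]
    have hc2 : ((n - (d+1) : ℕ):ℝ) = (m:ℝ) - 1 := by
      rw [show n - (d+1) = m - 1 by omega]
      push_cast [Nat.cast_sub (by omega : 1 ≤ m)]
      ring
    rw [hc1, hc2]
    have hm0 : (m:ℝ) ≠ 0 := by
      have : (2:ℝ) ≤ (m:ℝ) := by exact_mod_cast hm2
      linarith
    have hm1' : (m:ℝ) - 1 ≠ 0 := by
      have : (2:ℝ) ≤ (m:ℝ) := by exact_mod_cast hm2
      linarith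
    field_simp
    ring

lemma Bval (i i' : Fin n) (hii : i ≠ i') (m : ℕ) (hm1 : 1 ≤ m) (hmn : m ≤ n) :
    (μ {ω | ({i} : Finset (Fin n)) ∈ P m ω ∧ ({i'} : Finset (Fin n)) ∈ P m ω}).toReal
      = (m:ℝ) * ((m:ℝ) - 1)^2 * ((m:ℝ) - 2)
        / ((n:ℝ) * ((n:ℝ) - 1)^2 * ((n:ℝ) - 2)) := by
  have := Bval_aux μ P hP hn i i' hii (n - m) (by omega)
  rw [show n - (n - m) = m by omega] at this
  rw [this]

variable {k : ℕ} (hk1 : 1 ≤ k) (hk2 : k ≤ n - 1)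
include hk1 hk2

lemma diag_prob (i : Fin n) :
    (μ {ω | ({i} : Finset (Fin n)) ∈ P (k+1) ω ∧ ({i} : Finset (Fin n)) ∉ P k ω}).toReal
      = 2 * (k:ℝ) / ((n:ℝ) * ((n:ℝ) - 1)) := by
  obtain ⟨hn0, hn1, hn2⟩ := nfacts hn
  have hm2 : 2 ≤ k + 1 := by omega
  have hmn : k + 1 ≤ n := by omega
  have hrec := TL μ P hP (k+1) hm2 hmn (fun p => ({i} : Finset (Fin n)) ∈ p)
    (fun p' => ({i} : Finset (Fin n)) ∉ p')
  rw [show k + 1 - 1 = k from rfl] at hrec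
  rw [hrec]
  have hterm : ∀ p : S n,
      (if ({i} : Finset (Fin n)) ∈ p then (μ {ω | P (k+1) ω = p}).toReal
        * (∑ p' : S n, if ({i} : Finset (Fin n)) ∉ p' then mergeProb n (k+1) p p' else 0)
        else 0)
      = (if ({i} : Finset (Fin n)) ∈ p then (μ {ω | P (k+1) ω = p}).toReal else 0)
        * (2 / ((k:ℝ)+1)) := by
    intro p
    by_cases hi : ({i} : Finset (Fin n)) ∈ p
    · rw [if_pos hi, if_pos hi]
      by_cases hD : (μ {ω | P (k+1) ω = p}).toReal = 0
      · rw [hD]; ring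
      · have hpart := supp μ P hP (k+1) (by omega) hmn p hD
        have := Vnot (i := i) hm2 hpart hi
        rw [this]
        push_cast
        ring
    · rw [if_neg hi, if_neg hi]; ring
  rw [Finset.sum_congr rfl (fun p _ => hterm p), ← Finset.sum_mul,
    ← sumD μ P hP (k+1) (fun p => ({i} : Finset (Fin n)) ∈ p),
    Aval μ P hP hn i (k+1) (by omega) hmn]
  have hk0 : (k:ℝ) + 1 ≠ 0 := by positivity
  push_cast
  field_simp
  ring

lemma offdiag_prob (i i' : Fin n) (hii : i ≠ i') :
    (μ {ω | (({i} : Finset (Fin n)) ∈ P (k+1) ω ∧ ({i'} : Finset (Fin n)) ∈ P (k+1) ω)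
        ∧ (({i} : Finset (Fin n)) ∉ P k ω ∧ ({i'} : Finset (Fin n)) ∉ P k ω)}).toReal
      = 2 * (k:ℝ) * ((k:ℝ) - 1) / ((n:ℝ) * ((n:ℝ) - 1)^2 * ((n:ℝ) - 2)) := by
  obtain ⟨hn0, hn1, hn2⟩ := nfacts hn
  have hsne : ({i} : Finset (Fin n)) ≠ {i'} := by
    intro h
    exact hii (Finset.singleton_injective h)
  have hm2 : 2 ≤ k + 1 := by omega
  have hmn : k + 1 ≤ n := by omega
  have hrec := TL μ P hP (k+1) hm2 hmn
    (fun p => ({i} : Finset (Fin n)) ∈ p ∧ ({i'} : Finset (Fin n)) ∈ p)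
    (fun p' => ({i} : Finset (Fin n)) ∉ p' ∧ ({i'} : Finset (Fin n)) ∉ p')
  rw [show k + 1 - 1 = k from rfl] at hrec
  rw [hrec]
  have hterm : ∀ p : S n,
      (if ({i} : Finset (Fin n)) ∈ p ∧ ({i'} : Finset (Fin n)) ∈ p
        then (μ {ω | P (k+1) ω = p}).toReal
          * (∑ p' : S n, if ({i} : Finset (Fin n)) ∉ p' ∧ ({i'} : Finset (Fin n)) ∉ p'
              then mergeProb n (k+1) p p' else 0)
        else 0)
      = (if ({i} : Finset (Fin n)) ∈ p ∧ ({i'} : Finset (Fin n)) ∈ p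
          then (μ {ω | P (k+1) ω = p}).toReal else 0)
        * (2 / (((k:ℝ)+1) * (k:ℝ))) := by
    intro p
    by_cases hi : ({i} : Finset (Fin n)) ∈ p ∧ ({i'} : Finset (Fin n)) ∈ p
    · rw [if_pos hi, if_pos hi]
      by_cases hD : (μ {ω | P (k+1) ω = p}).toReal = 0
      · rw [hD]; ring
      · have hpart := supp μ P hP (k+1) (by omega) hmn p hD
        have := Vnotpair (m := k+1) hpart hi.1 hi.2 hsne
        rw [this]
        push_cast
        ring
    · rw [if_neg hi, if_neg hi]; ring
  rw [Finset.sum_congr rfl (fun p _ => hterm p), ← Finset.sum_mul,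
    ← sumD μ P hP (k+1)
      (fun p => ({i} : Finset (Fin n)) ∈ p ∧ ({i'} : Finset (Fin n)) ∈ p),
    Bval μ P hP hn i i' hii (k+1) (by omega) hmn]
  have hk0 : (k:ℝ) ≠ 0 := by
    have : (1:ℝ) ≤ (k:ℝ) := by exact_mod_cast hk1
    linarith
  have hk10 : (k:ℝ) + 1 ≠ 0 := by positivity
  push_cast
  field_simp
  ring

end induct
section good
variable {Ω : Type*} [MeasurableSpace Ω] (μ : Measure Ω) [IsProbabilityMeasure μ]
  (P : ℕ → Ω → S n) (hP : IsKingmanPartition n μ P) (hn : 3 ≤ n)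

/-- a trajectory vector is good: starts at singletons, and each step is a merge -/
def GoodPath (g : Fin (n+1) → S n) : Prop :=
  (∀ h : n < n + 1, g ⟨n, h⟩ = sing n) ∧
  ∀ m : ℕ, 2 ≤ m → ∀ hm : m ≤ n, ∃ q1 q2,
    q1 ∈ g ⟨m, by omega⟩ ∧ q2 ∈ g ⟨m, by omega⟩ ∧ q1 ≠ q2 ∧
    g ⟨m - 1, by omega⟩ = mrg q1 q2 (g ⟨m, by omega⟩)

lemma goodPath_congr (hn' : 1 ≤ n) (g g' : Fin (n+1) → S n)
    (h : ∀ j : Fin (n+1), 1 ≤ (j : ℕ) → g j = g' j) :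
    GoodPath g ↔ GoodPath g' := by
  unfold GoodPath
  constructor
  · rintro ⟨h1, h2⟩
    refine ⟨fun hh => by rw [← h _ (by simpa using hn')]; exact h1 hh, ?_⟩
    intro m hm2 hmn
    obtain ⟨q1, q2, hq1, hq2, hqe, he⟩ := h2 m hm2 hmn
    rw [h ⟨m, by omega⟩ (by simpa using by omega : 1 ≤ ((⟨m, by omega⟩ : Fin (n+1)) : ℕ))] at hq1 hq2 he
    rw [h ⟨m - 1, by omega⟩ (by simpa using by omega)] at he
    exact ⟨q1, q2, hq1, hq2, hqe, he⟩
  · rintro ⟨h1, h2⟩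
    refine ⟨fun hh => by rw [h _ (by simpa using hn')]; exact h1 hh, ?_⟩
    intro m hm2 hmn
    obtain ⟨q1, q2, hq1, hq2, hqe, he⟩ := h2 m hm2 hmn
    rw [← h ⟨m, by omega⟩ (by simpa using by omega : 1 ≤ ((⟨m, by omega⟩ : Fin (n+1)) : ℕ))] at hq1 hq2 he
    rw [← h ⟨m - 1, by omega⟩ (by simpa using by omega)] at he
    exact ⟨q1, q2, hq1, hq2, hqe, he⟩

include hP hn

lemma cyl_zero_of_bad (g : Fin (n+1) → S n) (hbad : ¬ GoodPath g) :
    μ (Cyl P 1 g) = 0 := by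
  rw [GoodPath, not_and_or] at hbad
  rcases hbad with hbad | hbad
  · push_neg at hbad
    obtain ⟨h, hne⟩ := hbad
    have h0 : (μ (Cyl P n g)).toReal = 0 := by
      rw [cyl_top μ P hP g, if_neg hne]
    have h0' : μ (Cyl P n g) = 0 := toReal_zero μ h0
    exact measure_mono_null (cyl_mono μ P hP 1 n (by omega) g) h0'
  · push_neg at hbad
    obtain ⟨m, hm2, hmn, hno⟩ := hbad
    have hmerge : mergeProb n m (g ⟨m, by omega⟩) (g ⟨m - 1, by omega⟩) = 0 := by
      unfold mergeProb
      have : IsEmpty {q : Finset (Fin n) × Finset (Fin n) //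
          q.1 ∈ g ⟨m, by omega⟩ ∧ q.2 ∈ g ⟨m, by omega⟩ ∧ q.1 ≠ q.2 ∧
          g ⟨m - 1, by omega⟩ = insert (q.1 ∪ q.2)
            (((g ⟨m, by omega⟩).erase q.1).erase q.2)} := by
        constructor
        rintro ⟨q, hq⟩
        exact hno q.1 q.2 hq.1 hq.2.1 hq.2.2.1 hq.2.2.2
      rw [Nat.card_of_isEmpty]
      simp
    have h1 : (μ (Cyl P (m-1) g)).toReal = 0 := by
      rw [cyl_succ μ P hP m (by omega) hmn g, cyl_step' μ P hP m hm2 hmn g _, hmerge,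
        mul_zero]
    have h1' : μ (Cyl P (m-1) g) = 0 := toReal_zero μ h1
    exact measure_mono_null (cyl_mono μ P hP 1 (m-1) (by omega) g) h1'

lemma good_ae : ∀ᵐ ω ∂μ, GoodPath (fun j : Fin (n+1) => P (j : ℕ) ω) := by
  rw [MeasureTheory.ae_iff]
  have hmeas : MeasurableSet {ω | ¬ GoodPath (fun j : Fin (n+1) => P (j : ℕ) ω)} :=
    measVec μ P hP (fun v => ¬ GoodPath v)
  have h0 : (μ {ω | ¬ GoodPath (fun j : Fin (n+1) => P (j : ℕ) ω)}).toReal = 0 := by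
    rw [partition_sum μ P hP 1 hmeas]
    refine Finset.sum_eq_zero (fun g hg => ?_)
    by_cases hgood : GoodPath g
    · have : Cyl P 1 g ∩ {ω | ¬ GoodPath (fun j : Fin (n+1) => P (j : ℕ) ω)} = ∅ := by
        rw [Set.eq_empty_iff_forall_notMem]
        rintro ω ⟨hc, hb⟩
        apply hb
        rw [goodPath_congr (by omega) _ g (fun j hj => hc j hj)]
        exact hgood
      rw [this]
      simp
    · have := cyl_zero_of_bad μ P hP hn g hgood
      rw [measure_mono_null Set.inter_subset_left this]
      simp
  exact toReal_zero μ h0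

/-- deterministic consequences of a good path -/
lemma goodPath_part (g : Fin (n+1) → S n) (hg : GoodPath g) :
    ∀ m : ℕ, 1 ≤ m → ∀ hm : m ≤ n, Part n m (g ⟨m, by omega⟩) := by
  have aux : ∀ d, d ≤ n - 1 → Part n (n - d) (g ⟨n - d, by omega⟩) := by
    intro d
    induction d with
    | zero =>
      intro _
      simp only [Nat.sub_zero]
      rw [hg.1 (by omega)]
      exact part_sing
    | succ d IH =>
      intro hd
      obtain ⟨q1, q2, hq1, hq2, hqe, he⟩ := hg.2 (n - d) (by omega) (by omega)
      have hpart := IH (by omega)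
      have := part_mrg hpart hq1 hq2 hqe
      rw [← he] at this
      have hidx : (⟨n - d - 1, by omega⟩ : Fin (n+1)) = ⟨n - (d+1), by omega⟩ := by
        simp only [Fin.mk.injEq]
        omega
      rw [hidx] at this
      rwa [show n - d - 1 = n - (d+1) by omega] at this
  intro m hm1 hmn
  have := aux (n - m) (by omega)
  have hidx : (⟨n - (n - m), by omega⟩ : Fin (n+1)) = ⟨m, by omega⟩ := by
    simp only [Fin.mk.injEq]
    omega
  rw [hidx] at this
  rwa [show n - (n - m) = m by omega] at this

lemma goodPath_mono (g : Fin (n+1) → S n) (hg : GoodPath g) (i : Fin n)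
    (m1 m2 : ℕ) (h1 : 1 ≤ m1) (h12 : m1 ≤ m2) (h2n : m2 ≤ n)
    (hmem : ({i} : Finset (Fin n)) ∈ g ⟨m1, by omega⟩) :
    ({i} : Finset (Fin n)) ∈ g ⟨m2, by omega⟩ := by
  induction m2, h12 using Nat.le_induction with
  | base => exact hmem
  | succ m2 hm2 IH =>
    have hmem2 := IH (by omega) hmem
    obtain ⟨q1, q2, hq1, hq2, hqe, he⟩ := hg.2 (m2 + 1) (by omega) (by omega)
    have hidx : (⟨m2 + 1 - 1, by omega⟩ : Fin (n+1)) = ⟨m2, by omega⟩ := by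
      simp only [Fin.mk.injEq]
      omega
    rw [hidx] at he
    rw [he] at hmem2
    have hpart := goodPath_part μ P hP hn g hg (m2+1) (by omega) (by omega)
    exact ((sing_mem_mrg hpart hq1 hq2 hqe).1 hmem2).1

end good

section rho
variable {Ω : Type*} [MeasurableSpace Ω] (μ : Measure Ω) [IsProbabilityMeasure μ]
  (P : ℕ → Ω → S n) (hP : IsKingmanPartition n μ P) (hn : 3 ≤ n)
  (k : ℕ) (hk1 : 1 ≤ k) (hk2 : k ≤ n - 1)

include hP hn hk1 hk2

lemma rho_char (ω : Ω) (hg : GoodPath (fun j : Fin (n+1) => P (j : ℕ) ω)) (i : Fin n) :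
    rho n P i ω = k
      ↔ (({i} : Finset (Fin n)) ∈ P (k+1) ω ∧ ({i} : Finset (Fin n)) ∉ P k ω) := by
  have hpart : ∀ m : ℕ, 1 ≤ m → m ≤ n → Part n m (P m ω) := by
    intro m h1 h2
    exact goodPath_part μ P hP hn _ hg m h1 h2
  have hmono : ∀ m1 m2 : ℕ, 1 ≤ m1 → m1 ≤ m2 → m2 ≤ n →
      ({i} : Finset (Fin n)) ∈ P m1 ω → ({i} : Finset (Fin n)) ∈ P m2 ω := by
    intro m1 m2 h1 h12 h2n hm
    exact goodPath_mono μ P hP hn _ hg i m1 m2 h1 h12 h2n hm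
  set s := {m | 1 ≤ m ∧ m ≤ n ∧ ({i} : Finset (Fin n)) ∉ P m ω} with hs
  have hrho : rho n P i ω = sSup s := rfl
  have h1s : 1 ∈ s := by
    refine ⟨le_refl 1, by omega, ?_⟩
    intro hmem
    have hp1 := hpart 1 (le_refl 1) (by omega)
    obtain ⟨b, hb⟩ := Finset.card_eq_one.1 hp1.2.2.2
    have hbi : b = {i} := by
      have := hmem
      rw [hb, Finset.mem_singleton] at this
      exact this.symm
    have hnontriv : Nontrivial (Fin n) := ⟨⟨⟨0, by omega⟩, ⟨1, by omega⟩,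
      Fin.ne_of_val_ne (by simp)⟩⟩
    obtain ⟨i', hi'⟩ := exists_ne i
    obtain ⟨b', hb', hib'⟩ := hp1.2.2.1 i'
    rw [hb, Finset.mem_singleton] at hb'
    rw [hb', hbi, Finset.mem_singleton] at hib'
    exact hi' hib'
  have hbdd : BddAbove s := ⟨n, fun m hm => hm.2.1⟩
  have hnes : s.Nonempty := ⟨1, h1s⟩
  rw [hrho]
  constructor
  · intro h
    have hks : k ∈ s := h ▸ Nat.sSup_mem hnes hbdd
    refine ⟨?_, hks.2.2⟩
    by_contra hc
    have : k + 1 ∈ s := ⟨by omega, by omega, hc⟩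
    have := le_csSup hbdd this
    omega
  · rintro ⟨hmem, hnot⟩
    apply le_antisymm
    · apply csSup_le hnes
      intro b hb
      by_contra hbk
      push_neg at hbk
      have hkb : k + 1 ≤ b := by omega
      exact hb.2.2 (hmono (k+1) b (by omega) hkb hb.2.1 hmem)
    · exact le_csSup hbdd ⟨hk1, by omega, hnot⟩

omit hk1 hk2 hn in
lemma meas_rho (i : Fin n) : MeasurableSet {ω | rho n P i ω = k} := by
  have key : ∀ ω : Ω, rho n P i ω
      = sSup {m | 1 ≤ m ∧ m ≤ n ∧ ∀ h : m < n + 1,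
          ({i} : Finset (Fin n)) ∉ (fun j : Fin (n+1) => P (j : ℕ) ω) ⟨m, h⟩} := by
    intro ω
    unfold rho
    congr 1
    ext m
    simp only [Set.mem_setOf_eq]
    constructor
    · rintro ⟨h1, h2, h3⟩
      exact ⟨h1, h2, fun _ => h3⟩
    · rintro ⟨h1, h2, h3⟩
      exact ⟨h1, h2, h3 (by omega)⟩
  have : {ω | rho n P i ω = k}
      = {ω | (fun v : Fin (n+1) → S n => sSup {m | 1 ≤ m ∧ m ≤ n ∧ ∀ h : m < n + 1,
          ({i} : Finset (Fin n)) ∉ v ⟨m, h⟩} = k) (fun j : Fin (n+1) => P (j : ℕ) ω)} := by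
    ext ω
    simp only [Set.mem_setOf_eq, key ω]
  rw [this]
  exact measVec μ P hP (fun v => sSup {m | 1 ≤ m ∧ m ≤ n ∧ ∀ h : m < n + 1,
    ({i} : Finset (Fin n)) ∉ v ⟨m, h⟩} = k)

include hn hk1 hk2

lemma rho_meas_eq (i : Fin n) :
    μ {ω | rho n P i ω = k}
      = μ {ω | ({i} : Finset (Fin n)) ∈ P (k+1) ω
          ∧ ({i} : Finset (Fin n)) ∉ P k ω} := by
  apply measure_congr
  rw [Filter.eventuallyEq_set]
  filter_upwards [good_ae μ P hP hn] with ω hg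
  exact rho_char μ P hP hn k hk1 hk2 ω hg i

lemma rho_meas_eq_pair (i i' : Fin n) :
    μ {ω | rho n P i ω = k ∧ rho n P i' ω = k}
      = μ {ω | (({i} : Finset (Fin n)) ∈ P (k+1) ω ∧ ({i'} : Finset (Fin n)) ∈ P (k+1) ω)
          ∧ (({i} : Finset (Fin n)) ∉ P k ω ∧ ({i'} : Finset (Fin n)) ∉ P k ω)} := by
  apply measure_congr
  rw [Filter.eventuallyEq_set]
  filter_upwards [good_ae μ P hP hn] with ω hg
  show (rho n P i ω = k ∧ rho n P i' ω = k) ↔ _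
  rw [rho_char μ P hP hn k hk1 hk2 ω hg i, rho_char μ P hP hn k hk1 hk2 ω hg i']
  tauto

lemma rho_prob (i : Fin n) :
    (μ {ω | rho n P i ω = k}).toReal = 2 * (k:ℝ) / ((n:ℝ) * ((n:ℝ) - 1)) := by
  rw [rho_meas_eq μ P hP hn k hk1 hk2 i]
  exact diag_prob μ P hP hn hk1 hk2 i

lemma rho_prob_pair (i i' : Fin n) (hii : i ≠ i') :
    (μ {ω | rho n P i ω = k ∧ rho n P i' ω = k}).toReal
      = 2 * (k:ℝ) * ((k:ℝ) - 1) / ((n:ℝ) * ((n:ℝ) - 1)^2 * ((n:ℝ) - 2)) := by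
  rw [rho_meas_eq_pair μ P hP hn k hk1 hk2 i i']
  exact offdiag_prob μ P hP hn hk1 hk2 i i' hii

end rho

section final
variable {Ω : Type*} [MeasurableSpace Ω] (μ : Measure Ω) [IsProbabilityMeasure μ]
  (P : ℕ → Ω → S n) (hP : IsKingmanPartition n μ P) (hn : 3 ≤ n)
  (k : ℕ) (hk1 : 1 ≤ k) (hk2 : k ≤ n - 1)

include hP

lemma ind_eq (i : Fin n) :
    (fun ω => if rho n P i ω = k then (1:ℝ) else 0)
      = Set.indicator {ω | rho n P i ω = k} (fun _ => 1) := by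
  funext ω
  by_cases h : rho n P i ω = k <;> simp [Set.indicator_apply, h]

lemma ind_integrable (i : Fin n) :
    Integrable (fun ω => if rho n P i ω = k then (1:ℝ) else 0) μ := by
  rw [ind_eq μ P hP]
  exact (integrable_const 1).indicator (meas_rho μ P hP k i)

lemma ind_integral (i : Fin n) :
    ∫ ω, (if rho n P i ω = k then (1:ℝ) else 0) ∂μ
      = (μ {ω | rho n P i ω = k}).toReal := by
  have h1 : ∫ ω, (if rho n P i ω = k then (1:ℝ) else 0) ∂μ
      = ∫ ω, Set.indicator {ω | rho n P i ω = k} 1 ω ∂μ := by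
    apply integral_congr_ae
    apply Filter.Eventually.of_forall
    intro ω
    by_cases h : rho n P i ω = k <;> simp [Set.indicator_apply, h]
  rw [h1, integral_indicator_one (meas_rho μ P hP k i)]
  rfl

lemma meas_rho_pair (i i' : Fin n) :
    MeasurableSet {ω | rho n P i ω = k ∧ rho n P i' ω = k} :=
  (meas_rho μ P hP k i).inter (meas_rho μ P hP k i')

lemma pair_integrable (i i' : Fin n) :
    Integrable (fun ω => if rho n P i ω = k ∧ rho n P i' ω = k then (1:ℝ) else 0) μ := by
  have : (fun ω => if rho n P i ω = k ∧ rho n P i' ω = k then (1:ℝ) else 0)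
      = Set.indicator {ω | rho n P i ω = k ∧ rho n P i' ω = k} (fun _ => 1) := by
    funext ω
    by_cases h : rho n P i ω = k ∧ rho n P i' ω = k <;> simp [Set.indicator_apply, h]
  rw [this]
  exact (integrable_const 1).indicator (meas_rho_pair μ P hP k i i')

lemma pair_integral (i i' : Fin n) :
    ∫ ω, (if rho n P i ω = k ∧ rho n P i' ω = k then (1:ℝ) else 0) ∂μ
      = (μ {ω | rho n P i ω = k ∧ rho n P i' ω = k}).toReal := by
  have h1 : ∫ ω, (if rho n P i ω = k ∧ rho n P i' ω = k then (1:ℝ) else 0) ∂μ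
      = ∫ ω, Set.indicator {ω | rho n P i ω = k ∧ rho n P i' ω = k} 1 ω ∂μ := by
    apply integral_congr_ae
    apply Filter.Eventually.of_forall
    intro ω
    by_cases h : rho n P i ω = k ∧ rho n P i' ω = k <;> simp [Set.indicator_apply, h]
  rw [h1, integral_indicator_one (meas_rho_pair μ P hP k i i')]
  rfl

omit hP in
lemma Xcast : ∀ ω : Ω, (Xcount n P k ω : ℝ)
    = ∑ i : Fin n, (if rho n P i ω = k then (1:ℝ) else 0) := by
  intro ω
  rw [Xcount, Finset.card_filter]
  push_cast
  rfl

include hn hk1 hk2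

lemma Xexp :
    ∫ ω, (Xcount n P k ω : ℝ) ∂μ = 2 * (k:ℝ) / ((n:ℝ) - 1) := by
  obtain ⟨hn0, hn1, hn2⟩ := nfacts hn
  have hfun : (fun ω : Ω => (Xcount n P k ω : ℝ))
      = fun ω => ∑ i : Fin n, (if rho n P i ω = k then (1:ℝ) else 0) :=
    funext (Xcast P k)
  rw [hfun, integral_finset_sum Finset.univ (fun i _ => ind_integrable μ P hP k i)]
  have : ∀ i ∈ Finset.univ, ∫ ω, (if rho n P i ω = k then (1:ℝ) else 0) ∂μ
      = 2 * (k:ℝ) / ((n:ℝ) * ((n:ℝ) - 1)) := by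
    intro i _
    rw [ind_integral μ P hP k i, rho_prob μ P hP hn k hk1 hk2 i]
  rw [Finset.sum_congr rfl this, Finset.sum_const, Finset.card_univ, Fintype.card_fin,
    nsmul_eq_mul]
  field_simp

lemma Xvar :
    variance (fun ω => (Xcount n P k ω : ℝ)) μ
      = 2 * (k:ℝ) * ((n:ℝ) - k - 1) * ((n:ℝ) - 3)
        / (((n:ℝ) - 1) ^ 2 * ((n:ℝ) - 2)) := by
  obtain ⟨hn0, hn1, hn2⟩ := nfacts hn
  have hfun : (fun ω : Ω => (Xcount n P k ω : ℝ))
      = fun ω => ∑ i : Fin n, (if rho n P i ω = k then (1:ℝ) else 0) :=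
    funext (Xcast P k)
  have hmem : MemLp (fun ω => (Xcount n P k ω : ℝ)) 2 μ := by
    rw [hfun]
    apply memLp_finset_sum
    intro i _
    rw [ind_eq μ P hP]
    exact (memLp_const 1).indicator (meas_rho μ P hP k i)
  rw [variance_eq_sub hmem]
  -- the second moment
  have hsq : ∀ ω : Ω, ((fun ω => (Xcount n P k ω : ℝ)) ^ 2) ω
      = ∑ i : Fin n, ∑ i' : Fin n,
          (if rho n P i ω = k ∧ rho n P i' ω = k then (1:ℝ) else 0) := by
    intro ω
    have : ((fun ω => (Xcount n P k ω : ℝ)) ^ 2) ω = (Xcount n P k ω : ℝ) ^ 2 := rfl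
    rw [this, sq, Xcast P k ω, Finset.sum_mul_sum]
    refine Finset.sum_congr rfl (fun i _ => Finset.sum_congr rfl (fun i' _ => ?_))
    by_cases h1 : rho n P i ω = k <;> by_cases h2 : rho n P i' ω = k <;>
      simp [h1, h2]
  have hint2 : ∫ ω, ((fun ω => (Xcount n P k ω : ℝ)) ^ 2) ω ∂μ
      = ∑ i : Fin n, ∑ i' : Fin n,
          (μ {ω | rho n P i ω = k ∧ rho n P i' ω = k}).toReal := by
    rw [integral_congr_ae (Filter.Eventually.of_forall hsq),
      integral_finset_sum Finset.univ
        (fun i _ => integrable_finset_sum Finset.univ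
          (fun i' _ => pair_integrable μ P hP k i i'))]
    refine Finset.sum_congr rfl (fun i _ => ?_)
    rw [integral_finset_sum Finset.univ (fun i' _ => pair_integrable μ P hP k i i')]
    exact Finset.sum_congr rfl (fun i' _ => pair_integral μ P hP k i i')
  rw [hint2, Xexp μ P hP hn k hk1 hk2]
  -- evaluate the double sum
  set dv : ℝ := 2 * (k:ℝ) / ((n:ℝ) * ((n:ℝ) - 1)) with hdv
  set ov : ℝ := 2 * (k:ℝ) * ((k:ℝ) - 1) / ((n:ℝ) * ((n:ℝ) - 1)^2 * ((n:ℝ) - 2)) with hov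
  have hinner : ∀ i : Fin n,
      ∑ i' : Fin n, (μ {ω | rho n P i ω = k ∧ rho n P i' ω = k}).toReal
        = dv + ((n:ℝ) - 1) * ov := by
    intro i
    rw [← Finset.add_sum_erase Finset.univ _ (Finset.mem_univ i)]
    congr 1
    · have hset : {ω | rho n P i ω = k ∧ rho n P i ω = k} = {ω | rho n P i ω = k} := by
        ext ω; simp
      rw [hset, rho_prob μ P hP hn k hk1 hk2 i]
    · have : ∀ i' ∈ Finset.univ.erase i,
          (μ {ω | rho n P i ω = k ∧ rho n P i' ω = k}).toReal = ov := by
        intro i' hi'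
        have hne : i ≠ i' := fun h => (Finset.mem_erase.1 hi').1 h.symm
        exact rho_prob_pair μ P hP hn k hk1 hk2 i i' hne
      rw [Finset.sum_congr rfl this, Finset.sum_const, Finset.card_erase_of_mem
        (Finset.mem_univ i), Finset.card_univ, Fintype.card_fin, nsmul_eq_mul]
      congr 1
      push_cast [Nat.cast_sub (by omega : 1 ≤ n)]
      ring
  rw [Finset.sum_congr rfl (fun i _ => hinner i), Finset.sum_const, Finset.card_univ,
    Fintype.card_fin, nsmul_eq_mul]
  rw [hdv, hov]
  field_simp
  ring

end final

end KA

/-- In Kingman's `n`-coalescent, the number `X_k` of external branches with internal node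
at level `k` satisfies `E(X_k) = 2k/(n-1)` and
`Var(X_k) = 2k(n-k-1)(n-3)/((n-1)²(n-2))`, for `1 ≤ k ≤ n-1`. -/
theorem Xcount_expectation_variance {Ω : Type*} [MeasurableSpace Ω] (μ : Measure Ω)
    [IsProbabilityMeasure μ] (n : ℕ) (hn : 3 ≤ n)
    (P : ℕ → Ω → Finset (Finset (Fin n))) (hP : IsKingmanPartition n μ P)
    (k : ℕ) (hk1 : 1 ≤ k) (hk2 : k ≤ n - 1) :
    (∫ ω, (Xcount n P k ω : ℝ) ∂μ) = 2 * (k : ℝ) / ((n : ℝ) - 1) ∧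
    variance (fun ω => (Xcount n P k ω : ℝ)) μ
      = 2 * (k : ℝ) * ((n : ℝ) - k - 1) * ((n : ℝ) - 3)
        / (((n : ℝ) - 1) ^ 2 * ((n : ℝ) - 2)) :=
  ⟨KA.Xexp μ P hP hn k hk1 hk2, KA.Xvar μ P hP hn k hk1 hk2⟩
end

section
/- In Kingman's n-coalescent, for 1 ≤ k < l ≤ n-1, Cov(X_k, X_l) = −4k(n-l-1) / ((n-1)^2 (n-2)). -/
open MeasureTheory ProbabilityTheory

namespace KC

variable {n : ℕ}

abbrev Pt (n : ℕ) := Finset (Finset (Fin n))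

def Vc (p : Pt n) : ℕ := (p.filter fun b => 2 ≤ b.card).card

def mrg (q1 q2 : Finset (Fin n)) (p : Pt n) : Pt n :=
  insert (q1 ∪ q2) ((p.erase q1).erase q2)

def good (k : ℕ) (p : Pt n) : Prop :=
  p.card = k ∧ (∀ b ∈ p, b.Nonempty) ∧ ∀ i : Fin n, ∃! b, b ∈ p ∧ i ∈ b

lemma good_disjoint {k : ℕ} {p : Pt n} (hg : good k p) {q1 q2 : Finset (Fin n)}
    (h1 : q1 ∈ p) (h2 : q2 ∈ p) (hne : q1 ≠ q2) : Disjoint q1 q2 := by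
  rw [Finset.disjoint_left]
  intro i hi1 hi2
  obtain ⟨b, _, hbu⟩ := hg.2.2 i
  exact hne ((hbu q1 ⟨h1, hi1⟩).trans (hbu q2 ⟨h2, hi2⟩).symm)

lemma Vc_le_card (p : Pt n) : Vc p ≤ p.card := Finset.card_le_card (Finset.filter_subset _ _)

section mrg

variable {k : ℕ} {p : Pt n} {q1 q2 : Finset (Fin n)}
  (hg : good k p) (h1 : q1 ∈ p) (h2 : q2 ∈ p) (hne : q1 ≠ q2)

include hg h1 h2 hne

lemma card_union_ge : 2 ≤ (q1 ∪ q2).card := by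
  have hd := good_disjoint hg h1 h2 hne
  rw [Finset.card_union_of_disjoint hd]
  have c1 := Finset.card_pos.2 (hg.2.1 q1 h1)
  have c2 := Finset.card_pos.2 (hg.2.1 q2 h2)
  omega

lemma union_not_mem : q1 ∪ q2 ∉ (p.erase q1).erase q2 := by
  intro hmem
  have h' := Finset.mem_erase.1 (Finset.mem_of_mem_erase hmem)
  obtain ⟨i, hi⟩ := hg.2.1 q1 h1
  obtain ⟨b, _, hbu⟩ := hg.2.2 i
  exact h'.1 ((hbu _ ⟨h'.2, Finset.mem_union_left _ hi⟩).trans (hbu q1 ⟨h1, hi⟩).symm)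

lemma two_le_k : 2 ≤ k := by
  rw [← hg.1]
  exact Finset.one_lt_card.2 ⟨q1, h1, q2, h2, hne⟩

lemma q2_mem_erase : q2 ∈ p.erase q1 := Finset.mem_erase.2 ⟨hne.symm, h2⟩

lemma card_mrg : (mrg q1 q2 p).card = k - 1 := by
  have hk := two_le_k hg h1 h2 hne
  rw [mrg, Finset.card_insert_of_notMem (union_not_mem hg h1 h2 hne),
    Finset.card_erase_of_mem (q2_mem_erase hg h1 h2 hne), Finset.card_erase_of_mem h1, hg.1]
  omega

lemma good_mrg : good (k - 1) (mrg q1 q2 p) := by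
  refine ⟨card_mrg hg h1 h2 hne, ?_, ?_⟩
  · intro b hb
    rcases Finset.mem_insert.1 hb with h | h
    · subst h
      obtain ⟨i, hi⟩ := hg.2.1 q1 h1
      exact ⟨i, Finset.mem_union_left _ hi⟩
    · exact hg.2.1 b (Finset.mem_of_mem_erase (Finset.mem_of_mem_erase h))
  · intro i
    obtain ⟨b, ⟨hbp, hib⟩, hbu⟩ := hg.2.2 i
    by_cases hb12 : b = q1 ∨ b = q2
    · refine ⟨q1 ∪ q2, ⟨Finset.mem_insert_self _ _, ?_⟩, ?_⟩
      · rcases hb12 with h | h <;> subst h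
        · exact Finset.mem_union_left _ hib
        · exact Finset.mem_union_right _ hib
      · rintro c ⟨hc, hic⟩
        rcases Finset.mem_insert.1 hc with h | h
        · exact h
        · have h' := Finset.mem_erase.1 h
          have h'' := Finset.mem_erase.1 h'.2
          have : c = b := hbu c ⟨h''.2, hic⟩
          exfalso
          rcases hb12 with hh | hh <;> [exact h''.1 (this.trans hh); exact h'.1 (this.trans hh)]
    · push_neg at hb12
      refine ⟨b, ⟨?_, hib⟩, ?_⟩
      · exact Finset.mem_insert_of_mem (Finset.mem_erase.2 ⟨hb12.2,
          Finset.mem_erase.2 ⟨hb12.1, hbp⟩⟩)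
      · rintro c ⟨hc, hic⟩
        rcases Finset.mem_insert.1 hc with h | h
        · exfalso
          subst h
          rcases Finset.mem_union.1 hic with h | h
          · exact hb12.1 (hbu q1 ⟨h1, h⟩ ▸ (hbu q1 ⟨h1, h⟩) ▸ ((hbu q1 ⟨h1, h⟩).symm ▸ rfl))
          · exact hb12.2 ((hbu q2 ⟨h2, h⟩).symm ▸ rfl)
        · exact hbu c ⟨Finset.mem_of_mem_erase (Finset.mem_of_mem_erase h), hic⟩

lemma sgl_mem_of_mem_mrg {i : Fin n} (hi : ({i} : Finset (Fin n)) ∈ mrg q1 q2 p) :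
    ({i} : Finset (Fin n)) ∈ p := by
  rcases Finset.mem_insert.1 hi with h | h
  · exfalso
    have := card_union_ge hg h1 h2 hne
    rw [← h, Finset.card_singleton] at this
    omega
  · exact Finset.mem_of_mem_erase (Finset.mem_of_mem_erase h)

lemma Vc_mrg : Vc (mrg q1 q2 p) + (if 2 ≤ q1.card then 1 else 0)
    + (if 2 ≤ q2.card then 1 else 0) = Vc p + 1 := by
  have hmem := union_not_mem hg h1 h2 hne
  have hbig := card_union_ge hg h1 h2 hne
  rw [Vc, mrg, Finset.filter_insert, if_pos hbig,
    Finset.card_insert_of_notMem (fun h => hmem (Finset.mem_of_mem_filter _ h)),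
    Finset.filter_erase, Finset.filter_erase]
  rw [Vc]
  set F := p.filter (fun b => 2 ≤ b.card) with hF
  by_cases hb1 : 2 ≤ q1.card <;> by_cases hb2 : 2 ≤ q2.card <;>
    simp only [if_pos, if_neg, hb1, hb2, if_true, if_false]
  · have m1 : q1 ∈ F := Finset.mem_filter.2 ⟨h1, hb1⟩
    have m2 : q2 ∈ F.erase q1 := Finset.mem_erase.2 ⟨hne.symm, Finset.mem_filter.2 ⟨h2, hb2⟩⟩
    rw [Finset.card_erase_of_mem m2, Finset.card_erase_of_mem m1]
    have h2' : 1 < F.card := Finset.one_lt_card.2 ⟨q1, m1, q2, Finset.mem_filter.2 ⟨h2, hb2⟩, hne⟩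
    omega
  · have m1 : q1 ∈ F := Finset.mem_filter.2 ⟨h1, hb1⟩
    have hno : q2 ∉ F.erase q1 := fun h => hb2 (Finset.mem_filter.1 (Finset.mem_of_mem_erase h)).2
    rw [Finset.erase_eq_of_notMem hno, Finset.card_erase_of_mem m1]
    have : 1 ≤ F.card := Finset.card_pos.2 ⟨q1, m1⟩
    omega
  · have hno : q1 ∉ F := fun h => hb1 (Finset.mem_filter.1 h).2
    have m2 : q2 ∈ F := Finset.mem_filter.2 ⟨h2, hb2⟩
    rw [Finset.erase_eq_of_notMem hno, Finset.card_erase_of_mem m2]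
    have : 1 ≤ F.card := Finset.card_pos.2 ⟨q2, m2⟩
    omega
  · have hno1 : q1 ∉ F := fun h => hb1 (Finset.mem_filter.1 h).2
    have hno2 : q2 ∉ F.erase q1 := fun h => hb2 (Finset.mem_filter.1 (Finset.mem_of_mem_erase h)).2
    rw [Finset.erase_eq_of_notMem hno2, Finset.erase_eq_of_notMem hno1]

end mrg


def SGL (n : ℕ) : Pt n := Finset.univ.image fun i => ({i} : Finset (Fin n))

lemma good_SGL : good n (SGL n) := by
  refine ⟨?_, ?_, ?_⟩
  · rw [SGL, Finset.card_image_of_injective _ (fun a b h => Finset.singleton_injective h),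
      Finset.card_univ, Fintype.card_fin]
  · intro b hb
    obtain ⟨i, _, rfl⟩ := Finset.mem_image.1 hb
    exact ⟨i, Finset.mem_singleton_self i⟩
  · intro i
    refine ⟨{i}, ⟨Finset.mem_image.2 ⟨i, Finset.mem_univ i, rfl⟩, Finset.mem_singleton_self i⟩, ?_⟩
    rintro c ⟨hc, hic⟩
    obtain ⟨j, _, rfl⟩ := Finset.mem_image.1 hc
    rw [Finset.mem_singleton] at hic
    rw [hic]

lemma Vc_SGL : Vc (SGL n) = 0 := by
  rw [Vc, Finset.card_eq_zero, Finset.filter_eq_empty_iff]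
  intro b hb
  obtain ⟨i, _, rfl⟩ := Finset.mem_image.1 hb
  simp

lemma mergeProb_eq (k : ℕ) (p p' : Pt n) :
    mergeProb n k p p' =
      (((p ×ˢ p).filter fun q => q.1 ≠ q.2 ∧ p' = mrg q.1 q.2 p).card : ℝ)
        / ((k : ℝ) * ((k : ℝ) - 1)) := by
  rw [mergeProb]
  congr 2
  rw [Nat.card_eq_fintype_card, Fintype.card_subtype]
  congr 1
  ext q
  simp only [Finset.mem_filter]
  simp only [Finset.mem_filter, Finset.mem_univ, true_and, Finset.mem_product, mrg]
  tauto

lemma sum_card_mul (p : Pt n) (f : Pt n → ℝ) :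
    ∑ p' : Pt n, (((p ×ˢ p).filter fun q => q.1 ≠ q.2 ∧ p' = mrg q.1 q.2 p).card : ℝ) * f p'
      = ∑ x ∈ (p ×ˢ p).filter (fun q => q.1 ≠ q.2), f (mrg x.1 x.2 p) := by
  set s := (p ×ˢ p).filter (fun q : Finset (Fin n) × Finset (Fin n) => q.1 ≠ q.2) with hs
  have hfib : ∀ p' : Pt n,
      (p ×ˢ p).filter (fun q => q.1 ≠ q.2 ∧ p' = mrg q.1 q.2 p)
        = s.filter (fun x => mrg x.1 x.2 p = p') := by
    intro p'
    rw [hs, Finset.filter_filter]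
    apply Finset.filter_congr
    intro x _
    constructor
    · rintro ⟨h1, h2⟩; exact ⟨h1, h2.symm⟩
    · rintro ⟨h1, h2⟩; exact ⟨h1, h2.symm⟩
  calc ∑ p' : Pt n, (((p ×ˢ p).filter fun q => q.1 ≠ q.2 ∧ p' = mrg q.1 q.2 p).card : ℝ) * f p'
      = ∑ p' : Pt n, ∑ x ∈ s.filter (fun x => mrg x.1 x.2 p = p'), f (mrg x.1 x.2 p) := by
        refine Finset.sum_congr rfl fun p' _ => ?_
        rw [hfib p']
        have hcg : ∀ x ∈ s.filter (fun x => mrg x.1 x.2 p = p'), f (mrg x.1 x.2 p) = f p' := by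
          intro x hx; rw [(Finset.mem_filter.1 hx).2]
        rw [Finset.sum_congr rfl hcg, Finset.sum_const, nsmul_eq_mul]
    _ = ∑ x ∈ s, f (mrg x.1 x.2 p) :=
        Finset.sum_fiberwise_of_maps_to (fun x _ => Finset.mem_univ _) _

lemma sum_offpairs (p : Pt n) (g : Finset (Fin n) → Finset (Fin n) → ℝ) :
    ∑ x ∈ (p ×ˢ p).filter (fun q => q.1 ≠ q.2), g x.1 x.2
      = ∑ q1 ∈ p, ∑ q2 ∈ p.erase q1, g q1 q2 := by
  rw [Finset.sum_filter, Finset.sum_product]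
  refine Finset.sum_congr rfl fun q1 _ => ?_
  rw [← Finset.sum_filter]
  congr 1
  ext q2
  simp only [Finset.mem_filter, Finset.mem_erase]
  tauto

lemma one_step {k : ℕ} {p : Pt n} (hk : 2 ≤ k) (hg : good k p) (f : ℕ → ℝ) :
    ∑ p' : Pt n, mergeProb n k p p' * f (Vc p')
      = ((Vc p : ℝ) * ((Vc p : ℝ) - 1) * f (Vc p - 1)
          + 2 * (Vc p : ℝ) * ((k : ℝ) - Vc p) * f (Vc p)
          + ((k : ℝ) - Vc p) * ((k : ℝ) - Vc p - 1) * f (Vc p + 1))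
        / ((k : ℝ) * ((k : ℝ) - 1)) := by
  have hvk : Vc p ≤ k := hg.1 ▸ Vc_le_card p
  simp only [mergeProb_eq, div_mul_eq_mul_div]
  rw [← Finset.sum_div]
  congr 1
  rw [sum_card_mul p (fun p' => f (Vc p')), sum_offpairs p (fun a b => f (Vc (mrg a b p)))]
  set F := p.filter (fun b => 2 ≤ b.card) with hF
  have hFe : ∀ q1, (p.erase q1).filter (fun b => 2 ≤ b.card) = F.erase q1 := fun q1 =>
    Finset.filter_erase _ _ _
  have hinner : ∀ q1 ∈ p, ∑ q2 ∈ p.erase q1, f (Vc (mrg q1 q2 p))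
      = if 2 ≤ q1.card
          then ((Vc p - 1 : ℕ) : ℝ) * f (Vc p - 1) + ((k - Vc p : ℕ) : ℝ) * f (Vc p)
          else ((Vc p : ℕ) : ℝ) * f (Vc p) + ((k - 1 - Vc p : ℕ) : ℝ) * f (Vc p + 1) := by
    intro q1 hq1
    rw [← Finset.sum_filter_add_sum_filter_not (p.erase q1) (fun b => 2 ≤ b.card)]
    have hcard_erase : (p.erase q1).card = k - 1 := by
      rw [Finset.card_erase_of_mem hq1, hg.1]
    have hVm : ∀ q2 ∈ p.erase q1, Vc (mrg q1 q2 p) + (if 2 ≤ q1.card then 1 else 0)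
        + (if 2 ≤ q2.card then 1 else 0) = Vc p + 1 := by
      intro q2 hq2
      have hq2p := Finset.mem_of_mem_erase hq2
      have hne12 : q1 ≠ q2 := fun h => (Finset.mem_erase.1 hq2).1 h.symm
      exact Vc_mrg hg hq1 hq2p hne12
    by_cases hb1 : 2 ≤ q1.card
    · rw [if_pos hb1]
      have hq1F : q1 ∈ F := Finset.mem_filter.2 ⟨hq1, hb1⟩
      have hv1 : 1 ≤ Vc p := Finset.card_pos.2 ⟨q1, hq1F⟩
      have c1 : ((p.erase q1).filter (fun b => 2 ≤ b.card)).card = Vc p - 1 := by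
        rw [hFe, Finset.card_erase_of_mem hq1F]; rfl
      have c2 : ((p.erase q1).filter (fun b => ¬ 2 ≤ b.card)).card = k - Vc p := by
        have h1 := Finset.card_filter_add_card_filter_not
          (s := p.erase q1) (p := fun b => 2 ≤ b.card)
        rw [c1, hcard_erase] at h1
        omega
      have hbig2 : ∀ q2 ∈ (p.erase q1).filter (fun b => 2 ≤ b.card),
          f (Vc (mrg q1 q2 p)) = f (Vc p - 1) := by
        intro q2 hq2
        have h2' := Finset.mem_filter.1 hq2
        have := hVm q2 h2'.1
        rw [if_pos hb1, if_pos h2'.2] at this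
        have harg : Vc (mrg q1 q2 p) = Vc p - 1 := by omega
        rw [harg]
      have hsm2 : ∀ q2 ∈ (p.erase q1).filter (fun b => ¬ 2 ≤ b.card),
          f (Vc (mrg q1 q2 p)) = f (Vc p) := by
        intro q2 hq2
        have h2' := Finset.mem_filter.1 hq2
        have := hVm q2 h2'.1
        rw [if_pos hb1, if_neg h2'.2] at this
        have harg : Vc (mrg q1 q2 p) = Vc p := by omega
        rw [harg]
      rw [Finset.sum_congr rfl hbig2, Finset.sum_congr rfl hsm2, Finset.sum_const,
        Finset.sum_const, c1, c2, nsmul_eq_mul, nsmul_eq_mul]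
    · rw [if_neg hb1]
      have hq1F : q1 ∉ F := fun h => hb1 (Finset.mem_filter.1 h).2
      have c1 : ((p.erase q1).filter (fun b => 2 ≤ b.card)).card = Vc p := by
        rw [hFe, Finset.erase_eq_of_notMem hq1F]; rfl
      have c2 : ((p.erase q1).filter (fun b => ¬ 2 ≤ b.card)).card = k - 1 - Vc p := by
        have h1 := Finset.card_filter_add_card_filter_not
          (s := p.erase q1) (p := fun b => 2 ≤ b.card)
        rw [c1, hcard_erase] at h1
        omega
      have hbig2 : ∀ q2 ∈ (p.erase q1).filter (fun b => 2 ≤ b.card),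
          f (Vc (mrg q1 q2 p)) = f (Vc p) := by
        intro q2 hq2
        have h2' := Finset.mem_filter.1 hq2
        have := hVm q2 h2'.1
        rw [if_neg hb1, if_pos h2'.2] at this
        have harg : Vc (mrg q1 q2 p) = Vc p := by omega
        rw [harg]
      have hsm2 : ∀ q2 ∈ (p.erase q1).filter (fun b => ¬ 2 ≤ b.card),
          f (Vc (mrg q1 q2 p)) = f (Vc p + 1) := by
        intro q2 hq2
        have h2' := Finset.mem_filter.1 hq2
        have := hVm q2 h2'.1
        rw [if_neg hb1, if_neg h2'.2] at this
        have harg : Vc (mrg q1 q2 p) = Vc p + 1 := by omega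
        rw [harg]
      rw [Finset.sum_congr rfl hbig2, Finset.sum_congr rfl hsm2, Finset.sum_const,
        Finset.sum_const, c1, c2, nsmul_eq_mul, nsmul_eq_mul]
  rw [Finset.sum_congr rfl hinner, Finset.sum_ite, Finset.sum_const, Finset.sum_const]
  have cbig : (p.filter fun q1 => 2 ≤ q1.card).card = Vc p := rfl
  have csm : (p.filter fun q1 => ¬ 2 ≤ q1.card).card = k - Vc p := by
    have h1 := Finset.card_filter_add_card_filter_not
      (s := p) (p := fun b => 2 ≤ b.card)
    have h2 : (p.filter fun b => 2 ≤ b.card).card = Vc p := rfl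
    rw [h2, hg.1] at h1
    omega
  rw [cbig, csm, nsmul_eq_mul, nsmul_eq_mul]
  have e1 : ((k - Vc p : ℕ) : ℝ) = (k : ℝ) - Vc p := Nat.cast_sub hvk
  rw [e1]
  rcases Nat.eq_zero_or_pos (Vc p) with h0 | h1
  · have hB : ((k - 1 - 0 : ℕ) : ℝ) = (k : ℝ) - 1 := by
      rw [Nat.sub_zero, Nat.cast_sub (by omega : 1 ≤ k)]; norm_num
    rw [h0, hB]
    norm_num
    ring
  · rcases Nat.lt_or_ge (Vc p) k with hlt | hge
    · rw [show (Vc p - 1 : ℕ) = Vc p - 1 from rfl, Nat.cast_sub h1,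
        Nat.cast_sub (show Vc p ≤ k - 1 by omega), Nat.cast_sub (by omega : 1 ≤ k)]
      push_cast
      ring
    · have hvek : Vc p = k := le_antisymm hvk hge
      rw [hvek, Nat.cast_sub (by omega : 1 ≤ k)]
      push_cast
      ring

lemma sum_mergeProb_one {k : ℕ} {p : Pt n} (hk : 2 ≤ k) (hg : good k p) :
    ∑ p' : Pt n, mergeProb n k p p' = 1 := by
  have h := one_step hk hg (fun _ => 1)
  simp only [mul_one] at h
  rw [h]
  have hk0 : (k : ℝ) ≠ 0 := by positivity
  have hk1 : (k : ℝ) - 1 ≠ 0 := by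
    have : (2 : ℝ) ≤ k := by exact_mod_cast hk
    linarith
  field_simp
  ring

lemma exists_of_mergeProb_ne_zero {k : ℕ} {p p' : Pt n} (h : mergeProb n k p p' ≠ 0) :
    ∃ q1 q2, q1 ∈ p ∧ q2 ∈ p ∧ q1 ≠ q2 ∧ p' = mrg q1 q2 p := by
  rw [mergeProb_eq] at h
  have hcard : ((p ×ˢ p).filter fun q => q.1 ≠ q.2 ∧ p' = mrg q.1 q.2 p).card ≠ 0 := by
    intro h0
    rw [h0] at h
    simp at h
  obtain ⟨x, hx⟩ := Finset.card_pos.1 (Nat.pos_of_ne_zero hcard)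
  have hx' := Finset.mem_filter.1 hx
  have hxp := Finset.mem_product.1 hx'.1
  exact ⟨x.1, x.2, hxp.1, hxp.2, hx'.2.1, hx'.2.2⟩


noncomputable def app (m : ℕ) (F : Pt n → ℝ) : ℕ → Pt n → ℝ
  | 0 => F
  | (l+1) => if l + 1 ≤ m then F else
      fun q => ∑ q' : Pt n, mergeProb n (l+1) q q' * app m F l q'

lemma app_le {m l : ℕ} (h : l ≤ m) (F : Pt n → ℝ) : app m F l = F := by
  cases l with
  | zero => rfl
  | succ l => rw [app, if_pos h]

lemma app_step {m l : ℕ} (h : m ≤ l) (F : Pt n → ℝ) (q : Pt n) :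
    app m F (l+1) q = ∑ q' : Pt n, mergeProb n (l+1) q q' * app m F l q' := by
  rw [app, if_neg (by omega)]

lemma sum_step_congr {l : ℕ} {q : Pt n} (hg : good (l+1) q) {A B : Pt n → ℝ}
    (hAB : ∀ q', good l q' → A q' = B q') :
    ∑ q' : Pt n, mergeProb n (l+1) q q' * A q'
      = ∑ q' : Pt n, mergeProb n (l+1) q q' * B q' := by
  refine Finset.sum_congr rfl fun q' _ => ?_
  by_cases h0 : mergeProb n (l+1) q q' = 0
  · rw [h0, zero_mul, zero_mul]
  · obtain ⟨q1, q2, h1, h2, hne, rfl⟩ := exists_of_mergeProb_ne_zero h0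
    rw [hAB _ (good_mrg hg h1 h2 hne)]

lemma app_congr {m : ℕ} {F G : Pt n → ℝ} (hFG : ∀ q, good m q → F q = G q) :
    ∀ l, m ≤ l → ∀ q, good l q → app m F l q = app m G l q := by
  refine Nat.le_induction ?_ ?_
  · intro q hq
    rw [app_le le_rfl, app_le le_rfl]
    exact hFG q hq
  · intro l hml ih q hq
    rw [app_step hml, app_step hml]
    exact sum_step_congr hq ih

lemma app_add (m : ℕ) (F G : Pt n → ℝ) :
    ∀ l q, app m (fun x => F x + G x) l q = app m F l q + app m G l q := by
  intro l
  induction l with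
  | zero => intro q; rfl
  | succ l ih =>
    intro q
    by_cases h : l + 1 ≤ m
    · rw [app_le h, app_le h, app_le h]
    · rw [app_step (by omega), app_step (by omega), app_step (by omega),
        ← Finset.sum_add_distrib]
      refine Finset.sum_congr rfl fun q' _ => ?_
      rw [ih q']
      ring

lemma app_mul (m : ℕ) (c : ℝ) (F : Pt n → ℝ) :
    ∀ l q, app m (fun x => c * F x) l q = c * app m F l q := by
  intro l
  induction l with
  | zero => intro q; rfl
  | succ l ih =>
    intro q
    by_cases h : l + 1 ≤ m
    · rw [app_le h, app_le h]
    · rw [app_step (by omega), app_step (by omega), Finset.mul_sum]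
      refine Finset.sum_congr rfl fun q' _ => ?_
      rw [ih q']
      ring

lemma app_const {m : ℕ} (hm : 1 ≤ m) (c : ℝ) :
    ∀ l, m ≤ l → ∀ q : Pt n, good l q → app m (fun _ => c) l q = c := by
  refine Nat.le_induction ?_ ?_
  · intro q _
    rw [app_le le_rfl]
  · intro l hml ih q hq
    rw [app_step hml, sum_step_congr hq ih, ← Finset.sum_mul, sum_mergeProb_one (by omega) hq,
      one_mul]

lemma app_comp (m l : ℕ) (hml : m ≤ l) (F : Pt n → ℝ) :
    ∀ r, l ≤ r → ∀ q, app m F r q = app l (app m F l) r q := by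
  refine Nat.le_induction ?_ ?_
  · intro q
    rw [app_le le_rfl]
  · intro r hlr ih q
    rw [app_step (le_trans hml hlr), app_step hlr]
    exact Finset.sum_congr rfl fun q' _ => by rw [ih q']

lemma one_step_id {k : ℕ} {p : Pt n} (hk : 2 ≤ k) (hg : good k p) :
    ∑ p' : Pt n, mergeProb n k p p' * (Vc p' : ℝ)
      = (((k : ℝ) - 2) / k) * (Vc p : ℝ) + 1 := by
  have hvk : Vc p ≤ k := hg.1 ▸ Vc_le_card p
  have h := one_step hk hg (fun x => (x : ℝ))
  rw [h]
  have hk0 : (k : ℝ) ≠ 0 := by positivity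
  have hk2 : (2 : ℝ) ≤ (k : ℝ) := by exact_mod_cast hk
  have hk1 : (k : ℝ) - 1 ≠ 0 := by linarith
  rcases Nat.eq_zero_or_pos (Vc p) with h0 | h1
  · rw [h0]
    norm_num
    field_simp
    exact ⟨by omega, hk1⟩
  · rw [Nat.cast_sub h1]
    push_cast
    field_simp
    ring

lemma one_step_sq {k : ℕ} {p : Pt n} (hk : 2 ≤ k) (hg : good k p) :
    ∑ p' : Pt n, mergeProb n k p p' * (Vc p' : ℝ) ^ 2
      = ((k : ℝ) - 2) * ((k : ℝ) - 3) / ((k : ℝ) * ((k : ℝ) - 1)) * (Vc p : ℝ) ^ 2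
        + 2 * ((k : ℝ) - 2) / ((k : ℝ) - 1) * (Vc p : ℝ) + 1 := by
  have hvk : Vc p ≤ k := hg.1 ▸ Vc_le_card p
  have h := one_step hk hg (fun x => (x : ℝ) ^ 2)
  rw [h]
  have hk0 : (k : ℝ) ≠ 0 := by positivity
  have hk2 : (2 : ℝ) ≤ (k : ℝ) := by exact_mod_cast hk
  have hk1 : (k : ℝ) - 1 ≠ 0 := by linarith
  rcases Nat.eq_zero_or_pos (Vc p) with h0 | h1
  · rw [h0]
    norm_num
    field_simp
    try ring
    refine ⟨by omega, fun h => hk1 (by linarith)⟩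
  · rw [Nat.cast_sub h1]
    push_cast
    field_simp
    ring

noncomputable def Ac (m r : ℕ) : ℝ := ((m : ℝ) * ((m : ℝ) - 1)) / ((r : ℝ) * ((r : ℝ) - 1))
noncomputable def Bc (m r : ℕ) : ℝ := (m : ℝ) * ((r : ℝ) - (m : ℝ)) / ((r : ℝ) - 1)

lemma app_affine {m : ℕ} (hm : 1 ≤ m) :
    ∀ r, m + 1 ≤ r → ∀ q : Pt n, good r q →
      app m (fun x => (Vc x : ℝ)) r q = Ac m r * Vc q + Bc m r := by
  have hm0 : (m : ℝ) ≠ 0 := by positivity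
  have hm1 : (1 : ℝ) ≤ (m : ℝ) := by exact_mod_cast hm
  refine Nat.le_induction ?_ ?_
  · intro q hq
    rw [app_step le_rfl]
    simp only [app_le (le_refl m)]
    rw [one_step_id (by omega) hq, Ac, Bc]
    push_cast
    have hne : (m : ℝ) + 1 ≠ 0 := by positivity
    have hmm : (m : ℝ) + 1 - 1 ≠ 0 := by simpa using hm0
    field_simp
    ring
  · intro r hmr ih q hq
    rw [app_step (by omega), sum_step_congr hq ih]
    have hsplit : ∑ q' : Pt n, mergeProb n (r+1) q q' * (Ac m r * (Vc q' : ℝ) + Bc m r)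
        = Ac m r * (∑ q' : Pt n, mergeProb n (r+1) q q' * (Vc q' : ℝ))
          + Bc m r * ∑ q' : Pt n, mergeProb n (r+1) q q' := by
      rw [Finset.mul_sum, Finset.mul_sum, ← Finset.sum_add_distrib]
      exact Finset.sum_congr rfl fun q' _ => by ring
    rw [hsplit, one_step_id (by omega) hq, sum_mergeProb_one (by omega) hq, Ac, Ac, Bc, Bc]
    have hr2 : (2 : ℝ) ≤ (r : ℝ) := by
      have : (2 : ℕ) ≤ r := by omega
      exact_mod_cast this
    have h1 : (r : ℝ) ≠ 0 := by linarith
    have h2 : (r : ℝ) - 1 ≠ 0 := by linarith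
    have h3 : (r : ℝ) + 1 ≠ 0 := by linarith
    have h4 : (r : ℝ) + 1 - 1 ≠ 0 := by simpa using h1
    push_cast
    field_simp
    ring

lemma app_id_SGL {m : ℕ} (hm : 1 ≤ m) (hmn : m ≤ n) :
    app m (fun x => (Vc x : ℝ)) n (SGL n) = (m : ℝ) * ((n : ℝ) - m) / ((n : ℝ) - 1) := by
  rcases eq_or_lt_of_le hmn with rfl | hlt
  · rw [app_le le_rfl, Vc_SGL]
    norm_num
  · rw [app_affine hm n (by omega) _ good_SGL, Vc_SGL, Bc]
    norm_num

lemma app_sq_SGL (hn : 3 ≤ n) : ∀ d m, m + d = n → 1 ≤ m →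
    app m (fun x => (Vc x : ℝ) ^ 2) n (SGL n)
      = (m : ℝ) * ((m : ℝ) - 1) * ((n : ℝ) - m) * ((n : ℝ) - m - 1)
          / (((n : ℝ) - 1) ^ 2 * ((n : ℝ) - 2))
        + ((m : ℝ) * ((n : ℝ) - m) / ((n : ℝ) - 1)) ^ 2 := by
  have hn1 : ((n : ℝ) - 1) ≠ 0 := by
    have : (3 : ℝ) ≤ (n : ℝ) := by exact_mod_cast hn
    linarith
  have hn2 : ((n : ℝ) - 2) ≠ 0 := by
    have : (3 : ℝ) ≤ (n : ℝ) := by exact_mod_cast hn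
    linarith
  intro d
  induction d with
  | zero =>
    intro m hmn hm
    have : m = n := by omega
    subst this
    rw [app_le le_rfl, Vc_SGL]
    norm_num
  | succ d ih =>
    intro m hmd hm
    have hmn : m + 1 ≤ n := by omega
    have hm0 : (m : ℝ) ≠ 0 := by positivity
    have hmr1 : (1 : ℝ) ≤ (m : ℝ) := by exact_mod_cast hm
    have hm3 : (m : ℝ) + 1 ≠ 0 := by positivity
    rw [app_comp m (m+1) (by omega) _ n hmn (SGL n)]
    have hinner : ∀ q : Pt n, good (m+1) q → app m (fun x => (Vc x : ℝ) ^ 2) (m+1) q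
        = ((m : ℝ) - 1) * ((m : ℝ) - 2) / ((m : ℝ) * ((m : ℝ) + 1)) * (Vc q : ℝ) ^ 2
          + 2 * ((m : ℝ) - 1) / (m : ℝ) * (Vc q : ℝ) + 1 := by
      intro q hq
      rw [app_step le_rfl]
      simp only [app_le (le_refl m)]
      rw [one_step_sq (by omega) hq]
      push_cast
      have hmm : (m : ℝ) + 1 - 1 ≠ 0 := by simpa using hm0
      field_simp
      ring
    rw [app_congr hinner n hmn (SGL n) good_SGL]
    set a := ((m : ℝ) - 1) * ((m : ℝ) - 2) / ((m : ℝ) * ((m : ℝ) + 1)) with ha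
    set b := 2 * ((m : ℝ) - 1) / (m : ℝ) with hb
    have hq1 : ∀ q : Pt n, a * (Vc q : ℝ) ^ 2 + b * (Vc q : ℝ) + 1
        = (a * (Vc q : ℝ) ^ 2 + b * (Vc q : ℝ)) + (fun _ : Pt n => (1:ℝ)) q := fun q => rfl
    rw [show (fun q : Pt n => a * (Vc q : ℝ) ^ 2 + b * (Vc q : ℝ) + 1)
        = (fun q : Pt n => (a * (Vc q : ℝ) ^ 2 + b * (Vc q : ℝ)) + 1) from rfl]
    rw [app_add (m+1) (fun q => a * (Vc q : ℝ) ^ 2 + b * (Vc q : ℝ)) (fun _ => (1:ℝ)) n (SGL n)]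
    rw [app_add (m+1) (fun q => a * (Vc q : ℝ) ^ 2) (fun q => b * (Vc q : ℝ)) n (SGL n)]
    rw [app_mul (m+1) a (fun q => (Vc q : ℝ) ^ 2) n (SGL n)]
    rw [app_mul (m+1) b (fun q => (Vc q : ℝ)) n (SGL n)]
    rw [app_const (by omega) 1 n (by omega) (SGL n) good_SGL]
    rw [ih (m+1) (by omega) (by omega)]
    rw [app_id_SGL (by omega) (by omega)]
    rw [ha, hb]
    push_cast
    field_simp
    ring


lemma app_zero (m : ℕ) : ∀ l (q : Pt n), app m (fun _ => (0:ℝ)) l q = 0 := by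
  intro l
  induction l with
  | zero => intro q; rfl
  | succ l ih =>
    intro q
    by_cases h : l + 1 ≤ m
    · rw [app_le h]
    · rw [app_step (by omega)]
      simp only [ih, mul_zero, Finset.sum_const_zero]

lemma scnt_good {m : ℕ} {p : Pt n} (hg : good m p) :
    (Finset.univ.filter fun i : Fin n => ({i} : Finset (Fin n)) ∈ p).card + Vc p = m := by
  have h1 : (Finset.univ.filter fun i : Fin n => ({i} : Finset (Fin n)) ∈ p).card
      = (p.filter fun b => b.card = 1).card := by
    apply Finset.card_bij (fun i _ => ({i} : Finset (Fin n)))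
    · intro i hi
      rw [Finset.mem_filter] at hi ⊢
      exact ⟨hi.2, Finset.card_singleton i⟩
    · intro i _ j _ hij
      exact Finset.singleton_injective hij
    · intro b hb
      rw [Finset.mem_filter] at hb
      obtain ⟨j, hj⟩ := Finset.card_eq_one.1 hb.2
      exact ⟨j, Finset.mem_filter.2 ⟨Finset.mem_univ j, hj ▸ hb.1⟩, hj.symm⟩
  have h2 : p.filter (fun b => b.card = 1) = p.filter (fun b => ¬ 2 ≤ b.card) := by
    apply Finset.filter_congr
    intro b hb
    have hpos := Finset.card_pos.2 (hg.2.1 b hb)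
    constructor
    · intro h; omega
    · intro h; omega
  have h2' : (p.filter (fun b => b.card = 1)).card
      = (p.filter (fun b => ¬ 2 ≤ b.card)).card := by rw [h2]
  have h3 := Finset.card_filter_add_card_filter_not
    (s := p) (p := fun b => 2 ≤ b.card)
  have h4 : Vc p = (p.filter fun b => 2 ≤ b.card).card := rfl
  have h5 := hg.1
  omega

section Measure

variable {Ω : Type*} [MeasurableSpace Ω] {μ : Measure Ω} [IsProbabilityMeasure μ]
  {P : ℕ → Ω → Pt n}

def Cyl (P : ℕ → Ω → Pt n) (p : ℕ → Pt n) (r : ℕ) : Set Ω :=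
  {ω | ∀ j, r ≤ j → j ≤ n → P j ω = p j}

lemma measurableSet_cyl (hP : IsKingmanPartition n μ P) (p : ℕ → Pt n) (r : ℕ) :
    MeasurableSet (Cyl P p r) := by
  have : Cyl P p r = ⋂ j, ⋂ (_ : r ≤ j), ⋂ (_ : j ≤ n), {ω | P j ω = p j} := by
    ext ω
    simp only [Cyl, Set.mem_setOf_eq, Set.mem_iInter]
  rw [this]
  exact MeasurableSet.iInter fun j => MeasurableSet.iInter fun _ =>
    MeasurableSet.iInter fun _ => hP.1 j (p j)

lemma cyl_eq (p : ℕ → Pt n) {r : ℕ} (hrn : r ≤ n) :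
    Cyl P p r = Cyl P p (r+1) ∩ {ω | P r ω = p r} := by
  ext ω
  constructor
  · intro h
    exact ⟨fun j hj1 hj2 => h j (by omega) hj2, h r le_rfl hrn⟩
  · rintro ⟨h1, h2⟩ j hj1 hj2
    rcases eq_or_lt_of_le hj1 with h | h
    · rw [← h]; exact h2
    · exact h1 j (by omega) hj2

lemma cyl_update (p : ℕ → Pt n) {j r : ℕ} (hj : j < r) (q : Pt n) :
    Cyl P (Function.update p j q) r = Cyl P p r := by
  ext ω
  constructor <;> intro h j' hj1 hj2
  · have := h j' hj1 hj2
    rwa [Function.update_of_ne (by omega)] at this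
  · rw [Function.update_of_ne (by omega)]
    exact h j' hj1 hj2

lemma measure_cyl_step (hP : IsKingmanPartition n μ P) (p : ℕ → Pt n) {r : ℕ}
    (hr : 1 ≤ r) (hrn : r + 1 ≤ n) :
    (μ (Cyl P p r)).toReal
      = (μ (Cyl P p (r+1))).toReal * mergeProb n (r+1) (p (r+1)) (p r) := by
  have h := hP.2.2 (r+1) (by omega) hrn p (p r)
  have h' : (μ (Cyl P p (r+1) ∩ {ω | P r ω = p r})).toReal
      = (μ (Cyl P p (r+1))).toReal * mergeProb n (r+1) (p (r+1)) (p r) := h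
  rwa [← cyl_eq p (by omega)] at h'

lemma two_eq_sum (Φ : Pt n → Pt n → ℝ) (a b : ℕ) (ω : Ω) :
    Φ (P a ω) (P b ω) = ∑ x : Pt n × Pt n,
      Set.indicator ({ω' | P a ω' = x.1} ∩ {ω' | P b ω' = x.2}) (fun _ => Φ x.1 x.2) ω := by
  rw [Finset.sum_eq_single (P a ω, P b ω)]
  · have hmem : ω ∈ ({ω' | P a ω' = (P a ω, P b ω).1} ∩ {ω' | P b ω' = (P a ω, P b ω).2}) :=
      ⟨rfl, rfl⟩
    exact (Set.indicator_of_mem hmem (fun _ => Φ (P a ω, P b ω).1 (P a ω, P b ω).2)).symm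
  · intro x _ hne
    refine Set.indicator_of_notMem (fun hx => hne ?_) _
    obtain ⟨h1, h2⟩ := hx
    rw [Prod.ext_iff]
    exact ⟨h1.symm, h2.symm⟩
  · intro h
    exact absurd (Finset.mem_univ _) h

lemma meas_two (hP : IsKingmanPartition n μ P) (Φ : Pt n → Pt n → ℝ) (a b : ℕ) :
    Measurable (fun ω => Φ (P a ω) (P b ω)) := by
  have : (fun ω => Φ (P a ω) (P b ω)) = fun ω => ∑ x : Pt n × Pt n,
      Set.indicator ({ω' | P a ω' = x.1} ∩ {ω' | P b ω' = x.2}) (fun _ => Φ x.1 x.2) ω :=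
    funext (two_eq_sum Φ a b)
  rw [this]
  exact Finset.measurable_sum _ fun x _ =>
    (measurable_const).indicator ((hP.1 a x.1).inter (hP.1 b x.2))

lemma int_two (hP : IsKingmanPartition n μ P) (Φ : Pt n → Pt n → ℝ) (a b : ℕ) :
    Integrable (fun ω => Φ (P a ω) (P b ω)) μ := by
  have : (fun ω => Φ (P a ω) (P b ω)) = fun ω => ∑ x : Pt n × Pt n,
      Set.indicator ({ω' | P a ω' = x.1} ∩ {ω' | P b ω' = x.2}) (fun _ => Φ x.1 x.2) ω :=
    funext (two_eq_sum Φ a b)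
  rw [this]
  exact integrable_finset_sum _ fun x _ =>
    (integrable_const _).indicator ((hP.1 a x.1).inter (hP.1 b x.2))

lemma int_one (hP : IsKingmanPartition n μ P) (F : Pt n → ℝ) (a : ℕ) :
    Integrable (fun ω => F (P a ω)) μ :=
  int_two hP (fun _ q' => F q') a a

lemma KEY1 (hP : IsKingmanPartition n μ P) (F : Pt n → ℝ) {m : ℕ} (hm : 1 ≤ m) :
    ∀ r, m ≤ r → r ≤ n → ∀ p : ℕ → Pt n,
      ∫ ω, (Cyl P p r).indicator (fun ω' => F (P m ω')) ω ∂μ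
        = (μ (Cyl P p r)).toReal * app m F r (p r) := by
  refine Nat.le_induction ?_ ?_
  · intro hn p
    have hcong : ∀ ω ∈ Cyl P p m, F (P m ω) = F (p m) := fun ω hω => by rw [hω m le_rfl hn]
    rw [show ((Cyl P p m).indicator (fun ω' => F (P m ω')))
        = ((Cyl P p m).indicator (fun _ => F (p m))) from Set.indicator_congr hcong,
      integral_indicator_const _ (measurableSet_cyl hP p m), app_le le_rfl, smul_eq_mul,
      mul_comm]
    exact mul_comm _ _
  · intro r hmr ih hrn p
    have hr1 : 1 ≤ r := by omega
    have hdec : ∀ ω, (Cyl P p (r+1)).indicator (fun ω' => F (P m ω')) ω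
        = ∑ q' : Pt n, (Cyl P (Function.update p r q') r).indicator (fun ω' => F (P m ω')) ω := by
      intro ω
      rw [Finset.sum_eq_single (P r ω)]
      · by_cases hω : ω ∈ Cyl P p (r+1)
        · rw [Set.indicator_of_mem hω, Set.indicator_of_mem]
          intro j hj1 hj2
          rcases eq_or_lt_of_le hj1 with h | h
          · rw [← h, Function.update_self]
          · rw [Function.update_of_ne (by omega)]
            exact hω j (by omega) hj2
        · rw [Set.indicator_of_notMem hω, Set.indicator_of_notMem]
          intro hmem
          apply hω
          intro j hj1 hj2
          have := hmem j (by omega) hj2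
          rwa [Function.update_of_ne (by omega)] at this
      · intro q' _ hne
        refine Set.indicator_of_notMem (fun hmem => hne ?_) _
        have := hmem r le_rfl (by omega)
        rw [Function.update_self] at this
        rw [← this]
      · intro h
        exact absurd (Finset.mem_univ _) h
    rw [show (fun ω => (Cyl P p (r+1)).indicator (fun ω' => F (P m ω')) ω)
        = (fun ω => ∑ q' : Pt n, (Cyl P (Function.update p r q') r).indicator
            (fun ω' => F (P m ω')) ω) from funext hdec]
    rw [integral_finset_sum _ (fun q' _ => ((int_one hP F m).indicator
      (measurableSet_cyl hP _ r)))]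
    have hterm : ∀ q' : Pt n,
        ∫ ω, (Cyl P (Function.update p r q') r).indicator (fun ω' => F (P m ω')) ω ∂μ
        = (μ (Cyl P p (r+1))).toReal
            * (mergeProb n (r+1) (p (r+1)) q' * app m F r q') := by
      intro q'
      rw [ih (by omega) (Function.update p r q')]
      rw [measure_cyl_step hP (Function.update p r q') hr1 hrn]
      rw [cyl_update p (j := r) (r := r+1) (by omega) q', Function.update_self,
        Function.update_of_ne (by omega : r + 1 ≠ r)]
      ring
    rw [Finset.sum_congr rfl (fun q' _ => hterm q'), ← Finset.mul_sum,
      app_step (by omega)]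

lemma KEY2 (hP : IsKingmanPartition n μ P) (Φ : Pt n → Pt n → ℝ) {m l : ℕ}
    (hm : 1 ≤ m) (hml : m ≤ l) :
    ∀ r, l ≤ r → r ≤ n → ∀ p : ℕ → Pt n,
      ∫ ω, (Cyl P p r).indicator (fun ω' => Φ (P l ω') (P m ω')) ω ∂μ
        = (μ (Cyl P p r)).toReal * app l (fun q => app m (Φ q) l q) r (p r) := by
  refine Nat.le_induction ?_ ?_
  · intro hn p
    have hcong : ∀ ω ∈ Cyl P p l, Φ (P l ω) (P m ω) = Φ (p l) (P m ω) := fun ω hω => by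
      rw [hω l le_rfl hn]
    rw [show ((Cyl P p l).indicator (fun ω' => Φ (P l ω') (P m ω')))
        = ((Cyl P p l).indicator (fun ω' => Φ (p l) (P m ω'))) from Set.indicator_congr hcong,
      KEY1 hP (Φ (p l)) hm l hml hn p, app_le le_rfl]
  · intro r hlr ih hrn p
    have hr1 : 1 ≤ r := by omega
    have hdec : ∀ ω, (Cyl P p (r+1)).indicator (fun ω' => Φ (P l ω') (P m ω')) ω
        = ∑ q' : Pt n, (Cyl P (Function.update p r q') r).indicator
            (fun ω' => Φ (P l ω') (P m ω')) ω := by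
      intro ω
      rw [Finset.sum_eq_single (P r ω)]
      · by_cases hω : ω ∈ Cyl P p (r+1)
        · rw [Set.indicator_of_mem hω, Set.indicator_of_mem]
          intro j hj1 hj2
          rcases eq_or_lt_of_le hj1 with h | h
          · rw [← h, Function.update_self]
          · rw [Function.update_of_ne (by omega)]
            exact hω j (by omega) hj2
        · rw [Set.indicator_of_notMem hω, Set.indicator_of_notMem]
          intro hmem
          apply hω
          intro j hj1 hj2
          have := hmem j (by omega) hj2
          rwa [Function.update_of_ne (by omega)] at this
      · intro q' _ hne
        refine Set.indicator_of_notMem (fun hmem => hne ?_) _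
        have := hmem r le_rfl (by omega)
        rw [Function.update_self] at this
        rw [← this]
      · intro h
        exact absurd (Finset.mem_univ _) h
    rw [show (fun ω => (Cyl P p (r+1)).indicator (fun ω' => Φ (P l ω') (P m ω')) ω)
        = (fun ω => ∑ q' : Pt n, (Cyl P (Function.update p r q') r).indicator
            (fun ω' => Φ (P l ω') (P m ω')) ω) from funext hdec]
    rw [integral_finset_sum _ (fun q' _ => ((int_two hP Φ l m).indicator
      (measurableSet_cyl hP _ r)))]
    have hterm : ∀ q' : Pt n,
        ∫ ω, (Cyl P (Function.update p r q') r).indicator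
            (fun ω' => Φ (P l ω') (P m ω')) ω ∂μ
        = (μ (Cyl P p (r+1))).toReal
            * (mergeProb n (r+1) (p (r+1)) q'
                * app l (fun q => app m (Φ q) l q) r q') := by
      intro q'
      rw [ih (by omega) (Function.update p r q')]
      rw [measure_cyl_step hP (Function.update p r q') hr1 hrn]
      rw [cyl_update p (j := r) (r := r+1) (by omega) q', Function.update_self,
        Function.update_of_ne (by omega : r + 1 ≠ r)]
      ring
    rw [Finset.sum_congr rfl (fun q' _ => hterm q'), ← Finset.mul_sum,
      app_step (by omega)]

lemma EXP2 (hP : IsKingmanPartition n μ P) (Φ : Pt n → Pt n → ℝ) {m l : ℕ}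
    (hm : 1 ≤ m) (hml : m ≤ l) (hln : l ≤ n) :
    ∫ ω, Φ (P l ω) (P m ω) ∂μ = app l (fun q => app m (Φ q) l q) n (SGL n) := by
  have hdec : ∀ ω, Φ (P l ω) (P m ω) = ∑ q : Pt n,
      (Cyl P (fun _ => q) n).indicator (fun ω' => Φ (P l ω') (P m ω')) ω := by
    intro ω
    rw [Finset.sum_eq_single (P n ω)]
    · have hmem : ω ∈ Cyl P (fun _ => P n ω) n := by
        intro j hj1 hj2
        have hj : j = n := by omega
        rw [hj]
      exact (Set.indicator_of_mem hmem (fun ω' => Φ (P l ω') (P m ω'))).symm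
    · intro q _ hne
      refine Set.indicator_of_notMem (fun hmem => hne ?_) _
      exact (hmem n le_rfl le_rfl).symm
    · intro h
      exact absurd (Finset.mem_univ _) h
  rw [show (fun ω => Φ (P l ω) (P m ω)) = (fun ω => ∑ q : Pt n,
      (Cyl P (fun _ => q) n).indicator (fun ω' => Φ (P l ω') (P m ω')) ω) from funext hdec]
  rw [integral_finset_sum _ (fun q _ => (int_two hP Φ l m).indicator
    (measurableSet_cyl hP _ n))]
  have hterm : ∀ q : Pt n,
      ∫ ω, (Cyl P (fun _ => q) n).indicator (fun ω' => Φ (P l ω') (P m ω')) ω ∂μ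
        = (μ (Cyl P (fun _ => q) n)).toReal * app l (fun q' => app m (Φ q') l q') n q :=
    fun q => KEY2 hP Φ hm hml n hln le_rfl (fun _ => q)
  rw [Finset.sum_congr rfl (fun q _ => hterm q)]
  rw [Finset.sum_eq_single (SGL n)]
  · have hSGL : Cyl P (fun _ => SGL n) n = {ω | P n ω = SGL n} := by
      ext ω
      constructor
      · intro h
        exact h n le_rfl le_rfl
      · intro h j hj1 hj2
        have hj : j = n := by omega
        rw [hj]
        exact h
    have h1 : μ (Cyl P (fun _ => SGL n) n) = 1 := by
      rw [hSGL]
      have hae : {ω | P n ω = SGL n} =ᵐ[μ] (Set.univ : Set Ω) := by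
        rw [Filter.eventuallyEq_univ]
        exact hP.2.1
      rw [measure_congr hae, measure_univ]
    rw [h1, ENNReal.toReal_one, one_mul]
  · intro q _ hne
    have h0 : μ (Cyl P (fun _ => q) n) = 0 := by
      refine measure_mono_null (fun ω hω => ?_) (ae_iff.1 hP.2.1)
      intro hcon
      exact hne ((hω n le_rfl le_rfl).symm.trans hcon)
    rw [h0]
    simp
  · intro h
    exact absurd (Finset.mem_univ _) h

lemma EXP1 (hP : IsKingmanPartition n μ P) (F : Pt n → ℝ) {m : ℕ}
    (hm : 1 ≤ m) (hmn : m ≤ n) :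
    ∫ ω, F (P m ω) ∂μ = app m F n (SGL n) := by
  have h := EXP2 hP (fun _ q' => F q') hm le_rfl hmn
  have h2 : (fun q => app m ((fun (_ q' : Pt n) => F q') q) m q) = F := by
    funext q
    rw [app_le le_rfl]
  rwa [h2] at h

open scoped Classical in
lemma as_good (hP : IsKingmanPartition n μ P) {m : ℕ} (hm : 1 ≤ m) (hmn : m ≤ n) :
    ∀ᵐ ω ∂μ, good m (P m ω) := by
  set F : Pt n → ℝ := fun q => if good m q then 0 else 1 with hF
  have hval : ∫ ω, F (P m ω) ∂μ = 0 := by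
    rw [EXP1 hP F hm hmn]
    have hzero : ∀ q, good m q → F q = (fun _ : Pt n => (0:ℝ)) q := fun q hq => by
      simp only [hF, if_pos hq]
    rw [app_congr hzero n hmn (SGL n) good_SGL, app_zero]
  have hnonneg : 0 ≤ fun ω => F (P m ω) := by
    intro ω
    simp only [Pi.zero_apply, hF]
    split_ifs <;> norm_num
  have hae := (integral_eq_zero_iff_of_nonneg hnonneg (int_one hP F m)).1 hval
  filter_upwards [hae] with ω hω
  by_contra hcon
  rw [Pi.zero_apply, hF] at hω
  simp only [if_neg hcon] at hω
  exact one_ne_zero hω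

open scoped Classical in
lemma as_pers (hP : IsKingmanPartition n μ P) {r : ℕ} (hr : 1 ≤ r) (hrn : r + 1 ≤ n) :
    ∀ᵐ ω ∂μ, ∀ i : Fin n, ({i} : Finset (Fin n)) ∈ P r ω →
      ({i} : Finset (Fin n)) ∈ P (r+1) ω := by
  set Φ : Pt n → Pt n → ℝ := fun q q' =>
    if (∀ i : Fin n, ({i} : Finset (Fin n)) ∈ q' → ({i} : Finset (Fin n)) ∈ q) then 0 else 1
    with hΦ
  have hval : ∫ ω, Φ (P (r+1) ω) (P r ω) ∂μ = 0 := by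
    rw [EXP2 hP Φ hr (by omega) hrn]
    have hzero : ∀ q, good (r+1) q →
        app r (Φ q) (r+1) q = (fun _ : Pt n => (0:ℝ)) q := by
      intro q hq
      rw [app_step le_rfl]
      simp only [app_le (le_refl r)]
      refine Finset.sum_eq_zero fun q' _ => ?_
      by_cases h0 : mergeProb n (r+1) q q' = 0
      · rw [h0, zero_mul]
      · obtain ⟨q1, q2, h1, h2, hne, rfl⟩ := exists_of_mergeProb_ne_zero h0
        have : Φ q (mrg q1 q2 q) = 0 := by
          rw [hΦ]
          exact if_pos fun i hi => sgl_mem_of_mem_mrg hq h1 h2 hne hi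
        rw [this, mul_zero]
    rw [app_congr hzero n hrn (SGL n) good_SGL, app_zero]
  have hnonneg : 0 ≤ fun ω => Φ (P (r+1) ω) (P r ω) := by
    intro ω
    simp only [Pi.zero_apply, hΦ]
    split_ifs <;> norm_num
  have hae := (integral_eq_zero_iff_of_nonneg hnonneg (int_two hP Φ (r+1) r)).1 hval
  filter_upwards [hae] with ω hω
  by_contra hcon
  rw [Pi.zero_apply, hΦ] at hω
  simp only [if_neg hcon] at hω
  exact one_ne_zero hω

lemma as_all_good (hP : IsKingmanPartition n μ P) :
    ∀ᵐ ω ∂μ, ∀ m, 1 ≤ m → m ≤ n → good m (P m ω) := by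
  rw [MeasureTheory.ae_all_iff]
  intro m
  by_cases h : 1 ≤ m ∧ m ≤ n
  · filter_upwards [as_good hP h.1 h.2] with ω hω _ _
    exact hω
  · exact ae_of_all _ fun ω h1 h2 => absurd ⟨h1, h2⟩ h

lemma as_all_pers (hP : IsKingmanPartition n μ P) :
    ∀ᵐ ω ∂μ, ∀ r, 1 ≤ r → r + 1 ≤ n → ∀ i : Fin n,
      ({i} : Finset (Fin n)) ∈ P r ω → ({i} : Finset (Fin n)) ∈ P (r+1) ω := by
  rw [MeasureTheory.ae_all_iff]
  intro r
  by_cases h : 1 ≤ r ∧ r + 1 ≤ n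
  · filter_upwards [as_pers hP h.1 h.2] with ω hω _ _
    exact hω
  · exact ae_of_all _ fun ω h1 h2 => absurd ⟨h1, h2⟩ h

lemma EXPV1 (hP : IsKingmanPartition n μ P) {m : ℕ} (hm : 1 ≤ m) (hmn : m ≤ n) :
    ∫ ω, (Vc (P m ω) : ℝ) ∂μ = (m : ℝ) * ((n : ℝ) - m) / ((n : ℝ) - 1) := by
  have h := EXP1 hP (fun q => (Vc q : ℝ)) hm hmn
  rw [h, app_id_SGL hm hmn]

lemma EXPV2 (hP : IsKingmanPartition n μ P) (hn : 3 ≤ n) {a b : ℕ} (ha : 1 ≤ a)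
    (hab : a ≤ b) (hb2 : 2 ≤ b) (hbn : b ≤ n) :
    ∫ ω, (Vc (P b ω) : ℝ) * (Vc (P a ω) : ℝ) ∂μ
      = Ac a b * ((b : ℝ) * ((b : ℝ) - 1) * ((n : ℝ) - b) * ((n : ℝ) - b - 1)
            / (((n : ℝ) - 1) ^ 2 * ((n : ℝ) - 2))
          + ((b : ℝ) * ((n : ℝ) - b) / ((n : ℝ) - 1)) ^ 2)
        + Bc a b * ((b : ℝ) * ((n : ℝ) - b) / ((n : ℝ) - 1)) := by
  have h := EXP2 hP (fun q q' => (Vc q : ℝ) * (Vc q' : ℝ)) ha hab hbn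
  rw [h]
  have hmul : ∀ q : Pt n, app a (fun q' => (Vc q : ℝ) * (Vc q' : ℝ)) b q
      = (Vc q : ℝ) * app a (fun q' => (Vc q' : ℝ)) b q := fun q =>
    app_mul a ((Vc q : ℝ)) (fun q' => (Vc q' : ℝ)) b q
  have haff : ∀ q : Pt n, good b q →
      app a (fun q' => (Vc q' : ℝ)) b q = Ac a b * Vc q + Bc a b := by
    intro q hq
    rcases eq_or_lt_of_le hab with heq | hlt
    · subst heq
      rw [app_le le_rfl, Ac, Bc]
      have ha2 : (2 : ℝ) ≤ (a : ℝ) := by exact_mod_cast hb2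
      have ha0 : (a : ℝ) ≠ 0 := by linarith
      have ha1 : (a : ℝ) - 1 ≠ 0 := by linarith
      field_simp
      ring
    · exact app_affine ha b hlt q hq
  have hcong : ∀ q : Pt n, good b q →
      (fun q => app a (fun q' => (Vc q : ℝ) * (Vc q' : ℝ)) b q) q
        = (fun q => Ac a b * (Vc q : ℝ) ^ 2 + Bc a b * (Vc q : ℝ)) q := by
    intro q hq
    simp only
    rw [hmul q, haff q hq]
    ring
  rw [app_congr hcong n hbn (SGL n) good_SGL]
  rw [show (fun q : Pt n => Ac a b * (Vc q : ℝ) ^ 2 + Bc a b * (Vc q : ℝ))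
      = (fun q : Pt n => (fun q : Pt n => Ac a b * (Vc q : ℝ) ^ 2) q
          + (fun q : Pt n => Bc a b * (Vc q : ℝ)) q) from rfl]
  rw [app_add b (fun q : Pt n => Ac a b * (Vc q : ℝ) ^ 2)
    (fun q : Pt n => Bc a b * (Vc q : ℝ)) n (SGL n)]
  rw [app_mul b (Ac a b) (fun q : Pt n => (Vc q : ℝ) ^ 2) n (SGL n)]
  rw [app_mul b (Bc a b) (fun q : Pt n => (Vc q : ℝ)) n (SGL n)]
  rw [app_sq_SGL hn (n - b) b (by omega) (by omega), app_id_SGL (by omega) hbn]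

lemma X_eq_pt {ω : Ω} (hn : 3 ≤ n)
    (hg : ∀ m, 1 ≤ m → m ≤ n → good m (P m ω))
    (hp : ∀ r, 1 ≤ r → r + 1 ≤ n → ∀ i : Fin n,
      ({i} : Finset (Fin n)) ∈ P r ω → ({i} : Finset (Fin n)) ∈ P (r+1) ω)
    {k : ℕ} (hk : 1 ≤ k) (hkn : k + 1 ≤ n) :
    (Xcount n P k ω : ℝ) = 1 + (Vc (P k ω) : ℝ) - (Vc (P (k+1) ω) : ℝ) := by
  have hchain : ∀ (i : Fin n) a b, a ≤ b → 1 ≤ a → b ≤ n →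
      ({i} : Finset (Fin n)) ∈ P a ω → ({i} : Finset (Fin n)) ∈ P b ω := by
    intro i a
    refine Nat.le_induction ?_ ?_
    · intro _ _ h
      exact h
    · intro b hab ih h1 hbn hmem
      exact hp b (by omega) hbn i (ih h1 (by omega) hmem)
  have hP1 : ∀ i : Fin n, ({i} : Finset (Fin n)) ∉ P 1 ω := by
    intro i hi
    have hg1 := hg 1 le_rfl (by omega)
    obtain ⟨c, hc⟩ := Finset.card_eq_one.1 hg1.1
    obtain ⟨j, hj⟩ := Fintype.exists_ne_of_one_lt_card
      (by rw [Fintype.card_fin]; omega) i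
    obtain ⟨b, ⟨hbp, hjb⟩, _⟩ := hg1.2.2 j
    rw [hc, Finset.mem_singleton] at hbp hi
    rw [hbp, ← hi, Finset.mem_singleton] at hjb
    exact hj hjb
  have hbdd : ∀ i : Fin n,
      BddAbove {j | 1 ≤ j ∧ j ≤ n ∧ ({i} : Finset (Fin n)) ∉ P j ω} :=
    fun i => ⟨n, fun x hx => hx.2.1⟩
  have hone : ∀ i : Fin n,
      (1 : ℕ) ∈ {j | 1 ≤ j ∧ j ≤ n ∧ ({i} : Finset (Fin n)) ∉ P j ω} :=
    fun i => ⟨le_rfl, by omega, hP1 i⟩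
  have hrho : ∀ i : Fin n, rho n P i ω = k ↔
      (({i} : Finset (Fin n)) ∈ P (k+1) ω ∧ ({i} : Finset (Fin n)) ∉ P k ω) := by
    intro i
    have hrw : rho n P i ω
        = sSup {j | 1 ≤ j ∧ j ≤ n ∧ ({i} : Finset (Fin n)) ∉ P j ω} := rfl
    rw [hrw]
    constructor
    · intro h
      have hmem : sSup {j | 1 ≤ j ∧ j ≤ n ∧ ({i} : Finset (Fin n)) ∉ P j ω}
          ∈ {j | 1 ≤ j ∧ j ≤ n ∧ ({i} : Finset (Fin n)) ∉ P j ω} :=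
        Nat.sSup_mem ⟨1, hone i⟩ (hbdd i)
      rw [h] at hmem
      refine ⟨?_, hmem.2.2⟩
      by_contra hcon
      have hk1T : k + 1 ∈ {j | 1 ≤ j ∧ j ≤ n ∧ ({i} : Finset (Fin n)) ∉ P j ω} :=
        ⟨by omega, by omega, hcon⟩
      have hle := le_csSup (hbdd i) hk1T
      omega
    · rintro ⟨h1, h2⟩
      have hkT : k ∈ {j | 1 ≤ j ∧ j ≤ n ∧ ({i} : Finset (Fin n)) ∉ P j ω} :=
        ⟨hk, by omega, h2⟩
      refine le_antisymm ?_ (le_csSup (hbdd i) hkT)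
      refine csSup_le ⟨1, hone i⟩ ?_
      intro x hx
      by_contra hcon
      push_neg at hcon
      exact hx.2.2 (hchain i (k+1) x (by omega) (by omega) hx.2.1 h1)
  have hfil : Finset.univ.filter (fun i : Fin n => rho n P i ω = k)
      = Finset.univ.filter (fun i : Fin n => ({i} : Finset (Fin n)) ∈ P (k+1) ω
          ∧ ({i} : Finset (Fin n)) ∉ P k ω) := by
    apply Finset.filter_congr
    intro i _
    exact hrho i
  have hXc : Xcount n P k ω = (Finset.univ.filter (fun i : Fin n =>
      ({i} : Finset (Fin n)) ∈ P (k+1) ω ∧ ({i} : Finset (Fin n)) ∉ P k ω)).card := by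
    rw [Xcount, hfil]
  set A := Finset.univ.filter (fun i : Fin n => ({i} : Finset (Fin n)) ∈ P (k+1) ω) with hA
  set B := Finset.univ.filter (fun i : Fin n => ({i} : Finset (Fin n)) ∈ P k ω) with hB
  have hsub : B ⊆ A := by
    intro i hi
    rw [hB, Finset.mem_filter] at hi
    rw [hA, Finset.mem_filter]
    exact ⟨hi.1, hp k hk hkn i hi.2⟩
  have hABsd : Finset.univ.filter (fun i : Fin n => ({i} : Finset (Fin n)) ∈ P (k+1) ω
      ∧ ({i} : Finset (Fin n)) ∉ P k ω) = A \ B := by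
    ext i
    rw [hA, hB]
    simp only [Finset.mem_filter, Finset.mem_sdiff, Finset.mem_univ, true_and]
  have hcard : Xcount n P k ω = A.card - B.card := by
    rw [hXc, hABsd, Finset.card_sdiff_of_subset hsub]
  have hgk := hg k hk (by omega)
  have hgk1 := hg (k+1) (by omega) hkn
  have hBcard := scnt_good hgk
  have hAcard := scnt_good hgk1
  have hvk : Vc (P k ω) ≤ k := by
    have h1 := Vc_le_card (P k ω)
    have h2 := hgk.1
    omega
  have hvk1 : Vc (P (k+1) ω) ≤ k + 1 := by
    have h1 := Vc_le_card (P (k+1) ω)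
    have h2 := hgk1.1
    omega
  rw [← hB] at hBcard
  rw [← hA] at hAcard
  have hBA : B.card ≤ A.card := Finset.card_le_card hsub
  rw [hcard, Nat.cast_sub hBA]
  have hac : (A.card : ℝ) = (k + 1 : ℝ) - (Vc (P (k+1) ω) : ℝ) := by
    have : A.card = k + 1 - Vc (P (k+1) ω) := by omega
    rw [this, Nat.cast_sub hvk1]
    push_cast
    ring
  have hbc : (B.card : ℝ) = (k : ℝ) - (Vc (P k ω) : ℝ) := by
    have : B.card = k - Vc (P k ω) := by omega
    rw [this, Nat.cast_sub hvk]
  rw [hac, hbc]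
  ring

end Measure

end KC

set_option maxHeartbeats 4000000 in
/-- In Kingman's `n`-coalescent, for `1 ≤ k < l ≤ n-1`,
`Cov(X_k, X_l) = −4k(n-l-1)/((n-1)²(n-2))`. -/
theorem Xcount_covariance {Ω : Type*} [MeasurableSpace Ω] (μ : Measure Ω)
    [IsProbabilityMeasure μ] (n : ℕ) (hn : 3 ≤ n)
    (P : ℕ → Ω → Finset (Finset (Fin n))) (hP : IsKingmanPartition n μ P)
    (k l : ℕ) (hk : 1 ≤ k) (hkl : k < l) (hl : l ≤ n - 1) :
    (∫ ω, (Xcount n P k ω : ℝ) * (Xcount n P l ω : ℝ) ∂μ)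
        - (∫ ω, (Xcount n P k ω : ℝ) ∂μ) * (∫ ω, (Xcount n P l ω : ℝ) ∂μ)
      = -(4 * (k : ℝ) * ((n : ℝ) - l - 1)) / (((n : ℝ) - 1) ^ 2 * ((n : ℝ) - 2)) := by
  have hl1 : 1 ≤ l := by omega
  have hln : l + 1 ≤ n := by omega
  have hkn : k + 1 ≤ n := by omega
  have hXe : ∀ a, 1 ≤ a → a + 1 ≤ n → ∀ᵐ ω ∂μ, (Xcount n P a ω : ℝ)
      = 1 + (KC.Vc (P a ω) : ℝ) - (KC.Vc (P (a+1) ω) : ℝ) := by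
    intro a ha han
    filter_upwards [KC.as_all_good hP, KC.as_all_pers hP] with ω hg hp
    exact KC.X_eq_pt hn hg hp ha han
  have intV : ∀ a : ℕ, Integrable (fun ω => (KC.Vc (P a ω) : ℝ)) μ := fun a =>
    KC.int_one hP (fun q => (KC.Vc q : ℝ)) a
  have intVV : ∀ a b : ℕ,
      Integrable (fun ω => (KC.Vc (P b ω) : ℝ) * (KC.Vc (P a ω) : ℝ)) μ := fun a b =>
    KC.int_two hP (fun q q' => (KC.Vc q : ℝ) * (KC.Vc q' : ℝ)) b a
  have hconst : ∫ _ω, (1:ℝ) ∂μ = 1 := by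
    rw [integral_const]
    simp
  -- single integrals
  have hEX : ∀ a, 1 ≤ a → a + 1 ≤ n → ∫ ω, (Xcount n P a ω : ℝ) ∂μ
      = 1 + (a : ℝ) * ((n : ℝ) - a) / ((n : ℝ) - 1)
          - ((a+1 : ℕ) : ℝ) * ((n : ℝ) - ((a+1 : ℕ) : ℝ)) / ((n : ℝ) - 1) := by
    intro a ha han
    rw [integral_congr_ae (hXe a ha han)]
    have j1 : Integrable (fun ω => (1:ℝ) + (KC.Vc (P a ω) : ℝ)) μ := by
      exact (integrable_const 1).add (intV a)
    rw [integral_sub j1 (intV (a+1)),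
      integral_add (integrable_const 1) (intV a), hconst,
      KC.EXPV1 hP ha (by omega), KC.EXPV1 hP (show 1 ≤ a+1 by omega) han]
  -- product integral
  have hprod : ∀ᵐ ω ∂μ, (Xcount n P k ω : ℝ) * (Xcount n P l ω : ℝ)
      = ((((((((1 + (KC.Vc (P l ω) : ℝ)) - (KC.Vc (P (l+1) ω) : ℝ))
          + (KC.Vc (P k ω) : ℝ)) - (KC.Vc (P (k+1) ω) : ℝ))
          + (KC.Vc (P l ω) : ℝ) * (KC.Vc (P k ω) : ℝ))
          - (KC.Vc (P (l+1) ω) : ℝ) * (KC.Vc (P k ω) : ℝ))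
          - (KC.Vc (P l ω) : ℝ) * (KC.Vc (P (k+1) ω) : ℝ))
          + (KC.Vc (P (l+1) ω) : ℝ) * (KC.Vc (P (k+1) ω) : ℝ)) := by
    filter_upwards [hXe k hk hkn, hXe l hl1 hln] with ω h1 h2
    rw [h1, h2]
    ring
  have hIkl : ∫ ω, (Xcount n P k ω : ℝ) * (Xcount n P l ω : ℝ) ∂μ
      = 1 + (l : ℝ) * ((n : ℝ) - l) / ((n : ℝ) - 1)
        - ((l+1 : ℕ) : ℝ) * ((n : ℝ) - ((l+1 : ℕ) : ℝ)) / ((n : ℝ) - 1)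
        + (k : ℝ) * ((n : ℝ) - k) / ((n : ℝ) - 1)
        - ((k+1 : ℕ) : ℝ) * ((n : ℝ) - ((k+1 : ℕ) : ℝ)) / ((n : ℝ) - 1)
        + (KC.Ac k l * ((l : ℝ) * ((l : ℝ) - 1) * ((n : ℝ) - l) * ((n : ℝ) - l - 1)
              / (((n : ℝ) - 1) ^ 2 * ((n : ℝ) - 2))
            + ((l : ℝ) * ((n : ℝ) - l) / ((n : ℝ) - 1)) ^ 2)
          + KC.Bc k l * ((l : ℝ) * ((n : ℝ) - l) / ((n : ℝ) - 1)))
        - (KC.Ac k (l+1) * (((l+1 : ℕ) : ℝ) * (((l+1 : ℕ) : ℝ) - 1) * ((n : ℝ) - ((l+1 : ℕ) : ℝ)) * ((n : ℝ) - ((l+1 : ℕ) : ℝ) - 1)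
              / (((n : ℝ) - 1) ^ 2 * ((n : ℝ) - 2))
            + (((l+1 : ℕ) : ℝ) * ((n : ℝ) - ((l+1 : ℕ) : ℝ)) / ((n : ℝ) - 1)) ^ 2)
          + KC.Bc k (l+1) * (((l+1 : ℕ) : ℝ) * ((n : ℝ) - ((l+1 : ℕ) : ℝ)) / ((n : ℝ) - 1)))
        - (KC.Ac (k+1) l * ((l : ℝ) * ((l : ℝ) - 1) * ((n : ℝ) - l) * ((n : ℝ) - l - 1)
              / (((n : ℝ) - 1) ^ 2 * ((n : ℝ) - 2))
            + ((l : ℝ) * ((n : ℝ) - l) / ((n : ℝ) - 1)) ^ 2)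
          + KC.Bc (k+1) l * ((l : ℝ) * ((n : ℝ) - l) / ((n : ℝ) - 1)))
        + (KC.Ac (k+1) (l+1) * (((l+1 : ℕ) : ℝ) * (((l+1 : ℕ) : ℝ) - 1) * ((n : ℝ) - ((l+1 : ℕ) : ℝ)) * ((n : ℝ) - ((l+1 : ℕ) : ℝ) - 1)
              / (((n : ℝ) - 1) ^ 2 * ((n : ℝ) - 2))
            + (((l+1 : ℕ) : ℝ) * ((n : ℝ) - ((l+1 : ℕ) : ℝ)) / ((n : ℝ) - 1)) ^ 2)
          + KC.Bc (k+1) (l+1) * (((l+1 : ℕ) : ℝ) * ((n : ℝ) - ((l+1 : ℕ) : ℝ)) / ((n : ℝ) - 1))) := by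
    rw [integral_congr_ae hprod]
    have i1 : Integrable (fun ω => (1:ℝ) + (KC.Vc (P l ω) : ℝ)) μ := by
      exact (integrable_const (1:ℝ)).add (intV l)
    have i2 : Integrable (fun ω => (1:ℝ) + (KC.Vc (P l ω) : ℝ)
        - (KC.Vc (P (l+1) ω) : ℝ)) μ := by exact i1.sub (intV (l+1))
    have i3 : Integrable (fun ω => (1:ℝ) + (KC.Vc (P l ω) : ℝ)
        - (KC.Vc (P (l+1) ω) : ℝ) + (KC.Vc (P k ω) : ℝ)) μ := by exact i2.add (intV k)
    have i4 : Integrable (fun ω => (1:ℝ) + (KC.Vc (P l ω) : ℝ)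
        - (KC.Vc (P (l+1) ω) : ℝ) + (KC.Vc (P k ω) : ℝ)
        - (KC.Vc (P (k+1) ω) : ℝ)) μ := by exact i3.sub (intV (k+1))
    have i5 : Integrable (fun ω => (1:ℝ) + (KC.Vc (P l ω) : ℝ)
        - (KC.Vc (P (l+1) ω) : ℝ) + (KC.Vc (P k ω) : ℝ)
        - (KC.Vc (P (k+1) ω) : ℝ)
        + (KC.Vc (P l ω) : ℝ) * (KC.Vc (P k ω) : ℝ)) μ := by exact i4.add (intVV k l)
    have i6 : Integrable (fun ω => (1:ℝ) + (KC.Vc (P l ω) : ℝ)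
        - (KC.Vc (P (l+1) ω) : ℝ) + (KC.Vc (P k ω) : ℝ)
        - (KC.Vc (P (k+1) ω) : ℝ)
        + (KC.Vc (P l ω) : ℝ) * (KC.Vc (P k ω) : ℝ)
        - (KC.Vc (P (l+1) ω) : ℝ) * (KC.Vc (P k ω) : ℝ)) μ := by
      exact i5.sub (intVV k (l+1))
    have i7 : Integrable (fun ω => (1:ℝ) + (KC.Vc (P l ω) : ℝ)
        - (KC.Vc (P (l+1) ω) : ℝ) + (KC.Vc (P k ω) : ℝ)
        - (KC.Vc (P (k+1) ω) : ℝ)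
        + (KC.Vc (P l ω) : ℝ) * (KC.Vc (P k ω) : ℝ)
        - (KC.Vc (P (l+1) ω) : ℝ) * (KC.Vc (P k ω) : ℝ)
        - (KC.Vc (P l ω) : ℝ) * (KC.Vc (P (k+1) ω) : ℝ)) μ := by
      exact i6.sub (intVV (k+1) l)
    rw [integral_add i7 (intVV (k+1) (l+1)), integral_sub i6 (intVV (k+1) l),
      integral_sub i5 (intVV k (l+1)), integral_add i4 (intVV k l),
      integral_sub i3 (intV (k+1)), integral_add i2 (intV k),
      integral_sub i1 (intV (l+1)), integral_add (integrable_const 1) (intV l), hconst,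
      KC.EXPV1 hP hl1 (by omega), KC.EXPV1 hP (show 1 ≤ l+1 by omega) hln,
      KC.EXPV1 hP hk (by omega), KC.EXPV1 hP (show 1 ≤ k+1 by omega) hkn,
      KC.EXPV2 hP hn hk (by omega) (by omega) (by omega),
      KC.EXPV2 hP hn hk (by omega) (by omega) hln,
      KC.EXPV2 hP hn (show 1 ≤ k+1 by omega) (by omega) (by omega) (by omega),
      KC.EXPV2 hP hn (show 1 ≤ k+1 by omega) (by omega) (by omega) hln]
  rw [hIkl, hEX k hk hkn, hEX l hl1 hln]
  simp only [KC.Ac, KC.Bc]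
  have h2n : (3:ℝ) ≤ (n:ℝ) := by exact_mod_cast hn
  have h2l : (2:ℝ) ≤ (l:ℝ) := by exact_mod_cast (by omega : 2 ≤ l)
  have hn1 : (n:ℝ) - 1 ≠ 0 := by linarith
  have hn2 : (n:ℝ) - 2 ≠ 0 := by linarith
  have hl0 : (l:ℝ) ≠ 0 := by linarith
  have hlm1 : (l:ℝ) - 1 ≠ 0 := by linarith
  have hlp1 : (l:ℝ) + 1 ≠ 0 := by linarith
  have hl11 : (l:ℝ) + 1 - 1 ≠ 0 := by simpa using hl0
  push_cast
  field_simp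
  ring
end

section
/- In Kingman's n-coalescent, the total external branch length L_n := Σ_{i=1}^n T_{ρ(i)} has expectation E(L_n) = 2 for every n ≥ 2. -/
open MeasureTheory ProbabilityTheory

/-- Finite sets carry the discrete measurable structure. -/
instance finsetMeasurableSpace (α : Type*) : MeasurableSpace (Finset α) := ⊤


open MeasureTheory ProbabilityTheory Real Set Finset
open scoped ENNReal NNReal


open MeasureTheory ProbabilityTheory Real Set
open scoped ENNReal NNReal

lemma exp_pdf_integrand : (fun x : ℝ => (gammaPDFReal 1 1 x).toNNReal • x)
    = Set.indicator (Ici (0:ℝ)) (fun x => x * Real.exp (-x)) := by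
  ext x
  simp only [gammaPDFReal, NNReal.smul_def, smul_eq_mul, Set.indicator_apply, Set.mem_Ici]
  by_cases h : 0 ≤ x
  · rw [if_pos h, if_pos h, Real.coe_toNNReal]
    · simp [Real.Gamma_one]; ring
    · simp [Real.Gamma_one]; positivity
  · rw [if_neg h, if_neg h]; simp

lemma gammaPDF_eq_coe : gammaPDF 1 1
    = fun x => ((gammaPDFReal 1 1 x).toNNReal : ℝ≥0∞) := by
  ext x; rw [gammaPDF, ENNReal.ofReal]

lemma integrable_exp_mean : Integrable (fun x => x) (expMeasure 1) := by
  rw [expMeasure, gammaMeasure]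
  have hmeas : Measurable fun x : ℝ => (gammaPDFReal 1 1 x).toNNReal :=
    (measurable_gammaPDFReal 1 1).real_toNNReal
  rw [gammaPDF_eq_coe, integrable_withDensity_iff_integrable_smul hmeas]
  rw [exp_pdf_integrand, integrable_indicator_iff measurableSet_Ici]
  have h2 : IntegrableOn (fun x : ℝ => Real.exp (-x) * x ^ ((2:ℝ) - 1)) (Ioi 0) :=
    Real.GammaIntegral_convergent (by norm_num)
  have : IntegrableOn (fun x : ℝ => x * Real.exp (-x)) (Ioi 0) := by
    refine h2.congr_fun ?_ measurableSet_Ioi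
    intro x hx
    simp only [show (2:ℝ) - 1 = 1 by norm_num, Real.rpow_one]
    ring
  rwa [integrableOn_Ici_iff_integrableOn_Ioi]

lemma exp_mean_one : ∫ x, x ∂(expMeasure 1) = 1 := by
  rw [expMeasure, gammaMeasure]
  have hmeas : Measurable fun x : ℝ => (gammaPDFReal 1 1 x).toNNReal :=
    (measurable_gammaPDFReal 1 1).real_toNNReal
  rw [gammaPDF_eq_coe, integral_withDensity_eq_integral_smul hmeas]
  rw [exp_pdf_integrand, integral_indicator measurableSet_Ici,
    integral_Ici_eq_integral_Ioi]
  have := Real.Gamma_eq_integral (by norm_num : (0:ℝ) < 2)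
  have h3 : Real.Gamma 2 = 1 := by
    rw [show (2:ℝ) = 1 + 1 by norm_num, Real.Gamma_add_one (by norm_num), Real.Gamma_one]; norm_num
  rw [h3] at this
  rw [this]
  apply setIntegral_congr_fun measurableSet_Ioi
  intro x hx
  simp only [show (2:ℝ) - 1 = 1 by norm_num, Real.rpow_one]
  ring

variable {n : ℕ}

/-- merge two blocks -/
def mrg {n : ℕ} (p : Finset (Finset (Fin n))) (q1 q2 : Finset (Fin n)) : Finset (Finset (Fin n)) :=
  insert (q1 ∪ q2) ((p.erase q1).erase q2)

/-- goodness invariant: partition into k nonempty blocks -/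
def good (n k : ℕ) (p : Finset (Finset (Fin n))) : Prop :=
  p.card = k ∧ (∀ B ∈ p, B.Nonempty) ∧ p.sup id = Finset.univ ∧
    (↑p : Set (Finset (Fin n))).Pairwise (fun a b => Disjoint a b)

/-- number of singleton blocks -/
def sig {n : ℕ} (p : Finset (Finset (Fin n))) : ℕ := (p.filter (fun B => B.card = 1)).card

lemma mrg_union_not_mem {p : Finset (Finset (Fin n))} {k : ℕ} (hg : good n k p)
    {q1 q2 : Finset (Fin n)} (h1 : q1 ∈ p) (h2 : q2 ∈ p) (hne : q1 ≠ q2) :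
    q1 ∪ q2 ∉ (p.erase q1).erase q2 := by
  intro hB
  have hBp : q1 ∪ q2 ∈ p := mem_of_mem_erase (mem_of_mem_erase hB)
  have hBne1 : q1 ∪ q2 ≠ q1 := ne_of_mem_erase (mem_of_mem_erase hB)
  have hdisj : Disjoint q1 (q1 ∪ q2) := hg.2.2.2 h1 hBp (fun h => hBne1 h.symm)
  have : Disjoint q1 q1 := hdisj.mono_right subset_union_left
  rw [disjoint_self] at this
  exact (hg.2.1 q1 h1).ne_empty this

lemma card_union_ge_two {p : Finset (Finset (Fin n))} {k : ℕ} (hg : good n k p)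
    {q1 q2 : Finset (Fin n)} (h1 : q1 ∈ p) (h2 : q2 ∈ p) (hne : q1 ≠ q2) :
    2 ≤ (q1 ∪ q2).card := by
  have hd : Disjoint q1 q2 := hg.2.2.2 h1 h2 hne
  rw [card_union_of_disjoint hd]
  have := (hg.2.1 q1 h1).card_pos
  have := (hg.2.1 q2 h2).card_pos
  omega

lemma good_mrg {p : Finset (Finset (Fin n))} {k : ℕ} (hg : good n k p)
    {q1 q2 : Finset (Fin n)} (h1 : q1 ∈ p) (h2 : q2 ∈ p) (hne : q1 ≠ q2) :
    good n (k - 1) (mrg p q1 q2) := by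
  obtain ⟨hcard, hne', hsup, hdisj⟩ := hg
  have h2' : q2 ∈ p.erase q1 := mem_erase.2 ⟨hne.symm, h2⟩
  have hnotmem := mrg_union_not_mem ⟨hcard, hne', hsup, hdisj⟩ h1 h2 hne
  refine ⟨?_, ?_, ?_, ?_⟩
  · rw [mrg, card_insert_of_notMem hnotmem, card_erase_of_mem h2', card_erase_of_mem h1]
    have : 2 ≤ p.card := by
      have := one_lt_card.2 ⟨q1, h1, q2, h2, hne⟩; omega
    omega
  · intro B hB
    rcases mem_insert.1 hB with rfl | hB
    · exact (hne' q1 h1).mono subset_union_left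
    · exact hne' B (mem_of_mem_erase (mem_of_mem_erase hB))
  · apply le_antisymm
    · exact Finset.subset_univ _
    · rw [← hsup]
      apply Finset.sup_le
      intro B hB
      have hmem : q1 ∪ q2 ∈ mrg p q1 q2 := mem_insert_self _ _
      have hsup' : (q1 ∪ q2 : Finset (Fin n)) ≤ (mrg p q1 q2).sup id := Finset.le_sup (f := id) hmem
      by_cases hB1 : B = q1
      · subst hB1
        exact le_trans (subset_union_left) hsup'
      by_cases hB2 : B = q2
      · subst hB2
        exact le_trans (subset_union_right) hsup'
      · exact Finset.le_sup (f := id) (mem_insert_of_mem (mem_erase.2 ⟨hB2, mem_erase.2 ⟨hB1, hB⟩⟩))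
  · intro a ha b hb hab
    simp only [mrg, coe_insert, Set.mem_insert_iff, mem_coe] at ha hb
    have key : ∀ B, B ∈ (p.erase q1).erase q2 → Disjoint (q1 ∪ q2) B := by
      intro B hB
      have hBp := mem_of_mem_erase (mem_of_mem_erase hB)
      have hB1 : B ≠ q1 := ne_of_mem_erase (mem_of_mem_erase hB)
      have hB2 : B ≠ q2 := ne_of_mem_erase hB
      exact disjoint_union_left.2 ⟨hdisj h1 hBp (Ne.symm hB1), hdisj h2 hBp (Ne.symm hB2)⟩
    rcases ha with rfl | ha <;> rcases hb with rfl | hb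
    · exact absurd rfl hab
    · exact key b hb
    · exact (key a ha).symm
    · exact hdisj (mem_of_mem_erase (mem_of_mem_erase ha))
        (mem_of_mem_erase (mem_of_mem_erase hb)) hab

example : True := trivial

lemma erase_erase_card_cast {s : Finset (Finset (Fin n))} {q1 q2 : Finset (Fin n)}
    (hne : q1 ≠ q2) :
    (((s.erase q1).erase q2).card : ℝ)
      = (s.card : ℝ) - (if q1 ∈ s then 1 else 0) - (if q2 ∈ s then 1 else 0) := by
  by_cases m1 : q1 ∈ s <;> by_cases m2 : q2 ∈ s
  · have m2' : q2 ∈ s.erase q1 := mem_erase.2 ⟨hne.symm, m2⟩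
    rw [card_erase_of_mem m2', card_erase_of_mem m1, if_pos m1, if_pos m2]
    have : 2 ≤ s.card := one_lt_card.2 ⟨q1, m1, q2, m2, hne⟩
    rw [Nat.cast_sub (by omega), Nat.cast_sub (by omega)]
    norm_num
  · have m2' : q2 ∉ s.erase q1 := fun h => m2 (mem_of_mem_erase h)
    rw [erase_eq_of_notMem m2', card_erase_of_mem m1, if_pos m1, if_neg m2]
    have : 1 ≤ s.card := card_pos.2 ⟨q1, m1⟩
    rw [Nat.cast_sub (by omega)]
    norm_num
  · have m2' : q2 ∈ s.erase q1 := mem_erase.2 ⟨hne.symm, m2⟩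
    rw [erase_eq_of_notMem m1, card_erase_of_mem m2, if_neg m1, if_pos m2]
    have : 1 ≤ s.card := card_pos.2 ⟨q2, m2⟩
    rw [Nat.cast_sub (by omega)]
    norm_num
  · have m2' : q2 ∉ s.erase q1 := fun h => m2 (mem_of_mem_erase h)
    rw [erase_eq_of_notMem m2', erase_eq_of_notMem m1, if_neg m1, if_neg m2]
    norm_num

lemma sig_mrg {p : Finset (Finset (Fin n))} {k : ℕ} (hg : good n k p)
    {q1 q2 : Finset (Fin n)} (h1 : q1 ∈ p) (h2 : q2 ∈ p) (hne : q1 ≠ q2) :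
    (sig (mrg p q1 q2) : ℝ) = (sig p : ℝ) - (if q1.card = 1 then 1 else 0)
      - (if q2.card = 1 then 1 else 0) := by
  have hcard2 := card_union_ge_two hg h1 h2 hne
  have hpred : ¬ (q1 ∪ q2).card = 1 := by omega
  rw [sig, mrg, filter_insert, if_neg hpred, filter_erase, filter_erase,
    erase_erase_card_cast hne, sig]
  have e1 : (if q1 ∈ p.filter (fun B => B.card = 1) then (1:ℝ) else 0)
      = (if q1.card = 1 then (1:ℝ) else 0) := by
    by_cases c1 : q1.card = 1
    · rw [if_pos c1, if_pos (show q1 ∈ p.filter (fun B => B.card = 1) from mem_filter.2 ⟨h1, c1⟩)]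
    · rw [if_neg c1, if_neg (show ¬ q1 ∈ p.filter (fun B => B.card = 1) from fun h => c1 (mem_filter.1 h).2)]
  have e2 : (if q2 ∈ p.filter (fun B => B.card = 1) then (1:ℝ) else 0)
      = (if q2.card = 1 then (1:ℝ) else 0) := by
    by_cases c2 : q2.card = 1
    · rw [if_pos c2, if_pos (show q2 ∈ p.filter (fun B => B.card = 1) from mem_filter.2 ⟨h2, c2⟩)]
    · rw [if_neg c2, if_neg (show ¬ q2 ∈ p.filter (fun B => B.card = 1) from fun h => c2 (mem_filter.1 h).2)]
  rw [e1, e2]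

lemma mergeProb_eq (k : ℕ) (p p' : Finset (Finset (Fin n))) :
    mergeProb n k p p' =
      ((((p ×ˢ p).filter (fun q => q.1 ≠ q.2 ∧ p' = mrg p q.1 q.2)).card : ℝ))
        / ((k : ℝ) * ((k : ℝ) - 1)) := by
  rw [mergeProb]
  congr 2
  rw [Nat.card_eq_fintype_card, Fintype.card_subtype]
  congr 1
  ext q
  rw [Finset.mem_filter, Finset.mem_filter]
  simp [Finset.mem_product, mrg, and_assoc]

lemma mergeProb_eq_zero_of_bad {k : ℕ} {p p' : Finset (Finset (Fin n))} (hg : good n k p)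
    (hbad : ¬ good n (k - 1) p') : mergeProb n k p p' = 0 := by
  rw [mergeProb_eq]
  have h : ((p ×ˢ p).filter (fun q => q.1 ≠ q.2 ∧ p' = mrg p q.1 q.2)) = ∅ := by
    rw [filter_eq_empty_iff]
    rintro q hq ⟨hne, rfl⟩
    rw [Finset.mem_product] at hq
    exact hbad (good_mrg hg hq.1 hq.2 hne)
  rw [h]
  simp

lemma sum_sig_mergeProb {k : ℕ} {p : Finset (Finset (Fin n))} (hk : 2 ≤ k) (hg : good n k p) :
    ∑ p' : Finset (Finset (Fin n)), (sig p' : ℝ) * mergeProb n k p p'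
      = ((k : ℝ) - 2) / (k : ℝ) * (sig p : ℝ) := by
  set S := (p ×ˢ p).filter (fun q => q.1 ≠ q.2) with hS
  have hia : ∑ a ∈ p, (if a.card = 1 then (1:ℝ) else 0) = (sig p : ℝ) := by
    rw [Finset.sum_boole, sig]
  have herase : ∀ a ∈ p, ∑ b ∈ p.erase a, (if b.card = 1 then (1:ℝ) else 0)
      = (sig p : ℝ) - (if a.card = 1 then 1 else 0) := by
    intro a ha
    rw [Finset.sum_erase_eq_sub ha, hia]
  have hsum : ∑ p' : Finset (Finset (Fin n)), (sig p' : ℝ)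
        * ((((p ×ˢ p).filter (fun q => q.1 ≠ q.2 ∧ p' = mrg p q.1 q.2)).card : ℝ))
      = ∑ q ∈ S, (sig (mrg p q.1 q.2) : ℝ) := by
    have hfib := Finset.sum_fiberwise_of_maps_to (t := (Finset.univ : Finset (Finset (Finset (Fin n)))))
      (g := fun q : Finset (Fin n) × Finset (Fin n) => mrg p q.1 q.2)
      (fun q (_ : q ∈ S) => Finset.mem_univ _) (fun q => (sig (mrg p q.1 q.2) : ℝ))
    rw [← hfib]
    refine Finset.sum_congr rfl fun p' _ => ?_
    have hset : S.filter (fun q => mrg p q.1 q.2 = p')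
        = (p ×ˢ p).filter (fun q => q.1 ≠ q.2 ∧ p' = mrg p q.1 q.2) := by
      rw [hS, filter_filter]
      apply filter_congr
      intro q _
      simp [eq_comm]
    have : ∑ q ∈ S.filter (fun q => mrg p q.1 q.2 = p'), (sig (mrg p q.1 q.2) : ℝ)
        = ∑ q ∈ S.filter (fun q => mrg p q.1 q.2 = p'), (sig p' : ℝ) := by
      refine Finset.sum_congr rfl fun q hq => ?_
      rw [(Finset.mem_filter.1 hq).2]
    rw [this, Finset.sum_const, hset, nsmul_eq_mul, mul_comm]
  have key : ∑ q ∈ S, (sig (mrg p q.1 q.2) : ℝ)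
      = ((k : ℝ) - 2) * ((k : ℝ) - 1) * (sig p : ℝ) := by
    have expand : ∀ q ∈ S, (sig (mrg p q.1 q.2) : ℝ)
        = (sig p : ℝ) - (if q.1.card = 1 then 1 else 0) - (if q.2.card = 1 then 1 else 0) := by
      intro q hq
      rw [hS, Finset.mem_filter, Finset.mem_product] at hq
      exact sig_mrg hg hq.1.1 hq.1.2 hq.2
    rw [Finset.sum_congr rfl expand, hS, Finset.sum_filter, Finset.sum_product]
    have hinner : ∀ a ∈ p, (∑ b ∈ p, if (a, b).1 ≠ (a, b).2 then ((sig p : ℝ)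
          - (if (a, b).1.card = 1 then 1 else 0) - (if (a, b).2.card = 1 then 1 else 0)) else 0)
        = ((k : ℝ) - 1) * ((sig p : ℝ) - (if a.card = 1 then 1 else 0))
          - ((sig p : ℝ) - (if a.card = 1 then 1 else 0)) := by
      intro a ha
      rw [← Finset.sum_filter]
      have : p.filter (fun b => (a, b).1 ≠ (a, b).2) = p.erase a := by
        ext b
        simp [mem_erase, and_comm, ne_comm, eq_comm]
      rw [this]
      have hcard : (p.erase a).card = k - 1 := by rw [card_erase_of_mem ha, hg.1]
      have hcastk : ((k - 1 : ℕ) : ℝ) = (k : ℝ) - 1 := by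
        rw [Nat.cast_sub (by omega)]; norm_num
      calc ∑ b ∈ p.erase a, ((sig p : ℝ) - (if a.card = 1 then 1 else 0)
              - (if b.card = 1 then 1 else 0))
          = ∑ b ∈ p.erase a, ((sig p : ℝ) - (if a.card = 1 then 1 else 0))
            - ∑ b ∈ p.erase a, (if b.card = 1 then (1:ℝ) else 0) := by
            rw [← Finset.sum_sub_distrib]
        _ = ((k : ℝ) - 1) * ((sig p : ℝ) - (if a.card = 1 then 1 else 0))
            - ((sig p : ℝ) - (if a.card = 1 then 1 else 0)) := by
            rw [Finset.sum_const, hcard, herase a ha, nsmul_eq_mul, hcastk]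
    rw [Finset.sum_congr rfl hinner, Finset.sum_sub_distrib, Finset.sum_sub_distrib,
      ← Finset.mul_sum, Finset.sum_sub_distrib, Finset.sum_const, hg.1, hia, nsmul_eq_mul]
    ring
  rw [Finset.sum_congr rfl (fun p' _ => by rw [mergeProb_eq, mul_div_assoc']),
    ← Finset.sum_div, hsum, key]
  have hk0 : (k : ℝ) ≠ 0 := by positivity
  have hk1 : (k : ℝ) - 1 ≠ 0 := by
    have : (2 : ℝ) ≤ (k : ℝ) := by exact_mod_cast hk
    nlinarith
  field_simp

section Measure
open scoped ENNReal

variable {Ω : Type*} [MeasurableSpace Ω]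

lemma measurable_of_finset_top {α β : Type*} [MeasurableSpace β]
    (f : Finset α → β) : Measurable f := measurable_from_top

end Measure

section Cyl
open scoped ENNReal

variable {Ω : Type*} [MeasurableSpace Ω] {n : ℕ}

/-- extend a history tuple to a function on ℕ -/
def extt {n : ℕ} (t : Fin (n + 1) → Finset (Finset (Fin n))) : ℕ → Finset (Finset (Fin n)) :=
  fun j => if h : j ≤ n then t ⟨j, Nat.lt_succ_of_le h⟩ else ∅

/-- cylinder event determined by history from level k up to n -/
def cyl (P : ℕ → Ω → Finset (Finset (Fin n))) (k : ℕ)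
    (t : Fin (n + 1) → Finset (Finset (Fin n))) : Set Ω :=
  {ω | ∀ j, k ≤ j → j ≤ n → P j ω = extt t j}

/-- index set of canonical histories -/
noncomputable def hist (n k : ℕ) : Finset (Fin (n + 1) → Finset (Finset (Fin n))) := by
  classical
  exact Finset.univ.filter (fun t => ∀ j : Fin (n + 1), ((j : ℕ) < k ∨ n < (j : ℕ)) → t j = ∅)

/-- the canonical history of a sample point -/
def canon (P : ℕ → Ω → Finset (Finset (Fin n))) (k : ℕ) (ω : Ω) :
    Fin (n + 1) → Finset (Finset (Fin n)) :=
  fun j => if k ≤ (j : ℕ) ∧ (j : ℕ) ≤ n then P j ω else ∅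

variable {P : ℕ → Ω → Finset (Finset (Fin n))}

lemma canon_mem_hist (k : ℕ) (ω : Ω) : canon P k ω ∈ hist n k := by
  classical
  simp only [hist, Finset.mem_filter, Finset.mem_univ, true_and]
  intro j hj
  rw [canon, if_neg]
  omega

lemma extt_canon {k m : ℕ} (hk : k ≤ m) (hm : m ≤ n) (ω : Ω) :
    extt (canon P k ω) m = P m ω := by
  rw [extt, dif_pos hm, canon, if_pos]
  exact ⟨hk, hm⟩

lemma mem_cyl_canon (k : ℕ) (ω : Ω) : ω ∈ cyl P k (canon P k ω) := by
  intro j hj hj'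
  rw [extt_canon hj hj']

lemma eq_canon_of_mem_cyl {k : ℕ} {t : Fin (n + 1) → Finset (Finset (Fin n))}
    (ht : t ∈ hist n k) {ω : Ω} (hω : ω ∈ cyl P k t) : t = canon P k ω := by
  classical
  simp only [hist, Finset.mem_filter, Finset.mem_univ, true_and] at ht
  funext j
  by_cases hj : k ≤ (j : ℕ) ∧ (j : ℕ) ≤ n
  · rw [canon, if_pos hj]
    have := hω (j : ℕ) hj.1 hj.2
    rw [extt, dif_pos hj.2] at this
    rw [← this]
  · rw [canon, if_neg hj, ht j (by omega)]

lemma measurable_cyl (hP1 : ∀ k p, MeasurableSet {ω | P k ω = p}) (k : ℕ)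
    (t : Fin (n + 1) → Finset (Finset (Fin n))) : MeasurableSet (cyl P k t) := by
  have : cyl P k t = ⋂ (j : ℕ), ⋂ (_ : k ≤ j), ⋂ (_ : j ≤ n), {ω | P j ω = extt t j} := by
    ext ω; simp [cyl, Set.mem_iInter]
  rw [this]
  exact MeasurableSet.iInter fun j => MeasurableSet.iInter fun _ =>
    MeasurableSet.iInter fun _ => hP1 j _

lemma cyl_disjoint {k : ℕ} {t t' : Fin (n + 1) → Finset (Finset (Fin n))}
    (ht : t ∈ hist n k) (ht' : t' ∈ hist n k) (hne : t ≠ t') :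
    Disjoint (cyl P k t) (cyl P k t') := by
  rw [Set.disjoint_left]
  intro ω h1 h2
  exact hne ((eq_canon_of_mem_cyl ht h1).trans (eq_canon_of_mem_cyl ht' h2).symm)

lemma measure_decomp (μ : Measure Ω) (hP1 : ∀ k p, MeasurableSet {ω | P k ω = p})
    (k : ℕ) {s : Set Ω} (hs : MeasurableSet s) :
    μ s = ∑ t ∈ hist n k, μ (s ∩ cyl P k t) := by
  have hcover : s = ⋃ t ∈ hist n k, (s ∩ cyl P k t) := by
    ext ω
    simp only [Set.mem_iUnion, Set.mem_inter_iff]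
    constructor
    · intro hω
      exact ⟨canon P k ω, canon_mem_hist k ω, hω, mem_cyl_canon k ω⟩
    · rintro ⟨t, _, hω, _⟩
      exact hω
  conv_lhs => rw [hcover]
  rw [measure_biUnion_finset]
  · intro t ht t' ht' hne
    exact (cyl_disjoint ht ht' hne).mono Set.inter_subset_right Set.inter_subset_right
  · intro t _
    exact hs.inter (measurable_cyl hP1 k t)

lemma integral_comp_P (μ : Measure Ω) [IsProbabilityMeasure μ]
    (hP1 : ∀ k p, MeasurableSet {ω | P k ω = p}) {k m : ℕ} (hk : k ≤ m) (hm : m ≤ n)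
    (f : Finset (Finset (Fin n)) → ℝ) :
    ∫ ω, f (P m ω) ∂μ = ∑ t ∈ hist n k, (μ (cyl P k t)).toReal * f (extt t m) := by
  have hrw : (fun ω => f (P m ω)) = fun ω =>
      ∑ t ∈ hist n k, Set.indicator (cyl P k t) (fun _ => f (extt t m)) ω := by
    funext ω
    rw [Finset.sum_eq_single_of_mem (canon P k ω) (canon_mem_hist k ω)]
    · rw [Set.indicator_of_mem (mem_cyl_canon k ω), extt_canon hk hm]
    · intro t ht hne
      apply Set.indicator_of_notMem
      intro hω
      exact hne (eq_canon_of_mem_cyl ht hω)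
  rw [hrw, integral_finset_sum]
  · refine Finset.sum_congr rfl fun t _ => ?_
    rw [integral_indicator_const _ (measurable_cyl hP1 k t)]
    simp [mul_comm, Measure.real]
  · intro t _
    exact (integrable_const _).indicator (measurable_cyl hP1 k t)

lemma integral_comp_P' (μ : Measure Ω) [IsProbabilityMeasure μ]
    (hP1 : ∀ k p, MeasurableSet {ω | P k ω = p}) (m : ℕ)
    (f : Finset (Finset (Fin n)) → ℝ) :
    ∫ ω, f (P m ω) ∂μ
      = ∑ p : Finset (Finset (Fin n)), f p * (μ {ω | P m ω = p}).toReal := by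
  have hrw : (fun ω => f (P m ω)) = fun ω =>
      ∑ p : Finset (Finset (Fin n)),
        Set.indicator {ω | P m ω = p} (fun _ => f p) ω := by
    funext ω
    rw [Finset.sum_eq_single_of_mem (P m ω) (Finset.mem_univ _)]
    · rw [Set.indicator_of_mem (by exact rfl)]
    · intro p _ hne
      apply Set.indicator_of_notMem
      exact fun h => hne (Eq.symm h)
  rw [hrw, integral_finset_sum]
  · refine Finset.sum_congr rfl fun p _ => ?_
    rw [integral_indicator_const _ (hP1 m p)]
    simp [mul_comm, Measure.real]
  · intro p _
    exact (integrable_const _).indicator (hP1 m p)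

end Cyl

section Markov
open scoped ENNReal

variable {Ω : Type*} [MeasurableSpace Ω] {n : ℕ} {P : ℕ → Ω → Finset (Finset (Fin n))}
  {μ : Measure Ω} [IsProbabilityMeasure μ]

lemma markov_step (hP : IsKingmanPartition n μ P) {k : ℕ} (hk2 : 2 ≤ k) (hkn : k ≤ n)
    (t : Fin (n + 1) → Finset (Finset (Fin n))) (p' : Finset (Finset (Fin n))) :
    (μ (cyl P k t ∩ {ω | P (k - 1) ω = p'})).toReal
      = (μ (cyl P k t)).toReal * mergeProb n k (extt t k) p' :=
  hP.2.2 k hk2 hkn (extt t) p'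

/-- the partition into singletons -/
def pi0 (n : ℕ) : Finset (Finset (Fin n)) := Finset.univ.image (fun i : Fin n => {i})

lemma good_pi0 (hn : 2 ≤ n) : good n n (pi0 n) := by
  refine ⟨?_, ?_, ?_, ?_⟩
  · rw [pi0, Finset.card_image_of_injective _ (fun a b h => Finset.singleton_injective h),
      Finset.card_univ, Fintype.card_fin]
  · intro B hB
    rw [pi0, Finset.mem_image] at hB
    obtain ⟨i, _, rfl⟩ := hB
    exact Finset.singleton_nonempty i
  · apply Finset.Subset.antisymm (Finset.subset_univ _)
    intro x _
    rw [Finset.mem_sup]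
    exact ⟨{x}, Finset.mem_image.2 ⟨x, Finset.mem_univ x, rfl⟩, Finset.mem_singleton_self x⟩
  · intro a ha b hb hab
    simp only [pi0, Finset.coe_image, Set.mem_image] at ha hb
    obtain ⟨i, _, rfl⟩ := ha
    obtain ⟨j, _, rfl⟩ := hb
    simp only [Finset.disjoint_singleton, ne_eq]
    intro h
    exact hab (by rw [h])

lemma good_as (hn : 2 ≤ n) (hP : IsKingmanPartition n μ P) :
    ∀ d, d ≤ n - 1 → ∀ p, ¬ good n (n - d) p → μ {ω | P (n - d) ω = p} = 0 := by
  intro d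
  induction d with
  | zero =>
    intro _ p hbad
    simp only [Nat.sub_zero] at hbad ⊢
    have hne : p ≠ pi0 n := fun h => hbad (h ▸ good_pi0 hn)
    have h0 : μ {ω | ¬ P n ω = pi0 n} = 0 := by
      have := hP.2.1
      rw [MeasureTheory.ae_iff] at this
      exact this
    refine measure_mono_null ?_ h0
    intro ω hω
    simp only [Set.mem_setOf_eq] at *
    rw [hω]
    exact hne
  | succ d ih =>
    intro hd p' hbad
    have hd' : d ≤ n - 1 := by omega
    set k := n - d with hk
    have hk2 : 2 ≤ k := by omega
    have hkn : k ≤ n := by omega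
    have hlevel : n - (d + 1) = k - 1 := by omega
    rw [hlevel] at hbad ⊢
    have hdec := measure_decomp μ hP.1 k (hP.1 (k - 1) p') (s := {ω | P (k - 1) ω = p'})
    rw [hdec]
    rw [Finset.sum_eq_zero]
    intro t ht
    by_cases h0 : μ (cyl P k t) = 0
    · exact measure_mono_null Set.inter_subset_right h0
    · have hgood : good n k (extt t k) := by
        by_contra hbad'
        apply h0
        have hsub : cyl P k t ⊆ {ω | P k ω = extt t k} := fun ω hω => hω k le_rfl hkn
        exact measure_mono_null hsub (ih hd' (extt t k) hbad')
      have hmp : mergeProb n k (extt t k) p' = 0 := mergeProb_eq_zero_of_bad hgood hbad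
      have := markov_step hP hk2 hkn t p'
      rw [hmp, mul_zero] at this
      rw [Set.inter_comm] at this
      have hfin : μ ({ω | P (k - 1) ω = p'} ∩ cyl P k t) ≠ ⊤ := measure_ne_top μ _
      exact (ENNReal.toReal_eq_zero_iff _).1 this |>.resolve_right hfin

lemma good_as' (hn : 2 ≤ n) (hP : IsKingmanPartition n μ P) :
    ∀ k, 1 ≤ k → k ≤ n → ∀ p, ¬ good n k p → μ {ω | P k ω = p} = 0 := by
  intro k h1 h2 p hbad
  have := good_as hn hP (n - k) (by omega) p
  rw [Nat.sub_sub_self h2] at this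
  exact this hbad

lemma int_sig_step (hn : 2 ≤ n) (hP : IsKingmanPartition n μ P) {k : ℕ}
    (hk2 : 2 ≤ k) (hkn : k ≤ n) :
    ∫ ω, (sig (P (k - 1) ω) : ℝ) ∂μ = ((k : ℝ) - 2) / (k : ℝ) * ∫ ω, (sig (P k ω) : ℝ) ∂μ := by
  have h1 : ∀ p', (μ {ω | P (k - 1) ω = p'}).toReal
      = ∑ t ∈ hist n k, (μ (cyl P k t)).toReal * mergeProb n k (extt t k) p' := by
    intro p'
    rw [measure_decomp μ hP.1 k (hP.1 (k - 1) p'),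
      ENNReal.toReal_sum (fun t _ => measure_ne_top μ _)]
    refine Finset.sum_congr rfl fun t _ => ?_
    rw [Set.inter_comm]
    exact markov_step hP hk2 hkn t p'
  rw [integral_comp_P' μ hP.1 (k - 1) (fun p => (sig p : ℝ))]
  calc ∑ p' : Finset (Finset (Fin n)), (sig p' : ℝ) * (μ {ω | P (k - 1) ω = p'}).toReal
      = ∑ p' : Finset (Finset (Fin n)), ∑ t ∈ hist n k,
          (μ (cyl P k t)).toReal * ((sig p' : ℝ) * mergeProb n k (extt t k) p') := by
        refine Finset.sum_congr rfl fun p' _ => ?_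
        rw [h1, Finset.mul_sum]
        refine Finset.sum_congr rfl fun t _ => by ring
    _ = ∑ t ∈ hist n k, (μ (cyl P k t)).toReal
          * ∑ p' : Finset (Finset (Fin n)), (sig p' : ℝ) * mergeProb n k (extt t k) p' := by
        rw [Finset.sum_comm]
        exact Finset.sum_congr rfl fun t _ => by rw [Finset.mul_sum]
    _ = ∑ t ∈ hist n k, (μ (cyl P k t)).toReal
          * (((k : ℝ) - 2) / (k : ℝ) * (sig (extt t k) : ℝ)) := by
        refine Finset.sum_congr rfl fun t ht => ?_
        by_cases h0 : μ (cyl P k t) = 0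
        · rw [h0]; simp
        · congr 1
          have hgood : good n k (extt t k) := by
            by_contra hbad'
            apply h0
            have hsub : cyl P k t ⊆ {ω | P k ω = extt t k} := fun ω hω => hω k le_rfl hkn
            exact measure_mono_null hsub (good_as' hn hP k (by omega) hkn _ hbad')
          exact sum_sig_mergeProb hk2 hgood
    _ = ((k : ℝ) - 2) / (k : ℝ) * ∫ ω, (sig (P k ω) : ℝ) ∂μ := by
        rw [integral_comp_P μ hP.1 le_rfl hkn (fun p => (sig p : ℝ)), Finset.mul_sum]
        exact Finset.sum_congr rfl fun t _ => by ring

lemma sig_pi0 (n : ℕ) : sig (pi0 n) = n := by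
  rw [sig, pi0]
  rw [Finset.filter_true_of_mem]
  · rw [Finset.card_image_of_injective _ (fun a b h => Finset.singleton_injective h),
      Finset.card_univ, Fintype.card_fin]
  · intro B hB
    rw [Finset.mem_image] at hB
    obtain ⟨i, _, rfl⟩ := hB
    exact Finset.card_singleton i

lemma int_sig (hn : 2 ≤ n) (hP : IsKingmanPartition n μ P) :
    ∀ d, d ≤ n - 1 → ∫ ω, (sig (P (n - d) ω) : ℝ) ∂μ
      = ((n - d : ℕ) : ℝ) * (((n - d : ℕ) : ℝ) - 1) / ((n : ℝ) - 1) := by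
  have hn1 : (n : ℝ) - 1 ≠ 0 := by
    have : (2 : ℝ) ≤ (n : ℝ) := by exact_mod_cast hn
    nlinarith
  intro d
  induction d with
  | zero =>
    intro _
    simp only [Nat.sub_zero]
    have hae : (fun ω => (sig (P n ω) : ℝ)) =ᵐ[μ] fun _ => (n : ℝ) := by
      filter_upwards [hP.2.1] with ω hω
      rw [hω, ← pi0, sig_pi0]
    rw [integral_congr_ae hae, integral_const, probReal_univ, one_smul]
    field_simp
  | succ d ih =>
    intro hd
    have hd' : d ≤ n - 1 := by omega
    set k := n - d with hk
    have hk2 : 2 ≤ k := by omega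
    have hlevel : n - (d + 1) = k - 1 := by omega
    rw [hlevel, int_sig_step hn hP hk2 (by omega), ih hd']
    have hc1 : ((k - 1 : ℕ) : ℝ) = (k : ℝ) - 1 := by
      rw [Nat.cast_sub (by omega)]; norm_num
    rw [hc1]
    have hk0 : (k : ℝ) ≠ 0 := by positivity
    field_simp
    ring

lemma int_sig' (hn : 2 ≤ n) (hP : IsKingmanPartition n μ P) {m : ℕ}
    (h1 : 1 ≤ m) (h2 : m ≤ n) :
    ∫ ω, (sig (P m ω) : ℝ) ∂μ = (m : ℝ) * ((m : ℝ) - 1) / ((n : ℝ) - 1) := by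
  have := int_sig hn hP (n - m) (by omega)
  rw [Nat.sub_sub_self h2] at this
  exact this

end Markov

section Pathwise

variable {Ω : Type*} {n : ℕ} {P : ℕ → Ω → Finset (Finset (Fin n))} {ω : Ω}

lemma singleton_mono (hgood : ∀ k, 1 ≤ k → k ≤ n → good n k (P k ω))
    (hmerge : ∀ k, 2 ≤ k → k ≤ n → ∃ q1 q2, q1 ∈ P k ω ∧ q2 ∈ P k ω ∧ q1 ≠ q2
      ∧ P (k - 1) ω = mrg (P k ω) q1 q2)
    {a b : ℕ} (ha : 1 ≤ a) (hab : a ≤ b) (hb : b ≤ n) {i : Fin n}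
    (hmem : {i} ∈ P a ω) : {i} ∈ P b ω := by
  induction b, hab using Nat.le_induction with
  | base => exact hmem
  | succ b hab ih =>
    have hb' : b ≤ n := by omega
    have h2 : 2 ≤ b + 1 := by omega
    obtain ⟨q1, q2, h1, hq2, hne, heq⟩ := hmerge (b + 1) h2 hb
    have hmem_b : {i} ∈ P b ω := ih hb'
    have : {i} ∈ P ((b + 1) - 1) ω := by simpa using hmem_b
    rw [heq, mrg, Finset.mem_insert] at this
    rcases this with h | h
    · exfalso
      have := card_union_ge_two (hgood (b + 1) (by omega) hb) h1 hq2 hne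
      rw [← h, Finset.card_singleton] at this
      omega
    · exact Finset.mem_of_mem_erase (Finset.mem_of_mem_erase h)

lemma not_mem_P1 (hn : 2 ≤ n) (hgood : ∀ k, 1 ≤ k → k ≤ n → good n k (P k ω)) (i : Fin n) :
    {i} ∉ P 1 ω := by
  obtain ⟨hcard, _, hsup, _⟩ := hgood 1 le_rfl (by omega)
  obtain ⟨B, hB⟩ := Finset.card_eq_one.1 hcard
  rw [hB]
  rw [hB, Finset.sup_singleton] at hsup
  simp only [id] at hsup
  intro hmem
  rw [Finset.mem_singleton] at hmem
  have : ({i} : Finset (Fin n)).card = n := by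
    rw [hmem, hsup, Finset.card_univ, Fintype.card_fin]
  rw [Finset.card_singleton] at this
  omega

lemma sum_ite_singleton_mem (p : Finset (Finset (Fin n))) :
    ∑ i : Fin n, (if ({i} : Finset (Fin n)) ∈ p then (1 : ℝ) else 0) = (sig p : ℝ) := by
  rw [Finset.sum_boole, sig]
  congr 1
  apply Finset.card_bij (fun i _ => ({i} : Finset (Fin n)))
  · intro i hi
    rw [Finset.mem_filter] at hi ⊢
    exact ⟨hi.2, Finset.card_singleton i⟩
  · intro a _ b _ h
    exact Finset.singleton_injective h
  · intro B hB
    rw [Finset.mem_filter] at hB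
    obtain ⟨i, hi⟩ := Finset.card_eq_one.1 hB.2
    exact ⟨i, Finset.mem_filter.2 ⟨Finset.mem_univ i, hi ▸ hB.1⟩, hi.symm⟩

lemma telescope (T : ℕ → Ω → ℝ) (a : ℕ) :
    ∀ m, a ≤ m → ∑ j ∈ Finset.Icc (a + 1) m, (T (j - 1) ω - T j ω) = T a ω - T m ω := by
  intro m hm
  induction m, hm using Nat.le_induction with
  | base =>
    rw [show Finset.Icc (a + 1) a = ∅ from Finset.Icc_eq_empty (by omega)]
    simp
  | succ m ham ih =>
    rw [← Finset.insert_Icc_right_eq_Icc_add_one (by omega : a + 1 ≤ m + 1), Finset.sum_insert (by simp), ih]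
    simp only [Nat.add_sub_cancel]
    ring

lemma pathwise_identity (hn : 2 ≤ n) (T : ℕ → Ω → ℝ)
    (hgood : ∀ k, 1 ≤ k → k ≤ n → good n k (P k ω))
    (hmerge : ∀ k, 2 ≤ k → k ≤ n → ∃ q1 q2, q1 ∈ P k ω ∧ q2 ∈ P k ω ∧ q1 ≠ q2
      ∧ P (k - 1) ω = mrg (P k ω) q1 q2)
    (hpn : P n ω = pi0 n) (hTn : T n ω = 0) :
    ∑ i : Fin n, T (rho n P i ω) ω
      = ∑ j ∈ Finset.Icc 2 n, (T (j - 1) ω - T j ω) * (sig (P j ω) : ℝ) := by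
  have hper : ∀ i : Fin n, T (rho n P i ω) ω
      = ∑ j ∈ Finset.Icc 2 n, (T (j - 1) ω - T j ω)
        * (if ({i} : Finset (Fin n)) ∈ P j ω then (1 : ℝ) else 0) := by
    intro i
    set S := {k | 1 ≤ k ∧ k ≤ n ∧ ({i} : Finset (Fin n)) ∉ P k ω} with hS
    have h1S : 1 ∈ S := ⟨le_rfl, by omega, not_mem_P1 hn hgood i⟩
    have hbdd : BddAbove S := ⟨n, fun x hx => hx.2.1⟩
    have hrho : rho n P i ω = sSup S := rfl
    rw [hrho]
    have hrS : sSup S ∈ S := Nat.sSup_mem ⟨1, h1S⟩ hbdd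
    have hr1 : 1 ≤ sSup S := hrS.1
    have hrn : sSup S ≤ n := hrS.2.1
    have hin : ({i} : Finset (Fin n)) ∈ P n ω := by
      rw [hpn, pi0, Finset.mem_image]
      exact ⟨i, Finset.mem_univ i, rfl⟩
    have hrltn : sSup S < n := lt_of_le_of_ne hrn (fun h => hrS.2.2 (by rw [h]; exact hin))
    have hmem_iff : ∀ j, 2 ≤ j → j ≤ n → (({i} : Finset (Fin n)) ∈ P j ω ↔ sSup S < j) := by
      intro j h2 hjn
      constructor
      · intro hmem
        by_contra hle
        push_neg at hle
        exact hrS.2.2 (singleton_mono hgood hmerge (by omega) hle hrn hmem)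
      · intro hlt
        by_contra hnot
        have : j ∈ S := ⟨by omega, hjn, hnot⟩
        exact absurd (le_csSup hbdd this) (by omega)
    have hsub : Finset.Icc (sSup S + 1) n ⊆ Finset.Icc 2 n := by
      intro j hj
      rw [Finset.mem_Icc] at hj ⊢
      omega
    rw [show T (sSup S) ω = T (sSup S) ω - T n ω by rw [hTn]; ring,
      ← telescope T (sSup S) n hrn]
    rw [← Finset.sum_subset hsub]
    · refine Finset.sum_congr rfl fun j hj => ?_
      rw [Finset.mem_Icc] at hj
      rw [if_pos ((hmem_iff j (by omega) hj.2).2 (by omega)), mul_one]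
    · intro j hj hnot
      rw [Finset.mem_Icc] at hj
      rw [Finset.mem_Icc] at hnot
      rw [if_neg, mul_zero]
      rw [hmem_iff j hj.1 hj.2]
      omega
  rw [Finset.sum_congr rfl (fun i _ => hper i), Finset.sum_comm]
  refine Finset.sum_congr rfl fun j _ => ?_
  rw [← Finset.mul_sum, sum_ite_singleton_mem]

end Pathwise

section Final
open scoped ENNReal

variable {Ω : Type*} [MeasurableSpace Ω] {n : ℕ} {P : ℕ → Ω → Finset (Finset (Fin n))}
  {μ : Measure Ω} [IsProbabilityMeasure μ]

lemma exists_witness {k : ℕ} {p p' : Finset (Finset (Fin n))} (h : mergeProb n k p p' ≠ 0) :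
    ∃ q1 q2, q1 ∈ p ∧ q2 ∈ p ∧ q1 ≠ q2 ∧ p' = mrg p q1 q2 := by
  rw [mergeProb] at h
  have hcard : Nat.card {q : Finset (Fin n) × Finset (Fin n) //
      q.1 ∈ p ∧ q.2 ∈ p ∧ q.1 ≠ q.2 ∧
      p' = insert (q.1 ∪ q.2) ((p.erase q.1).erase q.2)} ≠ 0 := by
    intro h0
    rw [h0] at h
    simp at h
  obtain ⟨⟨q, h1, h2, h3, h4⟩⟩ := Nat.card_ne_zero.1 hcard |>.1
  exact ⟨q.1, q.2, h1, h2, h3, h4⟩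

lemma measurable_P (hP1 : ∀ k p, MeasurableSet {ω | P k ω = p}) (j : ℕ) :
    Measurable (fun ω => P j ω) := by
  intro s _
  have : (fun ω => P j ω) ⁻¹' s = ⋃ p ∈ s, {ω | P j ω = p} := by
    ext ω; simp
  rw [this]
  exact MeasurableSet.biUnion (Set.to_countable s) (fun p _ => hP1 j p)

lemma good_ae (hn : 2 ≤ n) (hP : IsKingmanPartition n μ P) :
    ∀ᵐ ω ∂μ, ∀ k, 1 ≤ k → k ≤ n → good n k (P k ω) := by
  rw [ae_all_iff]
  intro k
  by_cases hk : 1 ≤ k ∧ k ≤ n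
  · have hnull : μ {ω | ¬ good n k (P k ω)} = 0 := by
      refine measure_mono_null (t := ⋃ p ∈ {p : Finset (Finset (Fin n)) | ¬ good n k p},
        {ω | P k ω = p}) ?_ ?_
      · intro ω hω
        simp only [Set.mem_iUnion, Set.mem_setOf_eq]
        exact ⟨P k ω, hω, rfl⟩
      · exact (measure_biUnion_null_iff (Set.to_countable _)).2
          (fun p hp => good_as' hn hP k hk.1 hk.2 p hp)
    filter_upwards [measure_eq_zero_iff_ae_notMem.1 hnull] with ω hω
    intro _ _
    by_contra hbad
    exact hω hbad
  · exact Filter.Eventually.of_forall (fun ω h1 h2 => absurd ⟨h1, h2⟩ hk)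

lemma merge_ae (hn : 2 ≤ n) (hP : IsKingmanPartition n μ P) :
    ∀ᵐ ω ∂μ, ∀ k, 2 ≤ k → k ≤ n → ∃ q1 q2, q1 ∈ P k ω ∧ q2 ∈ P k ω ∧ q1 ≠ q2
      ∧ P (k - 1) ω = mrg (P k ω) q1 q2 := by
  have key : ∀ (k : ℕ) (t : Fin (n + 1) → Finset (Finset (Fin n)))
      (p' : Finset (Finset (Fin n))), ∀ᵐ ω ∂μ, 2 ≤ k → k ≤ n →
        mergeProb n k (extt t k) p' = 0 →
        ω ∉ cyl P k t ∩ {ω | P (k - 1) ω = p'} := by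
    intro k t p'
    by_cases hc : 2 ≤ k ∧ k ≤ n ∧ mergeProb n k (extt t k) p' = 0
    · obtain ⟨h2, h3, h4⟩ := hc
      have hμ : μ (cyl P k t ∩ {ω | P (k - 1) ω = p'}) = 0 := by
        have := markov_step hP h2 h3 t p'
        rw [h4, mul_zero] at this
        exact ((ENNReal.toReal_eq_zero_iff _).1 this).resolve_right (measure_ne_top μ _)
      filter_upwards [measure_eq_zero_iff_ae_notMem.1 hμ] with ω hω
      intro _ _ _
      exact hω
    · exact Filter.Eventually.of_forall (fun ω ha hb hd => absurd ⟨ha, hb, hd⟩ hc)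
  have key2 : ∀ᵐ ω ∂μ, ∀ (k : ℕ) (t : Fin (n + 1) → Finset (Finset (Fin n)))
      (p' : Finset (Finset (Fin n))), 2 ≤ k → k ≤ n →
        mergeProb n k (extt t k) p' = 0 →
        ω ∉ cyl P k t ∩ {ω | P (k - 1) ω = p'} := by
    rw [ae_all_iff]
    intro k
    rw [ae_all_iff]
    intro t
    rw [ae_all_iff]
    intro p'
    exact key k t p'
  filter_upwards [key2] with ω hω
  intro k h2 h3
  have hmem : ω ∈ cyl P k (canon P k ω) ∩ {ω' | P (k - 1) ω' = P (k - 1) ω} :=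
    ⟨mem_cyl_canon k ω, rfl⟩
  have hne : mergeProb n k (extt (canon P k ω) k) (P (k - 1) ω) ≠ 0 := by
    intro h0
    exact hω k (canon P k ω) (P (k - 1) ω) h2 h3 h0 hmem
  rw [extt_canon le_rfl h3] at hne
  exact exists_witness hne

end Final


/-- In Kingman's `n`-coalescent (times independent of the merging partitions), the total
external branch length `L_n = Σ_i T_{ρ(i)}` has expectation `2` for every `n ≥ 2`. -/
theorem external_length_expectation {Ω : Type*} [MeasurableSpace Ω] (μ : Measure Ω)
    [IsProbabilityMeasure μ] (n : ℕ) (hn : 2 ≤ n)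
    (P : ℕ → Ω → Finset (Finset (Fin n))) (hP : IsKingmanPartition n μ P)
    (T : ℕ → Ω → ℝ) (hT : IsKingmanTimes n μ T)
    (hInd : IndepFun (fun ω (k : ℕ) => T k ω) (fun ω (k : ℕ) => P k ω) μ) :
    ∫ ω, (∑ i : Fin n, T (rho n P i ω) ω) ∂μ = 2 := by

  have hn1 : (n : ℝ) - 1 ≠ 0 := by
    have : (2 : ℝ) ≤ (n : ℝ) := by exact_mod_cast hn
    nlinarith
  -- almost-sure pathwise identity
  have hident : ∀ᵐ ω ∂μ, ∑ i : Fin n, T (rho n P i ω) ω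
      = ∑ j ∈ Finset.Icc 2 n, (T (j - 1) ω - T j ω) * (sig (P j ω) : ℝ) := by
    filter_upwards [good_ae hn hP, merge_ae hn hP, hP.2.1, hT.2.1] with ω hg hm hpn hTn
    exact pathwise_identity hn T hg hm hpn hTn
  rw [integral_congr_ae hident]
  -- per-level facts
  have hperj : ∀ j ∈ Finset.Icc 2 n,
      Integrable (fun ω => (T (j - 1) ω - T j ω) * (sig (P j ω) : ℝ)) μ ∧
      ∫ ω, (T (j - 1) ω - T j ω) * (sig (P j ω) : ℝ) ∂μ = 2 / ((n : ℝ) - 1) := by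
    intro j hj
    rw [Finset.mem_Icc] at hj
    obtain ⟨h2, h3⟩ := hj
    set c : ℝ := ((j.choose 2 : ℕ) : ℝ) with hc
    have hc0 : c ≠ 0 := by
      rw [hc]
      exact_mod_cast (Nat.choose_pos (by omega : 2 ≤ j)).ne'
    have h2c : c * 2 = (j : ℝ) * ((j : ℝ) - 1) := by
      have hd : 2 ∣ j * (j - 1) := by
        have he := Nat.even_mul_succ_self (j - 1)
        rw [show j - 1 + 1 = j from by omega] at he
        rw [mul_comm]
        exact he.two_dvd
      have hnat : j.choose 2 * 2 = j * (j - 1) := by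
        rw [Nat.choose_two_right]
        exact Nat.div_mul_cancel hd
      have hcast := congrArg (fun m : ℕ => (m : ℝ)) hnat
      simp only [Nat.cast_mul, Nat.cast_ofNat] at hcast
      rw [Nat.cast_sub (by omega : 1 ≤ j), Nat.cast_one] at hcast
      exact hcast
    -- map to exponential
    have hfin : μ.map (fun ω => c * (T (j - 1) ω - T j ω)) = expMeasure 1 := by
      have hmap := hT.2.2.2 ⟨j - 2, by omega⟩
      have e1 : ((⟨j - 2, by omega⟩ : Fin (n - 1)) : ℕ) = j - 2 := rfl
      rw [show ((⟨j - 2, by omega⟩ : Fin (n - 1)) : ℕ) + 2 = j from by rw [e1]; omega,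
        show ((⟨j - 2, by omega⟩ : Fin (n - 1)) : ℕ) + 1 = j - 1 from by rw [e1]; omega] at hmap
      exact hmap
    have hmeasD : Measurable (fun ω => T (j - 1) ω - T j ω) := (hT.1 _).sub (hT.1 _)
    have hmeascD : Measurable (fun ω => c * (T (j - 1) ω - T j ω)) := hmeasD.const_mul c
    have hintcD : Integrable (fun ω => c * (T (j - 1) ω - T j ω)) μ := by
      have h := integrable_exp_mean
      rw [← hfin] at h
      exact (integrable_map_measure (f := fun ω => c * (T (j - 1) ω - T j ω))
        (g := fun x : ℝ => x) (by exact aestronglyMeasurable_id)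
        hmeascD.aemeasurable).1 h
    have hEcD : ∫ ω, c * (T (j - 1) ω - T j ω) ∂μ = 1 := by
      have h2 := integral_map (μ := μ) (φ := fun ω => c * (T (j - 1) ω - T j ω))
        hmeascD.aemeasurable (f := fun x : ℝ => x) (by exact aestronglyMeasurable_id)
      rw [hfin, exp_mean_one] at h2
      exact h2.symm
    have hintD : Integrable (fun ω => T (j - 1) ω - T j ω) μ := by
      have h := hintcD.const_mul c⁻¹
      have : (fun ω => c⁻¹ * (c * (T (j - 1) ω - T j ω))) = fun ω => T (j - 1) ω - T j ω := by
        funext ω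
        field_simp
      rwa [this] at h
    have hED : ∫ ω, (T (j - 1) ω - T j ω) ∂μ = 1 / c := by
      rw [integral_const_mul] at hEcD
      field_simp at hEcD ⊢
      linarith [hEcD]
    have hYmeas : Measurable (fun ω => (sig (P j ω) : ℝ)) :=
      (measurable_of_finset_top (fun p : Finset (Finset (Fin n)) => (sig p : ℝ))).comp
        (measurable_P hP.1 j)
    have hYint : Integrable (fun ω => (sig (P j ω) : ℝ)) μ := by
      refine Integrable.mono' (integrable_const
        (((Finset.univ : Finset (Finset (Fin n))).card : ℝ)))
        hYmeas.aestronglyMeasurable ?_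
      refine Filter.Eventually.of_forall fun ω => ?_
      rw [Real.norm_eq_abs, abs_of_nonneg (by positivity)]
      have hb : sig (P j ω) ≤ (Finset.univ : Finset (Finset (Fin n))).card :=
        le_trans (Finset.card_filter_le _ _) (Finset.card_le_card (Finset.subset_univ _))
      exact_mod_cast hb
    have hIndepj : IndepFun (fun ω => T (j - 1) ω - T j ω) (fun ω => (sig (P j ω) : ℝ)) μ := by
      have hphi : Measurable (fun u : ℕ → ℝ => u (j - 1) - u j) :=
        (measurable_pi_apply (j - 1)).sub (measurable_pi_apply j)
      have hpsi : Measurable (fun v : ℕ → Finset (Finset (Fin n)) => (sig (v j) : ℝ)) := by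
        exact (measurable_of_finset_top (fun p : Finset (Finset (Fin n)) => (sig p : ℝ))).comp
          (measurable_pi_apply j)
      exact hInd.comp hphi hpsi
    constructor
    · have h := hIndepj.integrable_mul hintD hYint
      exact h
    · rw [hIndepj.integral_fun_mul_eq_mul_integral hintD.1 hYint.1, hED, int_sig' hn hP (by omega) h3]
      rw [div_mul_div_comm, one_mul]
      rw [show (j : ℝ) * ((j : ℝ) - 1) = c * 2 from h2c.symm]
      field_simp
  rw [integral_finset_sum _ (fun j hj => (hperj j hj).1)]
  rw [Finset.sum_congr rfl (fun j hj => (hperj j hj).2), Finset.sum_const, Nat.card_Icc,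
    nsmul_eq_mul]
  rw [show ((n + 1 - 2 : ℕ) : ℝ) = (n : ℝ) - 1 from by
    rw [show n + 1 - 2 = n - 1 from by omega, Nat.cast_sub (by omega), Nat.cast_one]]
  field_simp
end
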